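/- arXiv:1812.04211 — 14 statements merged into one kernel-verified Lean document; each statement's English description precedes it below -/
import Mathlib

section
/- Let S be a nonempty subset of ℝ^d that is closed under addition (a subsemigroup) and has nonempty interior. Then every additive function F : S → ℝ with nonnegative values is linear: there exists a vector a ∈ ℝ^d such that F(x) = a · x (the Euclidean inner product) for all x ∈ S. -/
set_option maxHeartbeats 1600000 in
/-- Let `S` be a nonempty subset of `ℝ^d` closed under addition
(a subsemigroup) with nonempty interior. Then every additive function `F : S → ℝ`
with nonnegative values is linear: there is a vector `a` with `F x = a ⬝ x` on `S`. -/
theorem stmt0 (d : ℕ) (S : Set (Fin d → ℝ)) (hne : S.Nonempty)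
    (hadd : ∀ x ∈ S, ∀ y ∈ S, x + y ∈ S)
    (hint : (interior S).Nonempty)
    (F : (Fin d → ℝ) → ℝ)
    (hF0 : ∀ x ∈ S, 0 ≤ F x)
    (hFadd : ∀ x ∈ S, ∀ y ∈ S, F (x + y) = F x + F y) :
    ∃ a : Fin d → ℝ, ∀ x ∈ S, F x = ∑ i, a i * x i := by
  classical
  obtain ⟨c, hc⟩ := hint
  obtain ⟨r, hr, hball⟩ := Metric.isOpen_iff.1 isOpen_interior c hc
  have hballS : ∀ v : Fin d → ℝ, ‖v‖ < r → c + v ∈ S := by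
    intro v hv
    apply interior_subset (hball _)
    rw [Metric.mem_ball, dist_eq_norm]
    simpa using hv
  have hcS : c ∈ S := by simpa using hballS 0 (by simpa using hr)
  -- F is homogeneous under natural scalings
  have H1 : ∀ n : ℕ, ∀ x ∈ S, ((n : ℝ) + 1) • x ∈ S ∧
      F (((n : ℝ) + 1) • x) = ((n : ℝ) + 1) * F x := by
    intro n
    induction n with
    | zero => intro x hx; simp [hx]
    | succ n ih =>
      intro x hx
      obtain ⟨hm, hf⟩ := ih x hx
      have h : (((n + 1 : ℕ) : ℝ) + 1) • x = ((n : ℝ) + 1) • x + x := by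
        push_cast; rw [add_smul, one_smul]
      refine ⟨?_, ?_⟩
      · rw [h]; exact hadd _ hm _ hx
      · rw [h, hFadd _ hm _ hx, hf]; push_cast; ring
  -- the local function g
  set g : (Fin d → ℝ) → ℝ := fun v => F (c + v) - F c with hg
  have hg0 : g 0 = 0 := by simp [hg]
  have hgadd : ∀ v w : Fin d → ℝ, c + v ∈ S → c + w ∈ S → c + (v + w) ∈ S →
      g (v + w) = g v + g w := by
    intro v w hv hw hvw
    have h1 : F ((c + v) + (c + w)) = F (c + v) + F (c + w) := hFadd _ hv _ hw
    have h2 : F (c + (c + (v + w))) = F c + F (c + (v + w)) := hFadd _ hcS _ hvw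
    have h3 : (c + v) + (c + w) = c + (c + (v + w)) := by abel
    rw [h3, h2] at h1
    simp only [hg]
    linarith
  have hgbound : ∀ v : Fin d → ℝ, ‖v‖ < r → |g v| ≤ F c := by
    intro v hv
    have hv' : c + v ∈ S := hballS v hv
    have hnv : c + (-v) ∈ S := hballS (-v) (by simpa using hv)
    have hsum : g (v + -v) = g v + g (-v) := by
      apply hgadd v (-v) hv' hnv
      simpa using hcS
    rw [add_neg_cancel, hg0] at hsum
    have h1 : 0 ≤ F (c + v) := hF0 _ hv'
    have h2 : 0 ≤ F (c + -v) := hF0 _ hnv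
    have : g v = -(g (-v)) := by linarith
    rw [abs_le]
    constructor
    · simp only [hg]; linarith
    · have : g (-v) = F (c + -v) - F c := rfl
      simp only [hg] at *
      linarith
  -- homogeneity of g on the ball
  have H5 : ∀ n : ℕ, ∀ v : Fin d → ℝ, ((n : ℝ) + 1) * ‖v‖ < r →
      g (((n : ℝ) + 1) • v) = ((n : ℝ) + 1) * g v := by
    intro n
    induction n with
    | zero => intro v hv; simp
    | succ n ih =>
      intro v hv
      push_cast at hv
      have hnn : (0:ℝ) ≤ ‖v‖ := norm_nonneg v
      have hn0 : (0:ℝ) ≤ (n : ℝ) := Nat.cast_nonneg n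
      have hv1 : ‖v‖ < r := by nlinarith
      have hvrec : ((n : ℝ) + 1) * ‖v‖ < r := by nlinarith
      have hvn : ‖((n : ℝ) + 1) • v‖ < r := by
        rw [norm_smul, Real.norm_eq_abs, abs_of_pos (by positivity)]
        nlinarith
      have hvn1 : ‖(((n+1 : ℕ) : ℝ) + 1) • v‖ < r := by
        rw [norm_smul, Real.norm_eq_abs, abs_of_pos (by positivity : (0:ℝ) < ((n+1:ℕ):ℝ) + 1)]
        push_cast; nlinarith
      have hsplit : (((n+1 : ℕ) : ℝ) + 1) • v = ((n : ℝ) + 1) • v + v := by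
        push_cast; rw [add_smul, one_smul]
      rw [hsplit, hgadd _ _ (hballS _ hvn) (hballS _ hv1) ?_, ih v hvrec]
      · push_cast; ring
      · rw [← hsplit]; exact hballS _ hvn1
  -- convenient reformulation: for positive n
  have H5' : ∀ n : ℕ, 1 ≤ n → ∀ v : Fin d → ℝ, (n : ℝ) * ‖v‖ < r →
      g ((n : ℝ) • v) = (n : ℝ) * g v := by
    intro n hn v hv
    obtain ⟨m, rfl⟩ := Nat.exists_eq_add_of_le hn
    have hc1 : ((1+m : ℕ) : ℝ) = (m : ℝ) + 1 := by push_cast; ring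
    rw [hc1] at hv ⊢
    exact H5 m v hv
  -- well-definedness of the extension
  have H6 : ∀ m n : ℕ, 1 ≤ m → 1 ≤ n → ∀ x : Fin d → ℝ,
      ‖x‖ < m * r → ‖x‖ < n * r →
      (m : ℝ) * g ((m : ℝ)⁻¹ • x) = (n : ℝ) * g ((n : ℝ)⁻¹ • x) := by
    intro m n hm hn x hxm hxn
    have hm0 : (0:ℝ) < m := by exact_mod_cast hm
    have hn0 : (0:ℝ) < n := by exact_mod_cast hn
    have key : ∀ p q : ℕ, 1 ≤ p → 1 ≤ q → ‖x‖ < p * r →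
        g ((p : ℝ)⁻¹ • x) = (q : ℝ) * g (((p*q : ℕ) : ℝ)⁻¹ • x) := by
      intro p q hp hq hxp
      have hp0 : (0:ℝ) < p := by exact_mod_cast hp
      have hq0 : (0:ℝ) < q := by exact_mod_cast hq
      have h1 : (p : ℝ)⁻¹ • x = (q : ℝ) • (((p*q : ℕ) : ℝ)⁻¹ • x) := by
        rw [smul_smul]; push_cast
        congr 1
        field_simp
      have hpq0 : (0:ℝ) < ((p*q : ℕ) : ℝ) := by positivity
      rw [h1]
      apply H5' q hq
      rw [norm_smul, Real.norm_eq_abs, abs_of_pos (inv_pos.mpr hpq0)]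
      have heq : (q : ℝ) * (((p*q : ℕ) : ℝ)⁻¹ * ‖x‖) = ‖x‖ / p := by
        push_cast
        field_simp
      rw [heq, div_lt_iff₀ hp0]
      linarith
    have e1 := key m n hm hn hxm
    have e2 := key n m hn hm hxn
    rw [e1, e2, mul_comm n m]
    ring
  -- the extension L
  set N : (Fin d → ℝ) → ℕ := fun x => ⌈‖x‖ / r⌉₊ + 1 with hN
  have hNspec : ∀ x : Fin d → ℝ, ‖x‖ < (N x : ℝ) * r := by
    intro x
    have h1 : ‖x‖ / r ≤ ⌈‖x‖ / r⌉₊ := Nat.le_ceil _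
    have : ‖x‖ ≤ (⌈‖x‖ / r⌉₊ : ℝ) * r := by
      rw [← div_le_iff₀ hr] at *; exact h1
    have : ((⌈‖x‖ / r⌉₊ : ℝ)) * r < (N x : ℝ) * r := by
      apply mul_lt_mul_of_pos_right _ hr
      simp [hN]
    linarith
  have hN1 : ∀ x : Fin d → ℝ, 1 ≤ N x := fun x => by simp [hN]
  set L : (Fin d → ℝ) → ℝ := fun x => (N x : ℝ) * g ((N x : ℝ)⁻¹ • x) with hL
  have hLspec : ∀ n : ℕ, 1 ≤ n → ∀ x : Fin d → ℝ, ‖x‖ < n * r →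
      L x = (n : ℝ) * g ((n : ℝ)⁻¹ • x) :=
    fun n hn x hx => H6 (N x) n (hN1 x) hn x (hNspec x) hx
  have hLadd : ∀ x y : Fin d → ℝ, L (x + y) = L x + L y := by
    intro x y
    set n : ℕ := N x + N y with hn
    have hn1 : 1 ≤ n := le_trans (hN1 x) (Nat.le_add_right _ _)
    have hxr : ‖x‖ < n * r := lt_of_lt_of_le (hNspec x) (by
      apply mul_le_mul_of_nonneg_right _ hr.le
      exact_mod_cast Nat.le_add_right _ _)
    have hyr : ‖y‖ < n * r := lt_of_lt_of_le (hNspec y) (by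
      apply mul_le_mul_of_nonneg_right _ hr.le
      exact_mod_cast Nat.le_add_left _ _)
    have hxyr : ‖x + y‖ < n * r := by
      calc ‖x + y‖ ≤ ‖x‖ + ‖y‖ := norm_add_le x y
        _ < (N x : ℝ) * r + (N y : ℝ) * r := by have := hNspec x; have := hNspec y; linarith
        _ = n * r := by push_cast [hn]; ring
    have hn0 : (0:ℝ) < n := by exact_mod_cast hn1
    have hxs : ‖(n : ℝ)⁻¹ • x‖ < r := by
      rw [norm_smul, Real.norm_eq_abs, abs_of_pos (inv_pos.mpr hn0), inv_mul_lt_iff₀ hn0]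
      linarith
    have hys : ‖(n : ℝ)⁻¹ • y‖ < r := by
      rw [norm_smul, Real.norm_eq_abs, abs_of_pos (inv_pos.mpr hn0), inv_mul_lt_iff₀ hn0]
      linarith
    have hxys : ‖(n : ℝ)⁻¹ • (x + y)‖ < r := by
      rw [norm_smul, Real.norm_eq_abs, abs_of_pos (inv_pos.mpr hn0), inv_mul_lt_iff₀ hn0]
      linarith
    rw [hLspec n hn1 x hxr, hLspec n hn1 y hyr, hLspec n hn1 (x+y) hxyr]
    have hsplit : (n : ℝ)⁻¹ • (x + y) = (n : ℝ)⁻¹ • x + (n : ℝ)⁻¹ • y := smul_add _ _ _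
    rw [hsplit, hgadd _ _ (hballS _ hxs) (hballS _ hys) (by rw [← hsplit]; exact hballS _ hxys)]
    ring
  have hLball : ∀ v : Fin d → ℝ, ‖v‖ < r → L v = g v := by
    intro v hv
    rw [hLspec 1 le_rfl v (by simpa using hv)]
    simp
  -- L as additive monoid hom
  set φ : (Fin d → ℝ) →+ ℝ := AddMonoidHom.mk' L hLadd with hφ
  have hφcont : Continuous φ := by
    apply continuous_of_continuousAt_zero φ
    have hφ0 : φ 0 = 0 := map_zero φ
    rw [ContinuousAt, hφ0, NormedAddCommGroup.tendsto_nhds_zero]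
    intro ε hε
    obtain ⟨n, hn⟩ := exists_nat_gt (F c / ε)
    have hn1 : 1 ≤ n + 1 := Nat.le_add_left 1 n
    have hn0 : (0:ℝ) < (n:ℝ) + 1 := by positivity
    rw [Metric.eventually_nhds_iff]
    refine ⟨r / ((n:ℝ)+1), by positivity, ?_⟩
    intro w hw
    rw [dist_zero_right] at hw
    have hwsm : ‖((n+1 : ℕ) : ℝ) • w‖ < r := by
      rw [norm_smul, Real.norm_eq_abs,
        abs_of_pos (by push_cast; positivity : (0:ℝ) < ((n+1:ℕ):ℝ))]
      push_cast
      rw [← lt_div_iff₀' hn0]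
      exact hw
    have hsmul : φ (((n+1:ℕ)) • w) = ((n+1:ℕ) : ℝ) * φ w := by
      rw [map_nsmul]; push_cast; rw [nsmul_eq_mul]; push_cast; ring
    have hwr : ‖w‖ < r := by
      have : r / ((n:ℝ)+1) ≤ r := by
        rw [div_le_iff₀ hn0]; nlinarith [Nat.cast_nonneg (α := ℝ) n]
      linarith
    have hnatsmul : ((n+1:ℕ)) • w = ((n+1:ℕ) : ℝ) • w := by
      rw [Nat.cast_smul_eq_nsmul]
    have hgb : |g (((n+1:ℕ):ℝ) • w)| ≤ F c := hgbound _ hwsm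
    have hφw : φ w = L w := rfl
    have hφsw : φ (((n+1:ℕ)) • w) = L (((n+1:ℕ):ℝ) • w) := by rw [hnatsmul]; rfl
    have hLsw : L (((n+1:ℕ):ℝ) • w) = g (((n+1:ℕ):ℝ) • w) := hLball _ hwsm
    have heq : ((n+1:ℕ) : ℝ) * L w = g (((n+1:ℕ):ℝ) • w) := by
      rw [← hLsw, ← hφsw, hsmul]; rfl
    have hbound : |L w| ≤ F c / ((n:ℝ)+1) := by
      have h1 : |((n+1:ℕ) : ℝ) * L w| ≤ F c := heq ▸ hgb
      rw [abs_mul, abs_of_pos (by push_cast; positivity)] at h1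
      rw [le_div_iff₀ hn0]
      push_cast at h1 ⊢
      linarith
    have hfc : 0 ≤ F c := by
      have := hF0 c hcS; linarith
    have : F c / ((n:ℝ)+1) < ε := by
      rw [div_lt_iff₀ hn0]
      rw [div_lt_iff₀ hε] at hn
      nlinarith
    rw [Real.norm_eq_abs, hφw]
    exact lt_of_le_of_lt hbound this
  -- L is linear
  set Λ : (Fin d → ℝ) →L[ℝ] ℝ := φ.toRealLinearMap hφcont with hΛ
  have hΛL : ∀ x, Λ x = L x := fun x => congrFun (φ.coe_toRealLinearMap hφcont) x
  refine ⟨fun i => Λ (fun j => if i = j then (1:ℝ) else 0), ?_⟩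
  intro x hx
  -- F x = L x on S
  have hFL : F x = L x := by
    set n : ℕ := N x with hn
    have hn1 : 1 ≤ n := hN1 x
    have hn0 : (0:ℝ) < n := by exact_mod_cast hn1
    have hxr : ‖x‖ < n * r := hNspec x
    have hxs : ‖(n : ℝ)⁻¹ • x‖ < r := by
      rw [norm_smul, Real.norm_eq_abs, abs_of_pos (inv_pos.mpr hn0), inv_mul_lt_iff₀ hn0]
      linarith
    have hyS : c + (n : ℝ)⁻¹ • x ∈ S := hballS _ hxs
    obtain ⟨m, hm⟩ := Nat.exists_eq_add_of_le hn1
    have hcast : ((m : ℝ) + 1) = (n : ℝ) := by rw [hm]; push_cast; ring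
    obtain ⟨hyS', hFy⟩ := H1 m _ hyS
    rw [hcast] at hyS' hFy
    obtain ⟨hcS', hFc'⟩ := H1 m c hcS
    rw [hcast] at hcS' hFc'
    have hsplit : (n : ℝ) • (c + (n : ℝ)⁻¹ • x) = (n : ℝ) • c + x := by
      rw [smul_add, smul_smul, mul_inv_cancel₀ (ne_of_gt hn0), one_smul]
    have h1 : F ((n : ℝ) • c + x) = (n : ℝ) * F c + F x := by
      rw [hFadd _ hcS' _ hx, hFc']
    have h2 : F ((n : ℝ) • c + x) = (n : ℝ) * F c + (n : ℝ) * g ((n : ℝ)⁻¹ • x) := by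
      rw [← hsplit, hFy]
      have : F (c + (n : ℝ)⁻¹ • x) = F c + g ((n : ℝ)⁻¹ • x) := by simp [hg]
      rw [this]; ring
    rw [hLspec n hn1 x hxr]
    linarith
  rw [hFL, ← hΛL]
  have hxsum : x = ∑ i, x i • fun j => if i = j then (1:ℝ) else 0 := pi_eq_sum_univ x
  conv_lhs => rw [hxsum]
  rw [map_sum]
  refine Finset.sum_congr rfl fun i _ => ?_
  rw [map_smul]
  simp [mul_comm]
end

section
/- Let S be a subsemigroup of ℝ^d with nonempty interior. Then there exist a point x₀ ∈ ℝ^d and a radius r > 0 such that, denoting by B the open ball of center x₀ and radius r, the dilation aB = {a·x : x ∈ B} is contained in S for every real number a ≥ 1. -/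
open scoped Pointwise

open Metric in
/-- Let `S` be a subsemigroup of `ℝ^d` with nonempty interior. Then
there exist a center `x₀` and a radius `r > 0` such that the dilation `a • B` of the
open ball `B = ball x₀ r` is contained in `S` for every real `a ≥ 1`. -/
theorem stmt1 (d : ℕ) (S : Set (EuclideanSpace ℝ (Fin d)))
    (hadd : ∀ x ∈ S, ∀ y ∈ S, x + y ∈ S)
    (hint : (interior S).Nonempty) :
    ∃ (x₀ : EuclideanSpace ℝ (Fin d)) (r : ℝ), 0 < r ∧
      ∀ a : ℝ, 1 ≤ a → a • Metric.ball x₀ r ⊆ S := by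
  obtain ⟨p, hp⟩ := hint
  obtain ⟨r, hr, hball⟩ := Metric.isOpen_iff.1 isOpen_interior p hp
  replace hball : ball p r ⊆ S := hball.trans interior_subset
  -- multiples of the ball are in S
  have hmul : ∀ m : ℕ, ball ((m + 1 : ℝ) • p) ((m + 1) * r) ⊆ S := by
    intro m
    induction m with
    | zero => simpa using hball
    | succ k ih =>
      have key : ball ((k + 1 : ℝ) • p) ((k + 1) * r) + ball p r
          = ball ((k + 1 + 1 : ℝ) • p) ((k + 1 + 1) * r) := by
        rw [ball_add_ball (by positivity) hr]
        have h1 : ((k:ℝ) + 1 + 1) • p = (k:ℝ) • p + p + p := by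
          rw [add_smul, add_smul, one_smul]
        rw [h1, add_smul, one_smul]
        ring_nf
      push_cast
      rw [← key]
      rintro x ⟨y, hy, z, hz, rfl⟩
      exact hadd y (ih hy) z (hball hz)
  set N : ℝ := ‖p‖ / r + 1 with hN
  have hN1 : 1 ≤ N := le_add_of_nonneg_left (by positivity)
  refine ⟨N • p, r, hr, fun a ha => ?_⟩
  have ha0 : (0:ℝ) < a := lt_of_lt_of_le one_pos ha
  rw [_root_.smul_ball (ne_of_gt ha0), Real.norm_of_nonneg ha0.le]
  set m : ℕ := ⌈a * N⌉₊ with hm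
  have hm1 : 1 ≤ m := Nat.one_le_ceil_iff.2 (by nlinarith)
  obtain ⟨k, hk⟩ := Nat.exists_eq_add_of_le hm1
  have hmge : a * N ≤ (m : ℝ) := Nat.le_ceil _
  have hmlt : (m : ℝ) ≤ a * N + 1 := by
    have := Nat.ceil_lt_add_one (show (0:ℝ) ≤ a * N by positivity)
    linarith
  refine subset_trans ?_ (hmul k)
  have hkm : ((k : ℝ) + 1) = (m : ℝ) := by
    rw [hk]; push_cast; ring
  rw [hkm]
  intro y hy
  rw [mem_ball] at hy ⊢
  have h1 : dist y ((m : ℝ) • p) ≤ dist y (a • (N • p)) + dist (a • (N • p)) ((m:ℝ) • p) :=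
    dist_triangle _ _ _
  have h2 : dist (a • (N • p)) ((m:ℝ) • p) = |a * N - m| * ‖p‖ := by
    rw [dist_eq_norm, smul_smul, ← sub_smul, norm_smul, Real.norm_eq_abs]
  have h3 : |a * N - (m:ℝ)| ≤ 1 := by
    rw [abs_le]; constructor <;> linarith
  have h4 : ‖p‖ = (N - 1) * r := by
    rw [hN, add_sub_cancel_right, div_mul_cancel₀]; exact ne_of_gt hr
  have h5 : a * r + ‖p‖ ≤ (m : ℝ) * r := by
    have hpn : (0:ℝ) ≤ ‖p‖ := norm_nonneg p
    nlinarith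
  have h6 : |a * N - (m:ℝ)| * ‖p‖ ≤ ‖p‖ := by
    nlinarith [norm_nonneg p]
  linarith
end

section
/- Let S be a subsemigroup of ℝ^d with nonempty interior, and let F : S → ℝ be additive, take nonnegative values, and satisfy F(a·y) = a·F(y) for every y ∈ S and every real a ≥ 0 such that a·y ∈ S. Then F is linear: there exists a ∈ ℝ^d such that F(x) = a · x for all x ∈ S. -/
set_option maxHeartbeats 1000000 in
/-- A function additive on `[-1,1]` (locally) and bounded there is linear on `[-1,1]`. -/
lemma locAdd_homog (g : ℝ → ℝ) (M : ℝ)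
    (hadd : ∀ s t : ℝ, |s| ≤ 1 → |t| ≤ 1 → |s + t| ≤ 1 → g (s + t) = g s + g t)
    (hbd : ∀ t : ℝ, |t| ≤ 1 → |g t| ≤ M) :
    ∀ t : ℝ, |t| ≤ 1 → g t = t * g 1 := by
  have g0 : g 0 = 0 := by
    have := hadd 0 0 (by norm_num) (by norm_num) (by norm_num)
    simp at this; linarith
  have hmul : ∀ (k : ℕ) (s : ℝ), 0 ≤ s → (k : ℝ) * s ≤ 1 → g ((k : ℝ) * s) = k * g s := by
    intro k
    induction k with
    | zero => intro s _ _; simp [g0]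
    | succ n ih =>
      intro s hs h1
      have hns : (n : ℝ) * s ≤ 1 := by
        have : (n : ℝ) * s ≤ (n + 1 : ℝ) * s := by nlinarith
        push_cast at h1 ⊢; linarith
      have hs1 : s ≤ 1 := by
        have : (1 : ℝ) * s ≤ (n + 1 : ℝ) * s := by nlinarith
        push_cast at h1; linarith
      have e : ((n + 1 : ℕ) : ℝ) * s = (n : ℝ) * s + s := by push_cast; ring
      rw [e, hadd ((n : ℝ) * s) s (by rw [abs_of_nonneg (by positivity)]; exact hns)
        (by rw [abs_of_nonneg hs]; exact hs1)
        (by rw [← e, abs_of_nonneg (by positivity)]; push_cast at h1 ⊢; exact h1),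
        ih s hs hns]
      push_cast; ring
  have main : ∀ t : ℝ, 0 ≤ t → t ≤ 1 → g t = t * g 1 := by
    intro t ht0 ht1
    have key : ∀ n : ℕ, 1 ≤ n → |g t - t * g 1| ≤ (|g 1| + M) / n := by
      intro n hn
      have hn1 : (1 : ℝ) ≤ (n : ℝ) := by exact_mod_cast hn
      have hn0 : (0 : ℝ) < n := by linarith
      have hq0 : (0 : ℝ) < (n : ℝ) ^ 2 := by positivity
      have hq1 : (1 : ℝ) ≤ (n : ℝ) ^ 2 := by nlinarith
      have hfl0 : (0 : ℤ) ≤ ⌊t * (n : ℝ) ^ 2⌋ := Int.floor_nonneg.2 (by positivity)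
      set p : ℕ := ⌊t * (n : ℝ) ^ 2⌋.toNat with hp
      have hpq : (p : ℝ) = (⌊t * (n : ℝ) ^ 2⌋ : ℝ) := by
        rw [hp]; exact_mod_cast congrArg (Int.cast : ℤ → ℝ) (Int.toNat_of_nonneg hfl0)
      clear_value p
      have hple : (p : ℝ) ≤ t * (n : ℝ) ^ 2 := by rw [hpq]; exact Int.floor_le _
      have hpge : t * (n : ℝ) ^ 2 - 1 ≤ (p : ℝ) := by
        rw [hpq]; linarith [Int.lt_floor_add_one (t * (n : ℝ) ^ 2)]
      set r : ℝ := (p : ℝ) / (n : ℝ) ^ 2 with hr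
      clear_value r
      have hr0 : 0 ≤ r := by rw [hr]; positivity
      have hrt : r ≤ t := by rw [hr, div_le_iff₀ hq0]; exact hple
      have hs0 : 0 ≤ t - r := by linarith
      have hrq : r * (n : ℝ) ^ 2 = (p : ℝ) := by rw [hr]; field_simp
      have hsmall : (t - r) * (n : ℝ) ^ 2 ≤ 1 := by nlinarith
      -- g r = r * g 1
      have h1q : (0 : ℝ) ≤ 1 / (n : ℝ) ^ 2 := by positivity
      have hqq : (n : ℝ) ^ 2 * (1 / (n : ℝ) ^ 2) = 1 := by field_simp
      have hqnat : ((n ^ 2 : ℕ) : ℝ) = (n : ℝ) ^ 2 := by push_cast; ring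
      have e2 : g 1 = (n : ℝ) ^ 2 * g (1 / (n : ℝ) ^ 2) := by
        have h := hmul (n ^ 2) (1 / (n : ℝ) ^ 2) h1q (by rw [hqnat, hqq])
        rw [hqnat, hqq] at h
        linarith
      have hp1 : (p : ℝ) * (1 / (n : ℝ) ^ 2) ≤ 1 := by
        rw [mul_one_div, div_le_one hq0]; nlinarith
      have e1 : g ((p : ℝ) * (1 / (n : ℝ) ^ 2)) = p * g (1 / (n : ℝ) ^ 2) :=
        hmul p (1 / (n : ℝ) ^ 2) h1q hp1
      have hgr : g r = r * g 1 := by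
        calc g r = g ((p : ℝ) * (1 / (n : ℝ) ^ 2)) := by rw [hr, mul_one_div]
          _ = p * g (1 / (n : ℝ) ^ 2) := e1
          _ = r * g 1 := by rw [e2, hr]; field_simp
      -- split
      have hsle : t - r ≤ 1 := by nlinarith
      have hgsplit : g t = g r + g (t - r) := by
        have := hadd r (t - r) (by rw [abs_of_nonneg hr0]; linarith)
          (by rw [abs_of_nonneg hs0]; exact hsle)
          (by rw [show r + (t - r) = t by ring, abs_of_nonneg ht0]; exact ht1)
        rw [show r + (t - r) = t by ring] at this; exact this
      have hns : (n : ℝ) * (t - r) ≤ 1 := by nlinarith [mul_nonneg hs0 hn0.le, hsmall, hn1]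
      have hgs : |g (t - r)| ≤ M / n := by
        have e := hmul n (t - r) hs0 hns
        have hb := hbd ((n : ℝ) * (t - r)) (by rw [abs_of_nonneg (mul_nonneg hn0.le hs0)]; exact hns)
        rw [e, abs_mul, abs_of_nonneg hn0.le] at hb
        rw [le_div_iff₀ hn0]; linarith
      have htr : t - r ≤ 1 / (n : ℝ) := by rw [le_div_iff₀ hn0]; nlinarith [hsmall, hs0, hn1, mul_nonneg hs0 hn0.le]
      have hg1 : |(r - t) * g 1| ≤ |g 1| / n := by
        rw [abs_mul, abs_of_nonpos (by linarith : r - t ≤ 0), neg_sub, div_eq_mul_inv,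
          mul_comm (|g 1|)]
        apply mul_le_mul_of_nonneg_right _ (abs_nonneg _)
        rw [← one_div]; exact htr
      calc |g t - t * g 1| = |(r - t) * g 1 + g (t - r)| := by rw [hgsplit, hgr]; ring_nf
        _ ≤ |(r - t) * g 1| + |g (t - r)| := abs_add_le _ _
        _ ≤ |g 1| / n + M / n := add_le_add hg1 hgs
        _ = (|g 1| + M) / n := by ring
    by_contra hne
    have hpos : 0 < |g t - t * g 1| := abs_pos.2 (sub_ne_zero.2 hne)
    have hM : 0 ≤ M := le_trans (abs_nonneg _) (hbd 1 (by norm_num))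
    obtain ⟨n, hn⟩ := exists_nat_gt ((|g 1| + M) / |g t - t * g 1|)
    have hn1 : 1 ≤ n := by
      by_contra h
      push_neg at h
      interval_cases n
      simp at hn
      have : 0 ≤ (|g 1| + M) / |g t - t * g 1| :=
        div_nonneg (by positivity) hpos.le
      linarith
    have hkey := key n hn1
    have hn0 : (0 : ℝ) < n := by exact_mod_cast hn1
    rw [div_lt_iff₀ hpos] at hn
    have : (|g 1| + M) / ↑n < |g t - t * g 1| := by
      rw [div_lt_iff₀ hn0]; linarith [mul_comm (n:ℝ) (|g t - t * g 1|)]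
    linarith
  intro t ht
  rcases le_or_gt 0 t with h | h
  · exact main t h (by rw [abs_of_nonneg h] at ht; exact ht)
  · have hneg : g (-t) = -g t := by
      have := hadd t (-t) ht (by rwa [abs_neg]) (by simp)
      simp at this; linarith [g0]
    have := main (-t) (by linarith) (by rw [abs_of_neg h] at ht; linarith)
    rw [hneg] at this; linarith

set_option maxHeartbeats 1000000 in
/-- Let `S` be a subsemigroup of `ℝ^d` with nonempty interior, and let
`F : S → ℝ` be additive, nonnegative, and positively homogeneous (`F (a • y) = a * F y`
whenever `y ∈ S`, `a ≥ 0` and `a • y ∈ S`). Then `F` is linear on `S`. -/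
theorem stmt2 (d : ℕ) (S : Set (Fin d → ℝ))
    (hadd : ∀ x ∈ S, ∀ y ∈ S, x + y ∈ S)
    (hint : (interior S).Nonempty)
    (F : (Fin d → ℝ) → ℝ)
    (hF0 : ∀ x ∈ S, 0 ≤ F x)
    (hFadd : ∀ x ∈ S, ∀ y ∈ S, F (x + y) = F x + F y)
    (hFhom : ∀ y ∈ S, ∀ a : ℝ, 0 ≤ a → a • y ∈ S → F (a • y) = a * F y) :
    ∃ a : Fin d → ℝ, ∀ x ∈ S, F x = ∑ i, a i * x i := by
  classical
  obtain ⟨x₀, hx₀⟩ := hint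
  obtain ⟨ε, hε, hball⟩ := Metric.isOpen_iff.mp isOpen_interior x₀ hx₀
  replace hball : Metric.ball x₀ ε ⊆ S := hball.trans interior_subset
  have hx₀S : x₀ ∈ S := hball (Metric.mem_ball_self hε)
  have hmem : ∀ h : Fin d → ℝ, ‖h‖ < ε → x₀ + h ∈ S := by
    intro h hh
    apply hball
    rw [Metric.mem_ball, dist_eq_norm]
    simpa using hh
  set H : (Fin d → ℝ) → ℝ := fun h => F (x₀ + h) - F x₀ with hHdef
  have H0 : H 0 = 0 := by simp [hHdef]
  have Hadd : ∀ h k : Fin d → ℝ, ‖h‖ < ε → ‖k‖ < ε → ‖h + k‖ < ε →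
      H (h + k) = H h + H k := by
    intro h k hh hk hhk
    have h1 := hFadd (x₀ + h) (hmem h hh) (x₀ + k) (hmem k hk)
    have h2 := hFadd x₀ hx₀S (x₀ + (h + k)) (hmem (h + k) hhk)
    have e : (x₀ + h) + (x₀ + k) = x₀ + (x₀ + (h + k)) := by abel
    rw [e, h2] at h1
    simp only [hHdef]
    linarith
  have Hbound : ∀ h : Fin d → ℝ, ‖h‖ < ε → |H h| ≤ F x₀ := by
    intro h hh
    have hlow : -F x₀ ≤ H h := by
      have := hF0 (x₀ + h) (hmem h hh)
      simp only [hHdef]; linarith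
    have hodd : H h + H (-h) = 0 := by
      have := Hadd h (-h) hh (by rwa [norm_neg]) (by simpa using hε)
      simp only [add_neg_cancel] at this
      rw [H0] at this; linarith
    have hlow' : -F x₀ ≤ H (-h) := by
      have := hF0 (x₀ + -h) (hmem (-h) (by rwa [norm_neg]))
      simp only [hHdef]; linarith
    rw [abs_le]; constructor <;> linarith
  -- scaling
  have Hscale : ∀ v : Fin d → ℝ, ‖v‖ < ε → ∀ t : ℝ, |t| ≤ 1 → H (t • v) = t * H v := by
    intro v hv t ht
    have key := locAdd_homog (fun t => H (t • v)) (F x₀) ?_ ?_ t ht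
    · simpa using key
    · intro s u hs hu hsu
      show H ((s + u) • v) = H (s • v) + H (u • v)
      rw [add_smul]
      apply Hadd
      · calc ‖s • v‖ = |s| * ‖v‖ := by rw [norm_smul, Real.norm_eq_abs]
          _ ≤ 1 * ‖v‖ := by apply mul_le_mul_of_nonneg_right hs (norm_nonneg v)
          _ < ε := by rwa [one_mul]
      · calc ‖u • v‖ = |u| * ‖v‖ := by rw [norm_smul, Real.norm_eq_abs]
          _ ≤ 1 * ‖v‖ := by apply mul_le_mul_of_nonneg_right hu (norm_nonneg v)
          _ < ε := by rwa [one_mul]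
      · rw [← add_smul]
        calc ‖(s + u) • v‖ = |s + u| * ‖v‖ := by rw [norm_smul, Real.norm_eq_abs]
          _ ≤ 1 * ‖v‖ := by apply mul_le_mul_of_nonneg_right hsu (norm_nonneg v)
          _ < ε := by rwa [one_mul]
    · intro u hu
      apply Hbound
      calc ‖u • v‖ = |u| * ‖v‖ := by rw [norm_smul, Real.norm_eq_abs]
        _ ≤ 1 * ‖v‖ := by apply mul_le_mul_of_nonneg_right hu (norm_nonneg v)
        _ < ε := by rwa [one_mul]
  have hnormsingle : ∀ (i : Fin d) (c : ℝ), ‖(Pi.single i c : Fin d → ℝ)‖ = |c| := by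
    intro i c
    rw [Pi.norm_single, Real.norm_eq_abs]
  set a : Fin d → ℝ := fun i => H (Pi.single i (ε / 2)) / (ε / 2) with ha
  have axis : ∀ (i : Fin d) (s : ℝ), |s| < ε → H (Pi.single i s) = a i * s := by
    intro i s hs
    have hδ : (0:ℝ) < ε / 2 := by linarith
    rcases eq_or_ne s 0 with rfl | hs0
    · simp [H0]
    rcases le_or_gt |s| (ε / 2) with hcase | hcase
    · have e : (s / (ε / 2)) • (Pi.single i (ε / 2) : Fin d → ℝ) = Pi.single i s := by
        rw [← Pi.single_smul]
        congr 1
        rw [smul_eq_mul]; field_simp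
      have := Hscale (Pi.single i (ε / 2)) (by rw [hnormsingle]; rw [abs_of_pos hδ]; linarith)
        (s / (ε / 2)) (by rw [abs_div, abs_of_pos hδ, div_le_one hδ]; exact hcase)
      rw [e] at this
      have key : H (Pi.single i s) * (ε / 2) = H (Pi.single i (ε / 2)) * s := by
        rw [this]; field_simp
      simp only [ha]
      rw [div_mul_eq_mul_div, eq_div_iff hδ.ne']
      linear_combination key
    · have e : ((ε / 2) / s) • (Pi.single i s : Fin d → ℝ) = Pi.single i (ε / 2) := by
        rw [← Pi.single_smul]
        congr 1
        field_simp
        rw [smul_eq_mul]; field_simp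
      have habs : |(ε / 2) / s| ≤ 1 := by
        rw [abs_div, abs_of_pos hδ, div_le_one (lt_trans hδ hcase)]
        linarith
      have := Hscale (Pi.single i s) (by rwa [hnormsingle]) ((ε / 2) / s) habs
      rw [e] at this
      have key : H (Pi.single i s) * (ε / 2) = H (Pi.single i (ε / 2)) * s := by
        rw [this]; field_simp
      simp only [ha]
      rw [div_mul_eq_mul_div, eq_div_iff hδ.ne']
      linear_combination key
  -- sum decomposition
  have Hsum : ∀ h : Fin d → ℝ, ‖h‖ < ε → H h = ∑ i, a i * h i := by
    intro h hh
    have hcoord : ∀ i, |h i| ≤ ‖h‖ := by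
      intro i
      simpa [Real.norm_eq_abs] using norm_le_pi_norm h i
    have hpart : ∀ s : Finset (Fin d), ‖∑ i ∈ s, (Pi.single i (h i) : Fin d → ℝ)‖ ≤ ‖h‖ := by
      intro s
      rw [pi_norm_le_iff_of_nonneg (norm_nonneg h)]
      intro j
      rw [Finset.sum_apply]
      simp only [Pi.single_apply]
      rw [Finset.sum_ite_eq s j (fun x => h x)]
      split
      · exact (Real.norm_eq_abs (h j)) ▸ hcoord j
      · simp [norm_nonneg]
    have hHpart : ∀ s : Finset (Fin d),
        H (∑ i ∈ s, (Pi.single i (h i) : Fin d → ℝ)) = ∑ i ∈ s, H (Pi.single i (h i)) := by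
      intro s
      induction s using Finset.induction with
      | empty => simp [H0]
      | insert j s' hnotmem ih =>
        rw [Finset.sum_insert hnotmem, Finset.sum_insert hnotmem, ← ih]
        apply Hadd
        · rw [hnormsingle]; exact lt_of_le_of_lt (hcoord j) hh
        · exact lt_of_le_of_lt (hpart s') hh
        · have := hpart (insert j s')
          rw [Finset.sum_insert hnotmem] at this
          exact lt_of_le_of_lt this hh
    have hdecomp : (∑ i, (Pi.single i (h i) : Fin d → ℝ)) = h := Finset.univ_sum_single h
    calc H h = H (∑ i, (Pi.single i (h i) : Fin d → ℝ)) := by rw [hdecomp]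
      _ = ∑ i, H (Pi.single i (h i)) := hHpart Finset.univ
      _ = ∑ i, a i * h i := by
          apply Finset.sum_congr rfl
          intro i _
          exact axis i (h i) (lt_of_le_of_lt (hcoord i) hh)
  -- F of natural multiples
  have Fsmul : ∀ y ∈ S, ∀ n : ℕ, 1 ≤ n → ((n : ℝ) • y ∈ S ∧ F ((n : ℝ) • y) = n * F y) := by
    intro y hy n hn
    induction n with
    | zero => omega
    | succ m ih =>
      rcases Nat.eq_or_lt_of_le hn with h1 | h1
      · rw [← h1]
        exact ⟨by simpa using hy, by simp⟩
      · have hm : 1 ≤ m := by omega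
        obtain ⟨hmem', heq⟩ := ih hm
        have e : ((m + 1 : ℕ) : ℝ) • y = (m : ℝ) • y + y := by
          push_cast
          rw [add_smul, one_smul]
        constructor
        · rw [e]; exact hadd _ hmem' _ hy
        · rw [e, hFadd _ hmem' _ hy, heq]; push_cast; ring
  refine ⟨a, ?_⟩
  intro x hx
  obtain ⟨n, hn⟩ := exists_nat_gt (‖x‖ / ε)
  have hn1 : 1 ≤ n := by
    by_contra hcon
    push_neg at hcon
    interval_cases n
    simp at hn
    have : 0 ≤ ‖x‖ / ε := div_nonneg (norm_nonneg x) hε.le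
    linarith
  have hnR : (1:ℝ) ≤ (n:ℝ) := by exact_mod_cast hn1
  have hn0 : (0:ℝ) < n := by linarith
  have hxn : ‖((n:ℝ)⁻¹ • x : Fin d → ℝ)‖ < ε := by
    rw [norm_smul, Real.norm_eq_abs, abs_of_pos (by positivity)]
    rw [div_lt_iff₀ hε] at hn
    rw [inv_mul_lt_iff₀ hn0]
    linarith [mul_comm (n:ℝ) ε]
  set y : Fin d → ℝ := x₀ + (n:ℝ)⁻¹ • x with hy
  have hyS : y ∈ S := hmem _ hxn
  have hny : (n:ℝ) • y = (n:ℝ) • x₀ + x := by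
    rw [hy, smul_add, smul_inv_smul₀ (by positivity)]
  obtain ⟨hx₀n, hFx₀n⟩ := Fsmul x₀ hx₀S n hn1
  obtain ⟨hyn, hFyn⟩ := Fsmul y hyS n hn1
  have h1 : F ((n:ℝ) • x₀ + x) = n * F x₀ + F x := by
    rw [hFadd _ hx₀n _ hx, hFx₀n]
  rw [hny, h1] at hFyn
  have hHy : H ((n:ℝ)⁻¹ • x) = F y - F x₀ := by simp [hHdef, hy]
  have hsum := Hsum ((n:ℝ)⁻¹ • x) hxn
  rw [hHy] at hsum
  have : F x = n * (F y - F x₀) := by linarith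
  rw [this, hsum, Finset.mul_sum]
  apply Finset.sum_congr rfl
  intro i _
  have : ((n:ℝ)⁻¹ • x) i = (n:ℝ)⁻¹ * x i := rfl
  rw [this]
  field_simp
end

section
/- Let B be an open ball in ℝ^d (with positive radius) and let 𝓑 = ⋃_{a ≥ 1} aB, where aB = {a·x : x ∈ B}. Then every additive function F : 𝓑 → ℝ with nonnegative values is linear: there exists a ∈ ℝ^d such that F(x) = a · x for all x ∈ 𝓑. -/
open scoped Pointwise

/-- Let `B` be an open ball in `ℝ^d` of positive radius and let
`𝓑 = ⋃_{a ≥ 1} a • B`. Then every additive nonnegative function `F : 𝓑 → ℝ` is linear. -/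
theorem stmt3 (d : ℕ) (x₀ : EuclideanSpace ℝ (Fin d)) (r : ℝ) (hr : 0 < r)
    (𝓑 : Set (EuclideanSpace ℝ (Fin d)))
    (h𝓑 : 𝓑 = ⋃ a ∈ Set.Ici (1 : ℝ), a • Metric.ball x₀ r)
    (F : EuclideanSpace ℝ (Fin d) → ℝ)
    (hF0 : ∀ x ∈ 𝓑, 0 ≤ F x)
    (hFadd : ∀ x ∈ 𝓑, ∀ y ∈ 𝓑, x + y ∈ 𝓑 → F (x + y) = F x + F y) :
    ∃ a : EuclideanSpace ℝ (Fin d), ∀ x ∈ 𝓑, F x = ∑ i, a i * x i := by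
  classical
  have hmem : ∀ x, x ∈ 𝓑 ↔ ∃ a : ℝ, 1 ≤ a ∧ x ∈ a • Metric.ball x₀ r := by
    intro x
    simp [h𝓑, Set.mem_iUnion, Set.mem_Ici]
  have hx₀B : x₀ ∈ Metric.ball x₀ r := Metric.mem_ball_self hr
  have hBsub : Metric.ball x₀ r ⊆ 𝓑 := by
    intro x hx
    rw [hmem]
    exact ⟨1, le_refl 1, by simpa using hx⟩
  have hx₀𝓑 : x₀ ∈ 𝓑 := hBsub hx₀B
  have hadd𝓑 : ∀ x ∈ 𝓑, ∀ y ∈ 𝓑, x + y ∈ 𝓑 := by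
    intro x hx y hy
    obtain ⟨a, ha, hxa⟩ := (hmem x).1 hx
    obtain ⟨b, hb, hyb⟩ := (hmem y).1 hy
    rw [hmem]
    refine ⟨a + b, by linarith, ?_⟩
    rw [(convex_ball x₀ r).add_smul (by linarith : (0:ℝ) ≤ a) (by linarith : (0:ℝ) ≤ b)]
    exact Set.add_mem_add hxa hyb
  -- existence of companion points
  have hz : ∀ x : EuclideanSpace ℝ (Fin d), ∃ z, z ∈ 𝓑 ∧ x + z ∈ 𝓑 := by
    intro x
    obtain ⟨a, ha1, ha2⟩ : ∃ a : ℝ, 1 ≤ a ∧ ‖x‖ < a * r := by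
      refine ⟨max 1 (‖x‖ / r + 1), le_max_left _ _, ?_⟩
      have h1 : ‖x‖ / r + 1 ≤ max 1 (‖x‖ / r + 1) := le_max_right _ _
      have h2 : ‖x‖ < (‖x‖ / r + 1) * r := by
        rw [add_mul, div_mul_cancel₀ _ hr.ne']
        linarith
      have h3 : (‖x‖ / r + 1) * r ≤ max 1 (‖x‖ / r + 1) * r :=
        mul_le_mul_of_nonneg_right h1 hr.le
      linarith
    have ha0 : a ≠ 0 := by positivity
    refine ⟨a • x₀, ?_, ?_⟩
    · rw [hmem]
      exact ⟨a, ha1, Set.smul_mem_smul_set hx₀B⟩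
    · rw [hmem]
      refine ⟨a, ha1, ?_⟩
      rw [smul_ball ha0]
      have : dist (x + a • x₀) (a • x₀) = ‖x‖ := by
        rw [dist_eq_norm]
        simp
      rw [Metric.mem_ball, this]
      calc ‖x‖ < a * r := ha2
        _ = ‖a‖ * r := by rw [Real.norm_eq_abs, abs_of_pos (by linarith)]
  -- well-definedness of the extension
  have hwd : ∀ x z₁ z₂, z₁ ∈ 𝓑 → z₂ ∈ 𝓑 → x + z₁ ∈ 𝓑 → x + z₂ ∈ 𝓑 →
      F (x + z₁) - F z₁ = F (x + z₂) - F z₂ := by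
    intro x z₁ z₂ h1 h2 h1' h2'
    have e1 : F ((x + z₁) + z₂) = F (x + z₁) + F z₂ :=
      hFadd _ h1' _ h2 (hadd𝓑 _ h1' _ h2)
    have e2 : F ((x + z₂) + z₁) = F (x + z₂) + F z₁ :=
      hFadd _ h2' _ h1 (hadd𝓑 _ h2' _ h1)
    have e3 : (x + z₁) + z₂ = (x + z₂) + z₁ := by abel
    rw [e3] at e1
    linarith
  choose z hz1 hz2 using hz
  set G : EuclideanSpace ℝ (Fin d) → ℝ := fun x => F (x + z x) - F (z x) with hGdef
  have hGeq : ∀ x z', z' ∈ 𝓑 → x + z' ∈ 𝓑 → G x = F (x + z') - F z' := by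
    intro x z' h h'
    exact hwd x (z x) z' (hz1 x) h (hz2 x) h'
  have hGF : ∀ x ∈ 𝓑, G x = F x := by
    intro x hx
    have := hFadd x hx (z x) (hz1 x) (hz2 x)
    simp only [hGdef]
    rw [this]
    ring
  have hGadd : ∀ x y, G (x + y) = G x + G y := by
    intro x y
    have hs : z x + z y ∈ 𝓑 := hadd𝓑 _ (hz1 x) _ (hz1 y)
    have habs : (x + z x) + (y + z y) ∈ 𝓑 := hadd𝓑 _ (hz2 x) _ (hz2 y)
    have hre : (x + y) + (z x + z y) = (x + z x) + (y + z y) := by abel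
    have hxy : (x + y) + (z x + z y) ∈ 𝓑 := by rw [hre]; exact habs
    rw [hGeq (x + y) (z x + z y) hs hxy]
    have e : F ((x + y) + (z x + z y)) = F (x + z x) + F (y + z y) := by
      rw [hre]
      exact hFadd _ (hz2 x) _ (hz2 y) habs
    have e2 : F (z x + z y) = F (z x) + F (z y) := hFadd _ (hz1 x) _ (hz1 y) hs
    simp only [hGdef]
    rw [e, e2]
    ring
  set Ghom : EuclideanSpace ℝ (Fin d) →+ ℝ := AddMonoidHom.mk' G hGadd with hGhom
  have hGhomcoe : ⇑Ghom = G := rfl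
  have hGx₀ : G x₀ = F x₀ := hGF x₀ hx₀𝓑
  have hMnn : 0 ≤ F x₀ := hF0 x₀ hx₀𝓑
  -- bound near zero
  have hlow : ∀ u : EuclideanSpace ℝ (Fin d), ‖u‖ < r → -(F x₀) ≤ G u := by
    intro u hu
    have hmemu : x₀ + u ∈ 𝓑 := by
      apply hBsub
      rw [Metric.mem_ball, dist_eq_norm]
      simpa using hu
    have h1 : G (x₀ + u) = G x₀ + G u := hGadd x₀ u
    have h2 : 0 ≤ G (x₀ + u) := by rw [hGF _ hmemu]; exact hF0 _ hmemu
    rw [h1, hGx₀] at h2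
    linarith
  have hbound : ∀ u : EuclideanSpace ℝ (Fin d), ‖u‖ < r → |G u| ≤ F x₀ := by
    intro u hu
    have hneg := hlow (-u) (by simpa using hu)
    have hpos := hlow u hu
    have hmn : G (-u) = -G u := by
      rw [← hGhomcoe]; exact map_neg Ghom u
    rw [hmn] at hneg
    rw [abs_le]
    constructor <;> linarith
  -- continuity at zero
  have hcont0 : ContinuousAt G 0 := by
    rw [Metric.continuousAt_iff]
    intro ε hε
    obtain ⟨n, hn⟩ := exists_nat_gt (F x₀ / ε)
    have hn0 : 0 < (n : ℝ) := lt_of_le_of_lt (div_nonneg hMnn hε.le) hn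
    refine ⟨r / n, by positivity, ?_⟩
    intro u hu
    have hdist : ‖u‖ < r / n := by
      rw [dist_eq_norm] at hu
      simpa using hu
    have hnu : ‖(n : ℝ) • u‖ < r := by
      rw [norm_smul, Real.norm_natCast]
      calc (n : ℝ) * ‖u‖ < (n : ℝ) * (r / n) := by
            apply mul_lt_mul_of_pos_left hdist hn0
        _ = r := by field_simp
    have hsm : G ((n : ℝ) • u) = (n : ℝ) * G u := by
      rw [Nat.cast_smul_eq_nsmul ℝ n u]
      have h2 := map_nsmul Ghom n u
      rw [hGhomcoe] at h2
      rw [h2, nsmul_eq_mul]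
    have hb := hbound _ hnu
    rw [hsm, abs_mul] at hb
    have hG0 : G 0 = 0 := by rw [← hGhomcoe]; exact map_zero Ghom
    rw [Real.dist_eq, hG0, sub_zero]
    have habs : |(n : ℝ)| = (n : ℝ) := abs_of_pos hn0
    rw [habs] at hb
    have hfn : F x₀ < (n : ℝ) * ε := by
      rw [div_lt_iff₀ hε] at hn
      linarith
    exact lt_of_mul_lt_mul_left (lt_of_le_of_lt hb hfn) hn0.le
  -- continuity
  have hcontG : Continuous (⇑Ghom) := by
    apply continuous_of_continuousAt_zero Ghom
    rw [hGhomcoe]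
    exact hcont0
  have hψ : ∀ (c : ℝ) (v : EuclideanSpace ℝ (Fin d)), G (c • v) = c * G v := by
    intro c v
    have h1 := (Ghom.toRealLinearMap hcontG).map_smul c v
    have h2 : ⇑(Ghom.toRealLinearMap hcontG) = ⇑Ghom :=
      AddMonoidHom.coe_toRealLinearMap Ghom hcontG
    rw [h2, hGhomcoe] at h1
    simpa [smul_eq_mul] using h1
  refine ⟨WithLp.toLp 2 (fun i => G (EuclideanSpace.single i 1)), ?_⟩
  intro x hx
  rw [← hGF x hx]
  have hxsum : x = ∑ i, x i • EuclideanSpace.single i (1:ℝ) := by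
    ext j
    rw [WithLp.ofLp_sum, Finset.sum_apply]
    simp [EuclideanSpace.single_apply, mul_ite]
  conv_lhs => rw [hxsum]
  have hms := map_sum Ghom (fun i => x i • EuclideanSpace.single i (1:ℝ)) Finset.univ
  rw [hGhomcoe] at hms
  rw [hms]
  exact Finset.sum_congr rfl fun i _ => by rw [hψ, mul_comm]
end

section
/- Let Θ be a finite set, (β_{ij})_{i,j∈Θ} nonnegative coefficients, and q a probability vector on Θ with q_i > 0 for all i. Let (μ_i)_{i∈Θ} be mutually absolutely continuous probability measures on a measurable space S with all divergences D(μ_i‖μ_j) finite. Define the mixture μ̄ = Σ_{i∈Θ} q_i μ_i and, for μ̄-almost every s, the posterior p(s) ∈ ℝ^Θ by p_i(s) = q_i · (dμ_i/dμ̄)(s). Let F(p) = Σ_{i,j∈Θ} β_{ij} (p_i/q_i) log(p_i/p_j). Then Σ_{i,j∈Θ} β_{ij} D(μ_i‖μ_j) = ∫_S F(p(s)) dμ̄(s) − F(q). -/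
open MeasureTheory
open scoped ENNReal

/-- Posterior-separable (Bayesian) representation of the LLR cost.
With a full-support prior `q`, mixture `μ̄ = Σ_i q_i • μ_i`, posterior
`p s i = q i * (dμ_i/dμ̄)(s)`, and `F v = Σ_{i,j} β_{ij} (v_i/q_i) log(v_i/v_j)`,
the LLR cost `Σ_{i,j} β_{ij} D(μ_i‖μ_j)` equals `∫ F (p s) dμ̄ − F q`. -/
theorem stmt7 {Θ S : Type*} [Fintype Θ] [MeasurableSpace S]
    (β : Θ → Θ → ℝ) (hβ : ∀ i j, 0 ≤ β i j)
    (q : Θ → ℝ) (hq : ∀ i, 0 < q i) (hq1 : ∑ i, q i = 1)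
    (μ : Θ → Measure S) (hprob : ∀ i, IsProbabilityMeasure (μ i))
    (hac : ∀ i j, μ i ≪ μ j)
    (hint : ∀ i j, Integrable (fun s => Real.log (((μ i).rnDeriv (μ j)) s).toReal) (μ i))
    (μbar : Measure S) (hμbar : μbar = ∑ i, ENNReal.ofReal (q i) • μ i)
    (p : S → Θ → ℝ) (hp : ∀ s i, p s i = q i * (((μ i).rnDeriv μbar) s).toReal)
    (F : (Θ → ℝ) → ℝ)
    (hF : ∀ v, F v = ∑ i, ∑ j, β i j * (v i / q i) * Real.log (v i / v j)) :
    ∑ i, ∑ j, β i j * ∫ s, Real.log (((μ i).rnDeriv (μ j)) s).toReal ∂(μ i)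
      = (∫ s, F (p s) ∂μbar) - F q := by
  have hfin : IsFiniteMeasure μbar := by
    constructor
    rw [hμbar]
    simp only [Measure.coe_finset_sum, Finset.sum_apply, Measure.smul_apply, smul_eq_mul,
      measure_univ, mul_one]
    exact ENNReal.sum_lt_top.mpr (fun i _ => ENNReal.ofReal_lt_top)
  have hibar : ∀ i, μ i ≪ μbar := by
    intro i
    intro s hs
    rw [hμbar] at hs
    simp only [Measure.coe_finset_sum, Finset.sum_apply, Measure.smul_apply, smul_eq_mul] at hs
    have := (Finset.sum_eq_zero_iff.mp hs) i (Finset.mem_univ i)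
    rcases mul_eq_zero.mp this with h | h
    · exact absurd h (by simp [ENNReal.ofReal_eq_zero, not_le, hq i])
    · exact h
  have hbarj : ∀ j, μbar ≪ μ j := by
    intro j s hs
    rw [hμbar]
    simp only [Measure.coe_finset_sum, Finset.sum_apply, Measure.smul_apply, smul_eq_mul]
    exact Finset.sum_eq_zero (fun i _ => by rw [hac i j hs, mul_zero])
  -- a.e. identity for the log of the posterior ratio
  have hae : ∀ i j, (fun s => Real.log (p s i / p s j))
      =ᵐ[μ i] (fun s => Real.log (q i / q j) + Real.log (((μ i).rnDeriv (μ j)) s).toReal) := by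
    intro i j
    have h1 : ∀ᵐ s ∂(μ i), (μ i).rnDeriv (μ j) s * (μ j).rnDeriv μbar s = (μ i).rnDeriv μbar s :=
      (hibar i).ae_le (Measure.rnDeriv_mul_rnDeriv (hac i j))
    have h2 : ∀ᵐ s ∂(μ i), 0 < (μ j).rnDeriv μbar s :=
      (hac i j).ae_le (Measure.rnDeriv_pos (hibar j))
    have h3 : ∀ᵐ s ∂(μ i), (μ j).rnDeriv μbar s < ∞ :=
      (hibar i).ae_le (Measure.rnDeriv_lt_top (μ j) μbar)
    have h4 : ∀ᵐ s ∂(μ i), 0 < (μ i).rnDeriv (μ j) s := Measure.rnDeriv_pos (hac i j)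
    have h5 : ∀ᵐ s ∂(μ i), (μ i).rnDeriv (μ j) s < ∞ :=
      (hac i j).ae_le (Measure.rnDeriv_lt_top (μ i) (μ j))
    filter_upwards [h1, h2, h3, h4, h5] with s h1 h2 h3 h4 h5
    have ha : 0 < (((μ i).rnDeriv (μ j)) s).toReal := ENNReal.toReal_pos h4.ne' h5.ne
    have hb : 0 < (((μ j).rnDeriv μbar) s).toReal := ENNReal.toReal_pos h2.ne' h3.ne
    have hpi : p s i = q i * ((((μ i).rnDeriv (μ j)) s).toReal * (((μ j).rnDeriv μbar) s).toReal) := by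
      rw [hp s i, ← h1, ENNReal.toReal_mul]
    have hpj : p s j = q j * (((μ j).rnDeriv μbar) s).toReal := hp s j
    rw [hpi, hpj]
    rw [show q i * ((((μ i).rnDeriv (μ j)) s).toReal * (((μ j).rnDeriv μbar) s).toReal) /
        (q j * (((μ j).rnDeriv μbar) s).toReal)
        = (q i / q j) * (((μ i).rnDeriv (μ j)) s).toReal by
      rw [← mul_assoc, mul_div_mul_right _ _ hb.ne', div_mul_eq_mul_div]]
    rw [Real.log_mul (div_pos (hq i) (hq j)).ne' ha.ne']
  -- change of measure for each pair
  have hchg : ∀ i j, ∫ s, β i j * (p s i / q i) * Real.log (p s i / p s j) ∂μbar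
      = β i j * ∫ s, Real.log (p s i / p s j) ∂(μ i) := by
    intro i j
    have : ∀ s, β i j * (p s i / q i) * Real.log (p s i / p s j)
        = β i j * ((((μ i).rnDeriv μbar) s).toReal • Real.log (p s i / p s j)) := by
      intro s
      rw [hp s i, smul_eq_mul, mul_comm (q i), mul_div_assoc, div_self (hq i).ne', mul_one]
      ring
    simp_rw [this]
    rw [integral_const_mul, integral_rnDeriv_smul (hibar i)]
  -- integrability of the log ratio w.r.t. μ i
  have hintlog : ∀ i j, Integrable (fun s => Real.log (p s i / p s j)) (μ i) := by
    intro i j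
    exact (Integrable.congr ((integrable_const (Real.log (q i / q j))).add (hint i j))
      (hae i j).symm)
  -- value of the μ i integral
  have hval : ∀ i j, ∫ s, Real.log (p s i / p s j) ∂(μ i)
      = Real.log (q i / q j) + ∫ s, Real.log (((μ i).rnDeriv (μ j)) s).toReal ∂(μ i) := by
    intro i j
    rw [integral_congr_ae (hae i j), integral_add (integrable_const _) (hint i j),
      integral_const, probReal_univ, smul_eq_mul, one_mul]
  -- integrability over μbar of each summand
  have hintbar : ∀ i j, Integrable
      (fun s => β i j * (p s i / q i) * Real.log (p s i / p s j)) μbar := by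
    intro i j
    have heq : ∀ s, β i j * (p s i / q i) * Real.log (p s i / p s j)
        = β i j • ((((μ i).rnDeriv μbar) s).toReal • Real.log (p s i / p s j)) := by
      intro s
      rw [hp s i, smul_eq_mul, smul_eq_mul, mul_comm (q i), mul_div_assoc,
        div_self (hq i).ne', mul_one]
      ring
    simp_rw [heq]
    exact ((integrable_rnDeriv_smul_iff (hibar i)).mpr (hintlog i j)).smul (β i j)
  -- compute the μbar integral of F ∘ p
  have hFint : ∫ s, F (p s) ∂μbar
      = ∑ i, ∑ j, β i j * (Real.log (q i / q j)
          + ∫ s, Real.log (((μ i).rnDeriv (μ j)) s).toReal ∂(μ i)) := by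
    simp_rw [hF]
    rw [integral_finset_sum _ (fun i _ => integrable_finset_sum _ (fun j _ => hintbar i j))]
    refine Finset.sum_congr rfl (fun i _ => ?_)
    rw [integral_finset_sum _ (fun j _ => hintbar i j)]
    refine Finset.sum_congr rfl (fun j _ => ?_)
    rw [hchg i j, hval i j]
  have hFq : F q = ∑ i, ∑ j, β i j * Real.log (q i / q j) := by
    rw [hF]
    refine Finset.sum_congr rfl (fun i _ => Finset.sum_congr rfl (fun j _ => ?_))
    rw [div_self (hq i).ne', mul_one]
  rw [hFint, hFq, ← Finset.sum_sub_distrib]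
  refine Finset.sum_congr rfl (fun i _ => ?_)
  rw [← Finset.sum_sub_distrib]
  refine Finset.sum_congr rfl (fun j _ => ?_)
  ring
end

section
/- Let Θ and A be nonempty finite sets, q a probability vector on Θ, u : A × Θ → ℝ a utility function, and (β_{ij})_{i≠j} strictly positive coefficients. Let A* ⊆ A be nonempty and let μ = (μ_i)_{i∈Θ} be a family of probability vectors on A with μ_i(A*) = 1 for all i and such that every a ∈ A* has μ_k(a) > 0 for some k ∈ Θ. Suppose μ maximizes the objective V(ν) = Σ_{i∈Θ} q_i Σ_{a∈A} ν_i(a) u(a,i) − Σ_{i≠j} β_{ij} Σ_{a∈A} ν_i(a) log(ν_i(a)/ν_j(a)) over all families ν of probability vectors on A with ν_i(A*) = 1 for all i (with the conventions 0·log(0/x) = 0 for x ≥ 0 and x·log(x/0) = +∞ for x > 0, so that the objective is valued in ℝ ∪ {−∞}). Then: (i) μ_i(a) > 0 for every i ∈ Θ and every a ∈ A*; and (ii) for every state i ∈ Θ and every pair of actions a₁, a₂ ∈ A*, q_i·(u(a₁,i) − u(a₂,i)) = c̃(i,a₁) − c̃(i,a₂), where c̃(i,a) = −Σ_{j≠i}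 [ β_{ij} log(μ_j(a)/μ_i(a)) + β_{ji} μ_j(a)/μ_i(a) ]. -/
open Finset
open scoped Classical

/-- The term `x * log (x / y)` of the LLR cost, valued in `EReal`, with the conventions
`0 * log (0 / y) = 0` for `y ≥ 0` and `x * log (x / 0) = +∞` for `x > 0`. -/
noncomputable def klTerm (x y : ℝ) : EReal :=
  if x = 0 then (0 : EReal) else if y = 0 then ⊤ else ((x * Real.log (x / y) : ℝ) : EReal)

lemma klTerm_ne_bot (x y : ℝ) : klTerm x y ≠ ⊥ := by
  unfold klTerm; split_ifs <;> simp [← EReal.coe_mul]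

lemma klTerm_zero (y : ℝ) : klTerm 0 y = 0 := if_pos rfl

lemma klTerm_of_pos {x y : ℝ} (hx : 0 < x) (hy : 0 < y) :
    klTerm x y = ((x * Real.log (x / y) : ℝ) : EReal) := by
  unfold klTerm; rw [if_neg hx.ne', if_neg hy.ne']

lemma ereal_sum_ne_bot {α : Type*} (s : Finset α) (f : α → EReal)
    (h : ∀ x ∈ s, f x ≠ ⊥) : ∑ x ∈ s, f x ≠ ⊥ := by
  classical
  induction s using Finset.induction_on with
  | empty => simp
  | @insert a s ha ih =>
      rw [Finset.sum_insert ha, ne_eq, EReal.add_eq_bot_iff]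
      push_neg
      exact ⟨h a (Finset.mem_insert_self a s), ih fun x hx => h x (Finset.mem_insert_of_mem hx)⟩

lemma ereal_sum_eq_top {α : Type*} (s : Finset α) (f : α → EReal)
    (h : ∀ x ∈ s, f x ≠ ⊥) {x : α} (hx : x ∈ s) (hfx : f x = ⊤) : ∑ y ∈ s, f y = ⊤ := by
  classical
  rw [← Finset.add_sum_erase s f hx, hfx]
  exact EReal.top_add_of_ne_bot
    (ereal_sum_ne_bot _ _ fun y hy => h y (Finset.mem_of_mem_erase hy))

lemma ereal_coe_mul_ne_bot {r : ℝ} (hr : 0 < r) {z : EReal} (hz : z ≠ ⊥) :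
    (r : EReal) * z ≠ ⊥ := by
  induction z using EReal.rec with
  | bot => exact absurd rfl hz
  | coe z => rw [← EReal.coe_mul]; exact EReal.coe_ne_bot _
  | top => rw [EReal.coe_mul_top_of_pos hr]; simp

lemma ereal_coe_sum {α : Type*} (s : Finset α) (f : α → ℝ) :
    ((∑ x ∈ s, f x : ℝ) : EReal) = ∑ x ∈ s, ((f x : ℝ) : EReal) := by
  classical
  induction s using Finset.induction_on with
  | empty => simp
  | @insert a s ha ih => rw [Finset.sum_insert ha, Finset.sum_insert ha, EReal.coe_add, ih]

/-- First-order conditions for an optimal experiment in a decision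
problem under LLR cost: an optimal state-dependent distribution over actions `μ`
supported on `A*` has `μ i a > 0` everywhere on `A*`, and for all `i` and
`a₁, a₂ ∈ A*`, `q_i (u(a₁,i) − u(a₂,i)) = c̃(i,a₁) − c̃(i,a₂)` where
`c̃(i,a) = −Σ_{j ≠ i} [β_{ij} log(μ_j(a)/μ_i(a)) + β_{ji} μ_j(a)/μ_i(a)]`. -/
theorem stmt8 {Θ A : Type*} [Fintype Θ] [Fintype A] [Nonempty Θ] [Nonempty A]
    (q : Θ → ℝ) (hq0 : ∀ i, 0 ≤ q i) (hq1 : ∑ i, q i = 1)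
    (u : A → Θ → ℝ)
    (β : Θ → Θ → ℝ) (hβ : ∀ i j, i ≠ j → 0 < β i j)
    (Astar : Finset A) (hAstar : Astar.Nonempty)
    (V : (Θ → A → ℝ) → EReal)
    (hV : ∀ ν, V ν =
      ((∑ i, q i * ∑ a, ν i a * u a i : ℝ) : EReal)
        - ∑ i, ∑ j ∈ univ.erase i, ∑ a, (β i j : EReal) * klTerm (ν i a) (ν j a))
    (μ : Θ → A → ℝ)
    (hμ0 : ∀ i a, 0 ≤ μ i a) (hμ1 : ∀ i, ∑ a ∈ Astar, μ i a = 1)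
    (hμsupp : ∀ i, ∀ a ∉ Astar, μ i a = 0)
    (hfull : ∀ a ∈ Astar, ∃ k, 0 < μ k a)
    (hopt : ∀ ν : Θ → A → ℝ, (∀ i a, 0 ≤ ν i a) → (∀ i, ∑ a ∈ Astar, ν i a = 1) →
      (∀ i, ∀ a ∉ Astar, ν i a = 0) → V ν ≤ V μ) :
    (∀ i, ∀ a ∈ Astar, 0 < μ i a) ∧
    (∀ i : Θ, ∀ a₁ ∈ Astar, ∀ a₂ ∈ Astar,
      q i * (u a₁ i - u a₂ i) =
        (-∑ j ∈ univ.erase i,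
            (β i j * Real.log (μ j a₁ / μ i a₁) + β j i * (μ j a₁ / μ i a₁)))
          - (-∑ j ∈ univ.erase i,
            (β i j * Real.log (μ j a₂ / μ i a₂) + β j i * (μ j a₂ / μ i a₂)))) := by
  classical
  have hcard : (0:ℝ) < (Astar.card : ℝ) := by
    exact_mod_cast Finset.card_pos.mpr hAstar
  set ν0 : Θ → A → ℝ := fun _ a => if a ∈ Astar then ((Astar.card : ℝ))⁻¹ else 0 with hν0def
  have hν00 : ∀ i a, 0 ≤ ν0 i a := by
    intro i a; simp only [hν0def]; split_ifs
    · positivity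
    · exact le_refl 0
  have hν01 : ∀ i, ∑ a ∈ Astar, ν0 i a = 1 := by
    intro i
    simp only [hν0def]
    rw [Finset.sum_congr rfl (fun a ha => if_pos ha), Finset.sum_const, nsmul_eq_mul,
      mul_inv_cancel₀ hcard.ne']
  have hν0supp : ∀ i, ∀ a ∉ Astar, ν0 i a = 0 := by
    intro i a ha; simp [hν0def, ha]
  have hVν0 : V ν0 = ((∑ i, q i * ∑ a, ν0 i a * u a i : ℝ) : EReal) := by
    rw [hV]
    have hk : ∀ i j : Θ, ∀ a : A, klTerm (ν0 i a) (ν0 j a) = 0 := by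
      intro i j a
      by_cases ha : a ∈ Astar
      · have e1 : ν0 i a = ((Astar.card : ℝ))⁻¹ := if_pos ha
        have e2 : ν0 j a = ((Astar.card : ℝ))⁻¹ := if_pos ha
        have hps : (0:ℝ) < ((Astar.card : ℝ))⁻¹ := by positivity
        simp only [e1, e2]
        rw [klTerm_of_pos hps hps, div_self hps.ne', Real.log_one, mul_zero, EReal.coe_zero]
      · have e1 : ν0 i a = 0 := if_neg ha
        rw [e1, klTerm_zero]
    have hz : ∑ i, ∑ j ∈ univ.erase i, ∑ a : A, (β i j : EReal) * klTerm (ν0 i a) (ν0 j a)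
        = 0 := by
      refine Finset.sum_eq_zero fun i _ => Finset.sum_eq_zero fun j _ =>
        Finset.sum_eq_zero fun a _ => ?_
      rw [hk i j a, mul_zero]
    rw [hz, sub_zero]
  -- Part (i): positivity on Astar
  have hpos : ∀ i, ∀ a ∈ Astar, 0 < μ i a := by
    intro i a ha
    rcases (hμ0 i a).lt_or_eq with h | h
    · exact h
    exfalso
    obtain ⟨k, hk⟩ := hfull a ha
    have hki : k ≠ i := by rintro rfl; rw [← h] at hk; exact lt_irrefl _ hk
    have hterm : (β k i : EReal) * klTerm (μ k a) (μ i a) = ⊤ := by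
      have ht : klTerm (μ k a) (μ i a) = ⊤ := by
        unfold klTerm; rw [if_neg hk.ne', if_pos h.symm]
      rw [ht, EReal.coe_mul_top_of_pos (hβ k i hki)]
    have hbot : V μ = ⊥ := by
      rw [hV]
      have h3 : ∑ a' : A, (β k i : EReal) * klTerm (μ k a') (μ i a') = ⊤ :=
        ereal_sum_eq_top _ _
          (fun a' _ => ereal_coe_mul_ne_bot (hβ k i hki) (klTerm_ne_bot _ _))
          (Finset.mem_univ a) hterm
      have h2 : ∑ j ∈ univ.erase k, ∑ a' : A, (β k j : EReal) * klTerm (μ k a') (μ j a') = ⊤ :=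
        ereal_sum_eq_top _ _
          (fun j hj => ereal_sum_ne_bot _ _ fun a' _ =>
            ereal_coe_mul_ne_bot (hβ k j fun e => (Finset.mem_erase.mp hj).1 e.symm)
              (klTerm_ne_bot _ _))
          (Finset.mem_erase.mpr ⟨hki.symm, Finset.mem_univ i⟩) h3
      have h1 : ∑ i', ∑ j ∈ univ.erase i', ∑ a' : A,
          (β i' j : EReal) * klTerm (μ i' a') (μ j a') = ⊤ :=
        ereal_sum_eq_top _ _
          (fun i' _ => ereal_sum_ne_bot _ _ fun j hj => ereal_sum_ne_bot _ _ fun a' _ =>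
            ereal_coe_mul_ne_bot (hβ i' j fun e => (Finset.mem_erase.mp hj).1 e.symm)
              (klTerm_ne_bot _ _))
          (Finset.mem_univ k) h2
      rw [h1, EReal.sub_top]
    have hle := hopt ν0 hν00 hν01 hν0supp
    rw [hbot, le_bot_iff, hVν0] at hle
    exact EReal.coe_ne_bot _ hle
  -- bridge: V equals a real-valued objective on positive strategies
  have hbridge : ∀ ν : Θ → A → ℝ, (∀ k a, 0 ≤ ν k a) → (∀ k, ∀ a ∉ Astar, ν k a = 0) →
      (∀ k, ∀ a ∈ Astar, 0 < ν k a) →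
      V ν = (((∑ k, q k * ∑ a, ν k a * u a k)
        - ∑ k, ∑ j ∈ univ.erase k, ∑ a, β k j * (ν k a * Real.log (ν k a / ν j a)) : ℝ) : EReal) := by
    intro ν h0 hsupp hp
    rw [hV, EReal.coe_sub]
    congr 1
    rw [ereal_coe_sum]
    refine Finset.sum_congr rfl fun k _ => ?_
    rw [ereal_coe_sum]
    refine Finset.sum_congr rfl fun j hj => ?_
    rw [ereal_coe_sum]
    refine Finset.sum_congr rfl fun a _ => ?_
    by_cases hza : ν k a = 0
    · rw [hza, klTerm_zero]; simp
    · have ha : a ∈ Astar := by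
        by_contra hna; exact hza (hsupp k a hna)
      rw [klTerm_of_pos ((h0 k a).lt_of_ne (Ne.symm hza)) (hp j a ha), ← EReal.coe_mul]
  refine ⟨hpos, ?_⟩
  intro i a₁ ha₁ a₂ ha₂
  set c : Θ → A → ℝ := fun k a =>
    if k = i then ((if a = a₁ then (1:ℝ) else 0) - (if a = a₂ then 1 else 0)) else 0 with hcdef
  set ν : ℝ → Θ → A → ℝ := fun t k a => μ k a + t * c k a with hνdef
  set δ : ℝ := min (μ i a₁) (μ i a₂) with hδdef
  have hδ : 0 < δ := lt_min (hpos i a₁ ha₁) (hpos i a₂ ha₂)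
  have hδ1 : δ ≤ μ i a₁ := min_le_left _ _
  have hδ2 : δ ≤ μ i a₂ := min_le_right _ _
  have hν_zero : ∀ k a, ν 0 k a = μ k a := by
    intro k a; simp [hνdef]
  have habs : ∀ k a, c k a = 0 ∨ (δ ≤ μ k a ∧ |c k a| ≤ 1) := by
    intro k a
    by_cases hk : k = i
    · by_cases h1 : a = a₁
      · by_cases h2 : a = a₂
        · left
          have h12 : a₁ = a₂ := h1.symm.trans h2
          simp [hcdef, h12]
        · right
          have h12 : ¬ a₁ = a₂ := fun e => h2 (h1.trans e)
          refine ⟨by rw [hk, h1]; exact hδ1, ?_⟩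
          rw [hcdef]
          simp only [if_pos hk, if_pos h1, if_neg h2]
          norm_num
      · by_cases h2 : a = a₂
        · right
          refine ⟨by rw [hk, h2]; exact hδ2, ?_⟩
          rw [hcdef]
          simp only [if_pos hk, if_neg h1, if_pos h2]
          norm_num
        · left; simp [hcdef, h1, h2]
    · left; simp [hcdef, hk]
  have hνpos : ∀ t, |t| < δ → ∀ k, ∀ a ∈ Astar, 0 < ν t k a := by
    intro t ht k a ha
    have hν : ν t k a = μ k a + t * c k a := by simp [hνdef]
    rcases habs k a with h | ⟨h1, h2⟩
    · rw [hν, h, mul_zero, add_zero]; exact hpos k a ha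
    · have hb : |t * c k a| ≤ |t| := by
        rw [abs_mul]
        exact mul_le_of_le_one_right (abs_nonneg t) h2
      have hb2 := (abs_le.mp hb).1
      rw [hν]
      have ht' := neg_lt_of_abs_lt ht
      have ht'' := (abs_lt.mp ht).2
      linarith
  have hνnn : ∀ t, |t| < δ → ∀ k a, 0 ≤ ν t k a := by
    intro t ht k a
    by_cases ha : a ∈ Astar
    · exact (hνpos t ht k a ha).le
    · have h1 : a ≠ a₁ := fun e => ha (e ▸ ha₁)
      have h2 : a ≠ a₂ := fun e => ha (e ▸ ha₂)
      simp [hνdef, hcdef, h1, h2, hμsupp k a ha]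
  have hνsum : ∀ t, ∀ k, ∑ a ∈ Astar, ν t k a = 1 := by
    intro t k
    simp only [hνdef, hcdef]
    by_cases hk : k = i
    · subst hk
      simp only [eq_self_iff_true, if_true]
      rw [Finset.sum_add_distrib, hμ1, ← Finset.mul_sum, Finset.sum_sub_distrib,
        Finset.sum_ite_eq' Astar a₁ (fun _ => (1:ℝ)),
        Finset.sum_ite_eq' Astar a₂ (fun _ => (1:ℝ)), if_pos ha₁, if_pos ha₂]
      ring
    · simp only [if_neg hk, mul_zero, add_zero]
      exact hμ1 k
  have hνsupp : ∀ t, ∀ k, ∀ a ∉ Astar, ν t k a = 0 := by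
    intro t k a ha
    have h1 : a ≠ a₁ := fun e => ha (e ▸ ha₁)
    have h2 : a ≠ a₂ := fun e => ha (e ▸ ha₂)
    simp [hνdef, hcdef, h1, h2, hμsupp k a ha]
  set f : ℝ → ℝ := fun t =>
    (∑ k, q k * ∑ a, ν t k a * u a k)
      - ∑ k, ∑ j ∈ univ.erase k, ∑ a, β k j * (ν t k a * Real.log (ν t k a / ν t j a)) with hfdef
  have hμν : ν 0 = μ := funext fun k => funext fun a => hν_zero k a
  have hmemδ : Set.Ioo (-δ) δ ∈ nhds (0:ℝ) := Ioo_mem_nhds (by linarith) hδ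
  have hlocal : IsLocalMax f 0 := by
    refine Filter.eventually_of_mem hmemδ fun t ht => ?_
    have ht' : |t| < δ := abs_lt.mpr ⟨ht.1, ht.2⟩
    have h1 := hopt (ν t) (hνnn t ht') (hνsum t) (hνsupp t)
    rw [hbridge (ν t) (hνnn t ht') (hνsupp t) (hνpos t ht'),
      hbridge μ hμ0 hμsupp hpos] at h1
    have h2 := EReal.coe_le_coe_iff.mp h1
    simp only [hfdef, hμν]
    exact h2
  -- derivative of the affine path
  have hx : ∀ k a, HasDerivAt (fun t => ν t k a) (c k a) 0 := by
    intro k a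
    have h : HasDerivAt (fun t : ℝ => μ k a + t * c k a) (c k a) 0 := by
      simpa using ((hasDerivAt_id (0:ℝ)).mul_const (c k a)).const_add (μ k a)
    simp only [hνdef]
    exact h
  -- derivative of each cost term
  have hterm : ∀ k j : Θ, j ≠ k → ∀ a : A,
      HasDerivAt (fun t => β k j * (ν t k a * Real.log (ν t k a / ν t j a)))
        (β k j * (c k a * (Real.log (μ k a / μ j a) + 1) - c j a * (μ k a / μ j a))) 0 := by
    intro k j hjk a
    by_cases ha : a ∈ Astar
    · have hxk : 0 < μ k a := hpos k a ha
      have hxj : 0 < μ j a := hpos j a ha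
      have heq : (fun t => ν t k a * Real.log (ν t k a / ν t j a)) =ᶠ[nhds (0:ℝ)]
          (fun t => ν t k a * Real.log (ν t k a) - ν t k a * Real.log (ν t j a)) := by
        refine Filter.eventuallyEq_of_mem hmemδ fun t ht => ?_
        have ht' : |t| < δ := abs_lt.mpr ⟨ht.1, ht.2⟩
        have h1 := hνpos t ht' k a ha
        have h2 := hνpos t ht' j a ha
        show ν t k a * Real.log (ν t k a / ν t j a)
          = ν t k a * Real.log (ν t k a) - ν t k a * Real.log (ν t j a)
        rw [Real.log_div h1.ne' h2.ne', mul_sub]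
      have hlogk : HasDerivAt (fun t => Real.log (ν t k a)) (c k a / μ k a) 0 := by
        simpa [hν_zero] using (hx k a).log (by rw [hν_zero]; exact hxk.ne')
      have hlogj : HasDerivAt (fun t => Real.log (ν t j a)) (c j a / μ j a) 0 := by
        simpa [hν_zero] using (hx j a).log (by rw [hν_zero]; exact hxj.ne')
      have hd1 : HasDerivAt (fun t => ν t k a * Real.log (ν t k a))
          (c k a * Real.log (μ k a) + μ k a * (c k a / μ k a)) 0 := by
        simpa [hν_zero] using (hx k a).fun_mul hlogk
      have hd2 : HasDerivAt (fun t => ν t k a * Real.log (ν t j a))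
          (c k a * Real.log (μ j a) + μ k a * (c j a / μ j a)) 0 := by
        simpa [hν_zero] using (hx k a).fun_mul hlogj
      have hd := ((hd1.sub hd2).congr_of_eventuallyEq heq).const_mul (β k j)
      have e1 : μ k a * (c k a / μ k a) = c k a := by
        rw [mul_comm]; exact div_mul_cancel₀ _ hxk.ne'
      have e2 : μ k a * (c j a / μ j a) = c j a * (μ k a / μ j a) := by
        ring
      convert hd using 1
      case e'_4 => rfl
      case e'_5 => rfl
      rw [Real.log_div hxk.ne' hxj.ne', e1, e2]
      ring
    · have h1 : a ≠ a₁ := fun e => ha (e ▸ ha₁)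
      have h2 : a ≠ a₂ := fun e => ha (e ▸ ha₂)
      have hc : ∀ k' : Θ, c k' a = 0 := by
        intro k'; simp [hcdef, h1, h2]
      have hfun : (fun t : ℝ => β k j * (ν t k a * Real.log (ν t k a / ν t j a)))
          = fun _ => 0 := by
        funext t
        simp [hνdef, hc, hμsupp k a ha, hμsupp j a ha]
      have hv : β k j * (c k a * (Real.log (μ k a / μ j a) + 1) - c j a * (μ k a / μ j a)) = 0 := by
        rw [hc, hc]; ring
      rw [hfun, hv]
      exact hasDerivAt_const 0 0
  -- total derivative
  have hU : HasDerivAt (fun t => ∑ k, q k * ∑ a, ν t k a * u a k)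
      (∑ k, q k * ∑ a, c k a * u a k) 0 :=
    HasDerivAt.fun_sum fun k _ =>
      (HasDerivAt.fun_sum fun a _ => (hx k a).mul_const (u a k)).const_mul (q k)
  have hC : HasDerivAt
      (fun t => ∑ k, ∑ j ∈ univ.erase k, ∑ a, β k j * (ν t k a * Real.log (ν t k a / ν t j a)))
      (∑ k, ∑ j ∈ univ.erase k, ∑ a,
        β k j * (c k a * (Real.log (μ k a / μ j a) + 1) - c j a * (μ k a / μ j a))) 0 :=
    HasDerivAt.fun_sum fun k _ => HasDerivAt.fun_sum fun j hj => HasDerivAt.fun_sum fun a _ =>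
      hterm k j (Finset.mem_erase.mp hj).1 a
  have hf' : HasDerivAt f
      ((∑ k, q k * ∑ a, c k a * u a k)
        - ∑ k, ∑ j ∈ univ.erase k, ∑ a,
            β k j * (c k a * (Real.log (μ k a / μ j a) + 1) - c j a * (μ k a / μ j a))) 0 := by
    simp only [hfdef]
    exact hU.sub hC
  have hzero : (∑ k, q k * ∑ a, c k a * u a k)
      - (∑ k, ∑ j ∈ univ.erase k, ∑ a,
          β k j * (c k a * (Real.log (μ k a / μ j a) + 1) - c j a * (μ k a / μ j a))) = 0 := by
    rw [← hf'.deriv]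
    exact hlocal.deriv_eq_zero
  -- simplify the sums
  have hsum_c : ∀ (g : A → ℝ) (k : Θ), (∑ a, c k a * g a) = if k = i then g a₁ - g a₂ else 0 := by
    intro g k
    by_cases hk : k = i
    · subst hk
      simp only [hcdef, if_pos rfl, sub_mul, one_mul, zero_mul, ite_mul,
        Finset.sum_sub_distrib]
      rw [Finset.sum_ite_eq' univ a₁ g, Finset.sum_ite_eq' univ a₂ g]
      simp
    · simp [hcdef, hk]
  have hS1 : (∑ k, q k * ∑ a, c k a * u a k) = q i * (u a₁ i - u a₂ i) := by
    rw [Finset.sum_congr rfl fun k _ => by rw [hsum_c (fun a => u a k) k]]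
    simp [mul_ite, mul_zero, Finset.sum_ite_eq' univ i (fun k => q k * (u a₁ k - u a₂ k))]
  have hstep : ∀ k : Θ, ∀ j ∈ univ.erase k,
      (∑ a, β k j * (c k a * (Real.log (μ k a / μ j a) + 1) - c j a * (μ k a / μ j a)))
        = β k j * ((if k = i then (Real.log (μ k a₁ / μ j a₁) + 1)
              - (Real.log (μ k a₂ / μ j a₂) + 1) else 0)
          - (if j = i then (μ k a₁ / μ j a₁) - (μ k a₂ / μ j a₂) else 0)) := by
    intro k j _
    rw [← Finset.mul_sum, Finset.sum_sub_distrib,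
      hsum_c (fun a => Real.log (μ k a / μ j a) + 1) k,
      hsum_c (fun a => μ k a / μ j a) j]
  have hT1 : (∑ k, ∑ j ∈ univ.erase k,
      β k j * (if k = i then (Real.log (μ k a₁ / μ j a₁) + 1)
        - (Real.log (μ k a₂ / μ j a₂) + 1) else 0))
      = ∑ j ∈ univ.erase i,
          β i j * ((Real.log (μ i a₁ / μ j a₁) + 1) - (Real.log (μ i a₂ / μ j a₂) + 1)) := by
    have hrw : ∀ k : Θ, (∑ j ∈ univ.erase k,
        β k j * (if k = i then (Real.log (μ k a₁ / μ j a₁) + 1)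
          - (Real.log (μ k a₂ / μ j a₂) + 1) else 0))
        = if k = i then (∑ j ∈ univ.erase i,
            β i j * ((Real.log (μ i a₁ / μ j a₁) + 1) - (Real.log (μ i a₂ / μ j a₂) + 1)))
          else 0 := by
      intro k
      by_cases hk : k = i
      · subst hk; simp only [eq_self_iff_true, if_true]
      · simp [hk]
    rw [Finset.sum_congr rfl fun k _ => hrw k, Finset.sum_ite_eq' univ i]
    simp
  have hT2 : (∑ k, ∑ j ∈ univ.erase k,
      β k j * (if j = i then (μ k a₁ / μ j a₁) - (μ k a₂ / μ j a₂) else 0))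
      = ∑ j ∈ univ.erase i, β j i * ((μ j a₁ / μ i a₁) - (μ j a₂ / μ i a₂)) := by
    have hrw : ∀ k : Θ, (∑ j ∈ univ.erase k,
        β k j * (if j = i then (μ k a₁ / μ j a₁) - (μ k a₂ / μ j a₂) else 0))
        = if k = i then 0 else β k i * ((μ k a₁ / μ i a₁) - (μ k a₂ / μ i a₂)) := by
      intro k
      rw [Finset.sum_congr rfl (fun j _ => by rw [mul_ite, mul_zero]),
        Finset.sum_ite_eq' (univ.erase k) i]
      by_cases hk : k = i
      · subst hk; simp
      · simp [Finset.mem_erase, Ne.symm hk, hk]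
    rw [Finset.sum_congr rfl fun k _ => hrw k,
      ← Finset.sum_erase_add univ _ (Finset.mem_univ i), if_pos rfl, add_zero]
    exact Finset.sum_congr rfl fun k hk => if_neg (Finset.mem_erase.mp hk).1
  have hS2 : (∑ k, ∑ j ∈ univ.erase k, ∑ a,
      β k j * (c k a * (Real.log (μ k a / μ j a) + 1) - c j a * (μ k a / μ j a)))
      = (∑ j ∈ univ.erase i,
          β i j * ((Real.log (μ i a₁ / μ j a₁) + 1) - (Real.log (μ i a₂ / μ j a₂) + 1)))
        - ∑ j ∈ univ.erase i, β j i * ((μ j a₁ / μ i a₁) - (μ j a₂ / μ i a₂)) := by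
    rw [Finset.sum_congr rfl fun k _ => Finset.sum_congr rfl fun j hj => hstep k j hj,
      Finset.sum_congr rfl fun k _ => by
        rw [Finset.sum_congr rfl fun j _ => mul_sub (β k j) _ _, Finset.sum_sub_distrib],
      Finset.sum_sub_distrib, hT1, hT2]
  rw [hS1, hS2] at hzero
  have hmain : q i * (u a₁ i - u a₂ i)
      = (∑ j ∈ univ.erase i,
          β i j * ((Real.log (μ i a₁ / μ j a₁) + 1) - (Real.log (μ i a₂ / μ j a₂) + 1)))
        - ∑ j ∈ univ.erase i, β j i * ((μ j a₁ / μ i a₁) - (μ j a₂ / μ i a₂)) := by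
    linarith [hzero]
  rw [hmain, neg_sub_neg, ← Finset.sum_sub_distrib, ← Finset.sum_sub_distrib]
  refine Finset.sum_congr rfl fun j hj => ?_
  have hji : j ≠ i := (Finset.mem_erase.mp hj).1
  have p1 : 0 < μ i a₁ := hpos i a₁ ha₁
  have p2 : 0 < μ i a₂ := hpos i a₂ ha₂
  have p3 : 0 < μ j a₁ := hpos j a₁ ha₁
  have p4 : 0 < μ j a₂ := hpos j a₂ ha₂
  rw [Real.log_div p1.ne' p3.ne', Real.log_div p2.ne' p4.ne',
    Real.log_div p3.ne' p1.ne', Real.log_div p4.ne' p2.ne']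
  ring
end

section
/- Let Θ be a finite set equipped with a function d : Θ × Θ → (0,∞) on distinct pairs, A a finite set, γ > 0, K ≥ 0, and (β_{ij})_{i,j∈Θ} nonnegative coefficients satisfying min{β_{ij}, β_{ji}} ≥ 1/d(i,j)^γ for all i ≠ j. Let μ = (μ_i)_{i∈Θ} be a family of probability vectors on A that are mutually absolutely continuous (μ_i(a) > 0 iff μ_j(a) > 0) and whose LLR cost satisfies Σ_{i,j∈Θ} β_{ij} Σ_{a∈A} μ_i(a) log(μ_i(a)/μ_j(a)) ≤ K (with the convention 0·log(0/0) = 0). Then for every action a ∈ A and all states i, j ∈ Θ, |μ_i(a) − μ_j(a)| ≤ √K · d(i,j)^{γ/2}. (Applied with K = max_{a,i}|u(a,i)| and γ = 2, this yields the Lipschitz continuity of optimal choice probabilities when nearby states are hard to distinguish.) -/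
open Finset
open scoped Classical

/-- If `0 < y ≤ x ≤ 1` then `x - y ≤ log x - log y`. -/
lemma stmt9_log_gap {x y : ℝ} (hy : 0 < y) (hyx : y ≤ x) (hx1 : x ≤ 1) :
    x - y ≤ Real.log x - Real.log y := by
  have hx : 0 < x := lt_of_lt_of_le hy hyx
  have h1 : Real.log (y / x) ≤ y / x - 1 :=
    Real.log_le_sub_one_of_pos (div_pos hy hx)
  have h2 : Real.log (y / x) = Real.log y - Real.log x := Real.log_div hy.ne' hx.ne'
  rw [h2] at h1
  have h3 : x * (Real.log y - Real.log x) ≤ x * (y / x - 1) :=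
    mul_le_mul_of_nonneg_left h1 hx.le
  have h4 : x * (y / x - 1) = y - x := by field_simp
  rw [h4] at h3
  nlinarith [h3, mul_nonneg (sub_nonneg.2 hyx) (sub_nonneg.2 hx1), hx]

/-- For `x, y ∈ [0,1]` both positive: `(x-y)^2 ≤ (x-y)(log x - log y)`. -/
lemma stmt9_sym_bound {x y : ℝ} (hx : 0 < x) (hy : 0 < y) (hx1 : x ≤ 1) (hy1 : y ≤ 1) :
    (x - y) ^ 2 ≤ (x - y) * (Real.log x - Real.log y) := by
  rcases le_total y x with h | h
  · have := stmt9_log_gap hy h hx1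
    nlinarith [sub_nonneg.2 h]
  · have := stmt9_log_gap hx h hy1
    nlinarith [sub_nonneg.2 h]

/-- If nearby states are hard to distinguish
(`min (β i j) (β j i) ≥ 1 / d(i,j)^γ` for `i ≠ j`), then any family of mutually
absolutely continuous choice probabilities whose LLR cost is at most `K` satisfies
`|μ i a − μ j a| ≤ √K · d(i,j)^{γ/2}` for every action `a` and distinct states `i, j`. -/
theorem stmt9 {Θ A : Type*} [Fintype Θ] [Fintype A]
    (d : Θ → Θ → ℝ) (hd : ∀ i j, i ≠ j → 0 < d i j)
    (γ : ℝ) (hγ : 0 < γ) (K : ℝ) (hK : 0 ≤ K)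
    (β : Θ → Θ → ℝ) (hβ0 : ∀ i j, 0 ≤ β i j)
    (hβ : ∀ i j, i ≠ j → 1 / d i j ^ γ ≤ min (β i j) (β j i))
    (μ : Θ → A → ℝ) (hμ0 : ∀ i a, 0 ≤ μ i a) (hμ1 : ∀ i, ∑ a, μ i a = 1)
    (hac : ∀ i j a, 0 < μ i a ↔ 0 < μ j a)
    (hcost : ∑ i, ∑ j, β i j *
        ∑ a, (if μ i a = 0 then 0 else μ i a * Real.log (μ i a / μ j a)) ≤ K) :
    ∀ (a : A) (i j : Θ), i ≠ j → |μ i a - μ j a| ≤ Real.sqrt K * d i j ^ (γ / 2) := by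
  intro a i j hij
  set F : Θ → Θ → A → ℝ :=
    fun i j b => if μ i b = 0 then 0 else μ i b * Real.log (μ i b / μ j b) with hF
  have hle1 : ∀ i b, μ i b ≤ 1 := by
    intro i b
    calc μ i b ≤ ∑ c, μ i c := Finset.single_le_sum (fun c _ => hμ0 i c) (mem_univ b)
    _ = 1 := hμ1 i
  -- pointwise lower bound : F i j b ≥ μ i b - μ j b
  have hpt : ∀ i j b, μ i b - μ j b ≤ F i j b := by
    intro i j b
    simp only [hF]
    by_cases hx : μ i b = 0
    · rw [if_pos hx, hx]
      linarith [hμ0 j b]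
    · rw [if_neg hx]
      have hxpos : 0 < μ i b := (hμ0 i b).lt_of_ne (Ne.symm hx)
      have hypos : 0 < μ j b := (hac i j b).1 hxpos
      have h1 : Real.log (μ j b / μ i b) ≤ μ j b / μ i b - 1 :=
        Real.log_le_sub_one_of_pos (div_pos hypos hxpos)
      have h2 : μ i b * Real.log (μ j b / μ i b) ≤ μ j b - μ i b := by
        have := mul_le_mul_of_nonneg_left h1 hxpos.le
        rwa [mul_sub, mul_one, mul_div_cancel₀ _ hxpos.ne'] at this
      have h3 : Real.log (μ i b / μ j b) = - Real.log (μ j b / μ i b) := by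
        rw [← Real.log_inv, inv_div]
      rw [h3, mul_neg]
      linarith
  have hKL0 : ∀ i j, 0 ≤ ∑ b, F i j b := by
    intro i j
    have h0 : (0 : ℝ) = ∑ b, (μ i b - μ j b) := by
      rw [Finset.sum_sub_distrib, hμ1, hμ1]; ring
    rw [h0]
    exact Finset.sum_le_sum fun b _ => hpt i j b
  have hg0 : ∀ p : Θ × Θ, 0 ≤ β p.1 p.2 * ∑ b, F p.1 p.2 b :=
    fun p => mul_nonneg (hβ0 _ _) (hKL0 _ _)
  -- extract the two relevant terms from the cost sum
  have hsum : β i j * (∑ b, F i j b) + β j i * (∑ b, F j i b) ≤ K := by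
    have hrow : ∀ i' j' : Θ, β i' j' * (∑ b, F i' j' b) ≤ ∑ j'', β i' j'' * ∑ b, F i' j'' b :=
      fun i' j' => Finset.single_le_sum (fun k _ => hg0 (i', k)) (mem_univ j')
    have hrow0 : ∀ i' : Θ, 0 ≤ ∑ j'', β i' j'' * ∑ b, F i' j'' b :=
      fun i' => Finset.sum_nonneg fun k _ => hg0 (i', k)
    calc β i j * (∑ b, F i j b) + β j i * (∑ b, F j i b)
        ≤ (∑ j'', β i j'' * ∑ b, F i j'' b) + (∑ j'', β j j'' * ∑ b, F j j'' b) :=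
          add_le_add (hrow i j) (hrow j i)
      _ = ∑ k ∈ ({i, j} : Finset Θ), ∑ j'', β k j'' * ∑ b, F k j'' b := by
          rw [Finset.sum_pair hij]
      _ ≤ ∑ k, ∑ j'', β k j'' * ∑ b, F k j'' b :=
          Finset.sum_le_sum_of_subset_of_nonneg (Finset.subset_univ _)
            (fun k _ _ => hrow0 k)
      _ ≤ K := hcost
  have hβij : 1 / d i j ^ γ ≤ β i j := (hβ i j hij).trans (min_le_left _ _)
  have hβji : 1 / d i j ^ γ ≤ β j i := (hβ i j hij).trans (min_le_right _ _)
  have hdpos : 0 < d i j ^ γ := Real.rpow_pos_of_pos (hd i j hij) γ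
  have hKLbound : (∑ b, F i j b) + (∑ b, F j i b) ≤ K * d i j ^ γ := by
    have h1 : (1 / d i j ^ γ) * ∑ b, F i j b ≤ β i j * ∑ b, F i j b :=
      mul_le_mul_of_nonneg_right hβij (hKL0 i j)
    have h2 : (1 / d i j ^ γ) * ∑ b, F j i b ≤ β j i * ∑ b, F j i b :=
      mul_le_mul_of_nonneg_right hβji (hKL0 j i)
    have h3 : ((∑ b, F i j b) + (∑ b, F j i b)) / d i j ^ γ ≤ K := by
      calc ((∑ b, F i j b) + (∑ b, F j i b)) / d i j ^ γ
          = (1 / d i j ^ γ) * (∑ b, F i j b) + (1 / d i j ^ γ) * (∑ b, F j i b) := by ring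
        _ ≤ β i j * (∑ b, F i j b) + β j i * (∑ b, F j i b) := add_le_add h1 h2
        _ ≤ K := hsum
    exact (div_le_iff₀ hdpos).mp h3
  -- pointwise symmetrized bound
  have hsyma : ∀ b, (μ i b - μ j b) ^ 2 ≤ F i j b + F j i b := by
    intro b
    simp only [hF]
    by_cases hx : μ i b = 0
    · have hy : μ j b = 0 := by
        by_contra hy
        have hypos : 0 < μ j b := (hμ0 j b).lt_of_ne (Ne.symm hy)
        exact ((hac i j b).2 hypos).ne' hx
      rw [if_pos hx, if_pos hy, hx, hy]
      norm_num
    · have hxpos : 0 < μ i b := (hμ0 i b).lt_of_ne (Ne.symm hx)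
      have hypos : 0 < μ j b := (hac i j b).1 hxpos
      rw [if_neg hx, if_neg hypos.ne']
      rw [Real.log_div hxpos.ne' hypos.ne', Real.log_div hypos.ne' hxpos.ne']
      have := stmt9_sym_bound hxpos hypos (hle1 i b) (hle1 j b)
      nlinarith
  have hsq : (μ i a - μ j a) ^ 2 ≤ K * d i j ^ γ := by
    have h1 : (μ i a - μ j a) ^ 2 ≤ (∑ b, F i j b) + (∑ b, F j i b) := by
      rw [← Finset.sum_add_distrib]
      exact le_trans (hsyma a)
        (Finset.single_le_sum (fun b _ => le_trans (sq_nonneg _) (hsyma b)) (mem_univ a))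
    exact h1.trans hKLbound
  have habs : |μ i a - μ j a| ≤ Real.sqrt (K * d i j ^ γ) := by
    rw [← Real.sqrt_sq_eq_abs]
    exact Real.sqrt_le_sqrt hsq
  have hsplit : Real.sqrt (K * d i j ^ γ) = Real.sqrt K * d i j ^ (γ / 2) := by
    rw [Real.sqrt_mul hK]
    congr 1
    rw [Real.sqrt_eq_rpow, ← Real.rpow_mul (hd i j hij).le, mul_one_div]
  rwa [hsplit] at habs
end

section
/- For each finite set Θ ⊂ ℝ with |Θ| ≥ 2 let (β^Θ_{ij})_{i,j∈Θ, i≠j} be nonnegative real coefficients. Suppose: (a) for all finite Θ, Ξ ⊂ ℝ with |Θ| = |Ξ| and all i, j ∈ Θ, k, l ∈ Ξ with i ≠ j, k ≠ l and |i − j| = |k − l|, one has β^Θ_{ij} = β^Ξ_{kl}; and (b) the quantity Σ_{i,j∈Θ, i≠j} β^Θ_{ij} · (i − j)²/2 (which equals the LLR cost of the experiment that reports the state plus standard normal noise, since the Kullback–Leibler divergence between unit-variance Gaussians with means i and j is (i−j)²/2) is the same for all finite Θ ⊂ ℝ with |Θ| ≥ 2. Then there exists a constant κ ≥ 0 such that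 for every finite Θ ⊂ ℝ with |Θ| = n ≥ 2 and all distinct i, j ∈ Θ, β^Θ_{ij} = κ / (n(n−1)(i−j)²). Conversely, any coefficients of this form satisfy (a) and (b). -/
open Finset

noncomputable def stmt10ApSet (n : ℕ) (d : ℝ) : Finset ℝ :=
  (Finset.range n).image (fun k : ℕ => (k : ℝ) * d)

lemma stmt10ApSet_card (n : ℕ) {d : ℝ} (hd : 0 < d) : (stmt10ApSet n d).card = n := by
  rw [stmt10ApSet, Finset.card_image_of_injective, Finset.card_range]
  intro a b hab
  have : (a : ℝ) = b := mul_right_cancel₀ hd.ne' hab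
  exact_mod_cast this

lemma stmt10_zero_mem {n : ℕ} (hn : 1 ≤ n) (d : ℝ) : (0:ℝ) ∈ stmt10ApSet n d := by
  simp only [stmt10ApSet, Finset.mem_image]
  exact ⟨0, Finset.mem_range.2 hn, by simp⟩

lemma stmt10_d_mem {n : ℕ} (hn : 2 ≤ n) (d : ℝ) : d ∈ stmt10ApSet n d := by
  simp only [stmt10ApSet, Finset.mem_image]
  exact ⟨1, Finset.mem_range.2 hn, by simp⟩

lemma stmt10_not_mem {n : ℕ} {d t : ℝ} (hd : 0 < d) (ht : ((n:ℝ) - 1) * d < t) :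
    t ∉ stmt10ApSet n d := by
  simp only [stmt10ApSet, Finset.mem_image]
  rintro ⟨k, hk, rfl⟩
  have hk0 : k + 1 ≤ n := Finset.mem_range.1 hk
  have hk' : (k : ℝ) ≤ (n : ℝ) - 1 := by
    have : (k : ℝ) + 1 ≤ n := by exact_mod_cast hk0
    linarith
  nlinarith

lemma stmt10_sum_apSet (m : ℕ) {d : ℝ} (hd : 0 < d) (f : ℝ → ℝ) :
    ∑ a ∈ stmt10ApSet m d, f a = ∑ k ∈ Finset.range m, f ((k:ℝ) * d) := by
  rw [stmt10ApSet, Finset.sum_image]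
  intro a _ b _ hab
  have : (a : ℝ) = b := mul_right_cancel₀ hd.ne' hab
  exact_mod_cast this

/-- The contribution `β^Θ_{ij} (i-j)²/2` of a pair at distance `d` in a set of size `n`,
computed on the canonical arithmetic progression. -/
noncomputable def stmt10G (β : Finset ℝ → ℝ → ℝ → ℝ) (n : ℕ) (d : ℝ) : ℝ :=
  β (stmt10ApSet n d) 0 d * d ^ 2 / 2

/-- A family of nonnegative coefficients `β^Θ_{ij}` (for finite
`Θ ⊂ ℝ` with `|Θ| ≥ 2` and distinct `i, j ∈ Θ`) satisfies
(a) translation/relabeling invariance: `β^Θ_{ij}` depends only on `|Θ|` and `|i−j|`, and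
(b) the LLR cost `Σ_{i≠j} β^Θ_{ij} (i−j)²/2` of the unit-variance Gaussian experiment is
the same for all such `Θ`, if and only if there exists `κ ≥ 0` with
`β^Θ_{ij} = κ / (n(n−1)(i−j)²)` where `n = |Θ|`. -/
theorem stmt10 (β : Finset ℝ → ℝ → ℝ → ℝ)
    (hnn : ∀ Θ : Finset ℝ, 2 ≤ Θ.card → ∀ i ∈ Θ, ∀ j ∈ Θ, i ≠ j → 0 ≤ β Θ i j) :
    ((∀ Θ Ξ : Finset ℝ, 2 ≤ Θ.card → Θ.card = Ξ.card →
        ∀ i ∈ Θ, ∀ j ∈ Θ, ∀ k ∈ Ξ, ∀ l ∈ Ξ, i ≠ j → k ≠ l → |i - j| = |k - l| →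
          β Θ i j = β Ξ k l) ∧
      (∀ Θ Ξ : Finset ℝ, 2 ≤ Θ.card → 2 ≤ Ξ.card →
        ∑ i ∈ Θ, ∑ j ∈ Θ.erase i, β Θ i j * (i - j) ^ 2 / 2 =
          ∑ k ∈ Ξ, ∑ l ∈ Ξ.erase k, β Ξ k l * (k - l) ^ 2 / 2))
    ↔ (∃ κ : ℝ, 0 ≤ κ ∧ ∀ Θ : Finset ℝ, 2 ≤ Θ.card → ∀ i ∈ Θ, ∀ j ∈ Θ, i ≠ j →
        β Θ i j = κ / ((Θ.card : ℝ) * ((Θ.card : ℝ) - 1) * (i - j) ^ 2)) := by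
  constructor
  · rintro ⟨ha, hb⟩
    -- `β` depends only on the cardinality and the distance:
    have hg : ∀ Θ : Finset ℝ, 2 ≤ Θ.card → ∀ i ∈ Θ, ∀ j ∈ Θ, i ≠ j →
        β Θ i j = β (stmt10ApSet Θ.card |i - j|) 0 |i - j| := by
      intro Θ h2 i hi j hj hij
      have hd : 0 < |i - j| := abs_pos.2 (sub_ne_zero.2 hij)
      exact ha Θ _ h2 (by rw [stmt10ApSet_card _ hd]) i hi j hj
        0 (stmt10_zero_mem (by omega) _) _ (stmt10_d_mem h2 _) hij hd.ne
        (by rw [zero_sub, abs_neg, abs_abs])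
    -- rewrite the cost in terms of `stmt10G`:
    have hcost : ∀ Θ : Finset ℝ, 2 ≤ Θ.card →
        ∑ i ∈ Θ, ∑ j ∈ Θ.erase i, β Θ i j * (i - j) ^ 2 / 2 =
          ∑ i ∈ Θ, ∑ j ∈ Θ.erase i, stmt10G β Θ.card |i - j| := by
      intro Θ h2
      refine Finset.sum_congr rfl fun i hi => Finset.sum_congr rfl fun j hj => ?_
      obtain ⟨hji, hjΘ⟩ := Finset.mem_erase.1 hj
      rw [hg Θ h2 i hi j hjΘ (Ne.symm hji), stmt10G, sq_abs]
    -- cost of `insert s A` for `A` an AP, `s` beyond it: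
    have hins : ∀ p : ℕ, ∀ ε s : ℝ, 0 < ε → (p : ℝ) * ε < s →
        ∑ i ∈ insert s (stmt10ApSet (p+1) ε),
            ∑ j ∈ (insert s (stmt10ApSet (p+1) ε)).erase i,
              β (insert s (stmt10ApSet (p+1) ε)) i j * (i - j) ^ 2 / 2 =
          2 * (∑ k ∈ Finset.range (p+1), stmt10G β (p+2) (s - (k:ℝ) * ε)) +
            ∑ a ∈ stmt10ApSet (p+1) ε, ∑ b ∈ (stmt10ApSet (p+1) ε).erase a,
              stmt10G β (p+2) |a - b| := by
      intro p ε s hε hs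
      set A := stmt10ApSet (p+1) ε with hA
      have hsA : s ∉ A := stmt10_not_mem hε (by push_cast; linarith)
      have hcardA : A.card = p + 1 := stmt10ApSet_card _ hε
      have hcardΘ : (insert s A).card = p + 2 := by
        rw [Finset.card_insert_of_notMem hsA, hcardA]
      rw [hcost _ (by omega), hcardΘ]
      rw [Finset.sum_insert hsA, Finset.erase_insert hsA]
      have step : ∀ a ∈ A, ∑ j ∈ (insert s A).erase a, stmt10G β (p+2) |a - j| =
          stmt10G β (p+2) |s - a| + ∑ b ∈ A.erase a, stmt10G β (p+2) |a - b| := by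
        intro a haA
        have hne : s ≠ a := fun h => hsA (h ▸ haA)
        rw [Finset.erase_insert_of_ne hne,
          Finset.sum_insert (fun h => hsA (Finset.mem_of_mem_erase h)), abs_sub_comm]
      rw [Finset.sum_congr rfl step, Finset.sum_add_distrib]
      have hAsum : ∑ a ∈ A, stmt10G β (p+2) |s - a| =
          ∑ k ∈ Finset.range (p+1), stmt10G β (p+2) (s - (k:ℝ) * ε) := by
        rw [hA, stmt10_sum_apSet _ hε]
        refine Finset.sum_congr rfl fun k hk => ?_
        have hk' : (k : ℝ) ≤ p := by
          have : k + 1 ≤ p + 1 := Finset.mem_range.1 hk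
          exact_mod_cast Nat.lt_succ_iff.1 (Finset.mem_range.1 hk)
        have : 0 < s - (k:ℝ) * ε := by nlinarith
        rw [abs_of_pos this]
      rw [hAsum]
      ring
    -- the key shift identity: `G n` is constant on positives
    have hshift : ∀ n : ℕ, 2 ≤ n → ∀ x y : ℝ, 0 < x → x < y →
        stmt10G β n x = stmt10G β n y := by
      intro n hn x y hx hxy
      obtain ⟨p, rfl⟩ : ∃ p, n = p + 2 := ⟨n - 2, by omega⟩
      set ε := (y - x) / (p + 1) with hεdef
      have hε : 0 < ε := div_pos (by linarith) (by positivity)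
      have hyx : y = x + ((p:ℝ) + 1) * ε := by
        rw [hεdef, mul_comm, div_mul_cancel₀ (y - x) (by positivity : ((p:ℝ) + 1) ≠ 0)]; ring
      set t := x + (p:ℝ) * ε with htdef
      have ht : (p : ℝ) * ε < t := by linarith
      have ht' : (p : ℝ) * ε < t + ε := by linarith
      have hsA : t ∉ stmt10ApSet (p+1) ε := stmt10_not_mem hε (by push_cast; linarith)
      have hsA' : t + ε ∉ stmt10ApSet (p+1) ε := stmt10_not_mem hε (by push_cast; linarith)
      have hcard1 : (insert t (stmt10ApSet (p+1) ε)).card = p + 2 := by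
        rw [Finset.card_insert_of_notMem hsA, stmt10ApSet_card _ hε]
      have hcard2 : (insert (t + ε) (stmt10ApSet (p+1) ε)).card = p + 2 := by
        rw [Finset.card_insert_of_notMem hsA', stmt10ApSet_card _ hε]
      have hbeq := hb (insert t (stmt10ApSet (p+1) ε))
        (insert (t + ε) (stmt10ApSet (p+1) ε)) (by omega) (by omega)
      rw [hins p ε t hε ht, hins p ε (t + ε) hε ht'] at hbeq
      have hsum : ∑ k ∈ Finset.range (p+1), stmt10G β (p+2) (t + ε - (k:ℝ) * ε) =
          ∑ k ∈ Finset.range (p+1), stmt10G β (p+2) (t - (k:ℝ) * ε) := by linarith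
      rw [Finset.sum_range_succ' (fun k => stmt10G β (p+2) (t + ε - (k:ℝ) * ε)) p,
        Finset.sum_range_succ (fun k => stmt10G β (p+2) (t - (k:ℝ) * ε)) p] at hsum
      have hre : ∀ k ∈ Finset.range p,
          stmt10G β (p+2) (t + ε - ((k:ℕ) + 1 : ℕ) * ε) =
            stmt10G β (p+2) (t - (k:ℝ) * ε) := by
        intro k _
        congr 1
        push_cast
        ring
      rw [Finset.sum_congr rfl hre] at hsum
      have h1 : stmt10G β (p+2) (t + ε - ((0:ℕ):ℝ) * ε) = stmt10G β (p+2) (t - (p:ℝ) * ε) := by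
        linarith
      have e1 : t + ε - ((0:ℕ):ℝ) * ε = y := by push_cast; linarith
      have e2 : t - (p:ℝ) * ε = x := by linarith
      rw [e1, e2] at h1
      exact h1.symm
    have hGone : ∀ n : ℕ, 2 ≤ n → ∀ x : ℝ, 0 < x → stmt10G β n x = stmt10G β n 1 := by
      intro n hn x hx
      rcases lt_trichotomy x 1 with h | h | h
      · exact hshift n hn x 1 hx h
      · rw [h]
      · exact (hshift n hn 1 x one_pos h).symm
    -- the total cost of any `Θ` equals `n(n-1) G n 1`:
    have hcostval : ∀ Θ : Finset ℝ, 2 ≤ Θ.card →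
        ∑ i ∈ Θ, ∑ j ∈ Θ.erase i, β Θ i j * (i - j) ^ 2 / 2 =
          (Θ.card : ℝ) * ((Θ.card : ℝ) - 1) * stmt10G β Θ.card 1 := by
      intro Θ h2
      rw [hcost Θ h2]
      have : ∀ i ∈ Θ, ∑ j ∈ Θ.erase i, stmt10G β Θ.card |i - j| =
          ((Θ.card : ℝ) - 1) * stmt10G β Θ.card 1 := by
        intro i hi
        have : ∀ j ∈ Θ.erase i, stmt10G β Θ.card |i - j| = stmt10G β Θ.card 1 := by
          intro j hj
          obtain ⟨hji, _⟩ := Finset.mem_erase.1 hj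
          exact hGone _ h2 _ (abs_pos.2 (sub_ne_zero.2 (Ne.symm hji)))
        rw [Finset.sum_congr rfl this, Finset.sum_const, Finset.card_erase_of_mem hi,
          nsmul_eq_mul]
        congr 1
        have : 1 ≤ Θ.card := by omega
        push_cast [Nat.cast_sub this]
        ring
      rw [Finset.sum_congr rfl this, Finset.sum_const, nsmul_eq_mul]
      ring
    -- put everything together
    set C := ∑ i ∈ stmt10ApSet 2 1, ∑ j ∈ (stmt10ApSet 2 1).erase i,
        β (stmt10ApSet 2 1) i j * (i - j) ^ 2 / 2 with hCdef
    have hcard21 : (stmt10ApSet 2 1).card = 2 := stmt10ApSet_card _ one_pos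
    have hCnn : 0 ≤ C := by
      rw [hCdef]
      refine Finset.sum_nonneg fun i hi => Finset.sum_nonneg fun j hj => ?_
      obtain ⟨hji, hjΘ⟩ := Finset.mem_erase.1 hj
      have := hnn _ (by rw [hcard21]) i hi j hjΘ (Ne.symm hji)
      positivity
    refine ⟨2 * C, by linarith, ?_⟩
    intro Θ h2 i hi j hj hij
    have hC : (Θ.card : ℝ) * ((Θ.card : ℝ) - 1) * stmt10G β Θ.card 1 = C := by
      rw [← hcostval Θ h2]
      exact hb Θ (stmt10ApSet 2 1) h2 (by rw [hcard21])
    have hpair : β Θ i j * (i - j) ^ 2 / 2 = stmt10G β Θ.card 1 := by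
      rw [hg Θ h2 i hi j hj hij, ← sq_abs (i - j)]
      exact hGone _ h2 _ (abs_pos.2 (sub_ne_zero.2 hij))
    have hn0 : (Θ.card : ℝ) ≠ 0 := by
      have : (2:ℝ) ≤ (Θ.card : ℝ) := by exact_mod_cast h2
      linarith
    have hn1 : (Θ.card : ℝ) - 1 ≠ 0 := by
      have : (2:ℝ) ≤ (Θ.card : ℝ) := by exact_mod_cast h2
      intro h; linarith
    have hij2 : (i - j) ^ 2 ≠ 0 := pow_ne_zero _ (sub_ne_zero.2 hij)
    field_simp
    linear_combination 2 * ((Θ.card : ℝ) * ((Θ.card : ℝ) - 1) * hpair + hC)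
  · rintro ⟨κ, hκ, hβ⟩
    constructor
    · intro Θ Ξ h2 hcard i hi j hj k hk l hl hij hkl habs
      rw [hβ Θ h2 i hi j hj hij, hβ Ξ (hcard ▸ h2) k hk l hl hkl, hcard]
      have : (i - j) ^ 2 = (k - l) ^ 2 := by
        rw [← sq_abs (i - j), ← sq_abs (k - l), habs]
      rw [this]
    · intro Θ Ξ hΘ hΞ
      have key : ∀ Δ : Finset ℝ, 2 ≤ Δ.card →
          ∑ i ∈ Δ, ∑ j ∈ Δ.erase i, β Δ i j * (i - j) ^ 2 / 2 = κ / 2 := by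
        intro Δ h2
        have hn0 : (Δ.card : ℝ) ≠ 0 := by
          have : (2:ℝ) ≤ (Δ.card : ℝ) := by exact_mod_cast h2
          linarith
        have hn1 : (Δ.card : ℝ) - 1 ≠ 0 := by
          have : (2:ℝ) ≤ (Δ.card : ℝ) := by exact_mod_cast h2
          intro h; linarith
        have : ∀ i ∈ Δ, ∑ j ∈ Δ.erase i, β Δ i j * (i - j) ^ 2 / 2 =
            ((Δ.card : ℝ) - 1) * (κ / (2 * ((Δ.card : ℝ) * ((Δ.card : ℝ) - 1)))) := by
          intro i hi
          have hterm : ∀ j ∈ Δ.erase i, β Δ i j * (i - j) ^ 2 / 2 =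
              κ / (2 * ((Δ.card : ℝ) * ((Δ.card : ℝ) - 1))) := by
            intro j hj
            obtain ⟨hji, hjΔ⟩ := Finset.mem_erase.1 hj
            have hij : i ≠ j := Ne.symm hji
            have hij2 : (i - j) ^ 2 ≠ 0 := pow_ne_zero _ (sub_ne_zero.2 hij)
            rw [hβ Δ h2 i hi j hjΔ hij]
            field_simp
          rw [Finset.sum_congr rfl hterm, Finset.sum_const,
            Finset.card_erase_of_mem hi, nsmul_eq_mul]
          congr 1
          have : 1 ≤ Δ.card := by omega
          push_cast [Nat.cast_sub this]
          ring
        rw [Finset.sum_congr rfl this, Finset.sum_const, nsmul_eq_mul]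
        field_simp
      rw [key Θ hΘ, key Ξ hΞ]
end

section
/- Let g : (0,∞) → ℝ be nonnegative and bounded above, and suppose that g(x) − g(y) = g(x+z) − g(y+z) for all x, y, z > 0. Then g is constant on (0,∞). -/
/-- Let `g : (0,∞) → ℝ` be nonnegative and bounded above, and suppose
`g x − g y = g (x+z) − g (y+z)` for all `x, y, z > 0`. Then `g` is constant on `(0,∞)`. -/
theorem stmt11 (g : ℝ → ℝ)
    (hg0 : ∀ x, 0 < x → 0 ≤ g x)
    (hgbd : ∃ M : ℝ, ∀ x, 0 < x → g x ≤ M)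
    (heq : ∀ x y z : ℝ, 0 < x → 0 < y → 0 < z → g x - g y = g (x + z) - g (y + z)) :
    ∀ x y : ℝ, 0 < x → 0 < y → g x = g y := by
  obtain ⟨M, hM⟩ := hgbd
  set h : ℝ → ℝ := fun z => g (1 + z) - g 1 with hh
  -- key: g (x + z) = g x + h z
  have key : ∀ x z : ℝ, 0 < x → 0 < z → g (x + z) = g x + h z := by
    intro x z hx hz
    have := heq x 1 z hx one_pos hz
    simp only [hh]
    linarith
  -- iterate: g (x + n • z) = g x + n * h z
  have iter : ∀ (n : ℕ) (x z : ℝ), 0 < x → 0 < z →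
      g (x + n * z) = g x + n * h z := by
    intro n
    induction n with
    | zero => intro x z hx hz; simp
    | succ n ih =>
      intro x z hx hz
      have h1 : x + (n + 1 : ℕ) * z = (x + n * z) + z := by
        push_cast; ring
      rw [h1, key (x + n * z) z (by positivity) hz, ih x z hx hz]
      push_cast; ring
  -- h z = 0 for z > 0
  have hzero : ∀ z : ℝ, 0 < z → h z = 0 := by
    intro z hz
    rcases lt_trichotomy (h z) 0 with hlt | he | hgt
    · exfalso
      obtain ⟨n, hn⟩ := Archimedean.arch (g 1 + 1) (by linarith : (0:ℝ) < -h z)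
      have := hg0 (1 + n * z) (by positivity)
      rw [iter n 1 z one_pos hz] at this
      have : (n : ℝ) * (-h z) ≤ g 1 := by
        simp at this ⊢; linarith
      have hn' : g 1 + 1 ≤ (n : ℝ) * (-h z) := by
        simpa [nsmul_eq_mul] using hn
      linarith
    · exact he
    · exfalso
      obtain ⟨n, hn⟩ := Archimedean.arch (M - g 1 + 1) hgt
      have := hM (1 + n * z) (by positivity)
      rw [iter n 1 z one_pos hz] at this
      have hn' : M - g 1 + 1 ≤ (n : ℝ) * h z := by
        simpa [nsmul_eq_mul] using hn
      linarith
  -- conclude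
  have main : ∀ x y : ℝ, 0 < x → 0 < y → x < y → g x = g y := by
    intro x y hx hy hxy
    have : g y = g (x + (y - x)) := by ring_nf
    rw [this, key x (y - x) hx (by linarith), hzero (y - x) (by linarith)]
    ring
  intro x y hx hy
  rcases lt_trichotomy x y with H | H | H
  · exact main x y hx hy H
  · rw [H]
  · exact (main y x hy hx H).symm
end

section
/- Fix an integer n ≥ 2 and a real number κ. Let g : (0,∞) → [0,∞) be such that for every finite set Θ ⊂ ℝ with |Θ| = n, Σ_{i,j∈Θ, i≠j} g(|i − j|) = κ (the sum ranging over ordered pairs of distinct elements). Then g is constant on (0,∞), with constant value κ/(n(n−1)). -/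
open Finset

/-- If `A` has `n - 1` elements and `p, q ∉ A`, then the sum of `g` of distances from
`p` to `A` equals that from `q` to `A`. -/
lemma stmt12_F_const (n : ℕ) (κ : ℝ) (g : ℝ → ℝ)
    (hsum : ∀ Θ : Finset ℝ, Θ.card = n → ∑ i ∈ Θ, ∑ j ∈ Θ.erase i, g |i - j| = κ)
    (A : Finset ℝ) (hA : A.card + 1 = n)
    (p q : ℝ) (hp : p ∉ A) (hq : q ∉ A) :
    ∑ a ∈ A, g |p - a| = ∑ a ∈ A, g |q - a| := by
  have expand : ∀ r : ℝ, r ∉ A →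
      2 * ∑ a ∈ A, g |r - a| + ∑ i ∈ A, ∑ j ∈ A.erase i, g |i - j| = κ := by
    intro r hr
    have hcard : (insert r A).card = n := by
      rw [card_insert_of_notMem hr]; omega
    have h := hsum _ hcard
    rw [Finset.sum_insert hr, Finset.erase_insert hr] at h
    have h2 : ∀ i ∈ A, ∑ j ∈ (insert r A).erase i, g |i - j|
        = g |i - r| + ∑ j ∈ A.erase i, g |i - j| := by
      intro i hi
      have hir : r ≠ i := fun h => hr (h ▸ hi)
      rw [Finset.erase_insert_of_ne hir,
        Finset.sum_insert (fun h => hr (Finset.mem_of_mem_erase h))]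
    rw [Finset.sum_congr rfl h2, Finset.sum_add_distrib] at h
    have h3 : ∑ i ∈ A, g |i - r| = ∑ a ∈ A, g |r - a| := by
      refine Finset.sum_congr rfl fun i _ => ?_
      rw [abs_sub_comm]
    rw [h3] at h
    linarith
  have h1 := expand p hp
  have h2 := expand q hq
  linarith

/-- Fix `n ≥ 2` and `κ : ℝ`. If `g : (0,∞) → [0,∞)` is such that for
every finite set `Θ ⊂ ℝ` with `|Θ| = n` the sum `Σ_{i≠j∈Θ} g(|i−j|)` (over ordered pairs
of distinct elements) equals `κ`, then `g` is constant on `(0,∞)` with value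
`κ / (n(n−1))`. -/
theorem stmt12 (n : ℕ) (hn : 2 ≤ n) (κ : ℝ) (g : ℝ → ℝ)
    (hg0 : ∀ x, 0 < x → 0 ≤ g x)
    (hsum : ∀ Θ : Finset ℝ, Θ.card = n → ∑ i ∈ Θ, ∑ j ∈ Θ.erase i, g |i - j| = κ) :
    ∀ x, 0 < x → g x = κ / ((n : ℝ) * ((n : ℝ) - 1)) := by
  -- Step 1: g is equal at any two positive points with x < y.
  have geq : ∀ x y : ℝ, 0 < x → x < y → g x = g y := by
    intro x y hx hxy
    set m := n - 2 with hm
    have hd : (0:ℝ) < (y - x) / ((m:ℝ) + 1) := by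
      apply div_pos (by linarith); positivity
    set d := (y - x) / ((m:ℝ) + 1) with hdd
    have hxy' : x + ((m:ℝ) + 1) * d = y := by
      rw [hdd]; field_simp; ring
    set A := (range (m+1)).image (fun k : ℕ => (k:ℝ) * d) with hA
    have hinj : ∀ a ∈ range (m+1), ∀ b ∈ range (m+1),
        (a:ℝ) * d = (b:ℝ) * d → a = b := by
      intro a _ b _ h
      have := mul_right_cancel₀ (ne_of_gt hd) h
      exact_mod_cast this
    have hAcard : A.card + 1 = n := by
      rw [hA, Finset.card_image_of_injOn hinj, card_range]; omega
    have hmem : ∀ z : ℝ, (∀ k ∈ range (m+1), z ≠ (k:ℝ) * d) → z ∉ A := by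
      intro z hz hzA
      rw [hA, Finset.mem_image] at hzA
      obtain ⟨k, hk, hkz⟩ := hzA
      exact hz k hk hkz.symm
    have hp : x + (m:ℝ) * d ∉ A := by
      refine hmem _ fun k hk h => ?_
      rw [Finset.mem_range] at hk
      have hkm : (k:ℝ) ≤ (m:ℝ) := by exact_mod_cast Nat.lt_succ_iff.mp hk
      nlinarith
    have hq : y ∉ A := by
      refine hmem _ fun k hk h => ?_
      rw [Finset.mem_range] at hk
      have hkm : (k:ℝ) ≤ (m:ℝ) := by exact_mod_cast Nat.lt_succ_iff.mp hk
      nlinarith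
    have hkey := stmt12_F_const n κ g hsum A hAcard _ _ hp hq
    have hsump : ∑ a ∈ A, g |x + (m:ℝ) * d - a|
        = ∑ j ∈ range (m+1), g (x + (j:ℝ) * d) := by
      rw [hA, Finset.sum_image hinj]
      have e1 : ∀ k ∈ range (m+1),
          g |x + (m:ℝ) * d - (k:ℝ) * d| = g (x + ((m - k : ℕ):ℝ) * d) := by
        intro k hk
        rw [Finset.mem_range] at hk
        have hk' : k ≤ m := Nat.lt_succ_iff.mp hk
        have : ((m - k : ℕ):ℝ) = (m:ℝ) - (k:ℝ) := by
          rw [Nat.cast_sub hk']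
        have hkm : (k:ℝ) ≤ (m:ℝ) := by exact_mod_cast hk'
        rw [this, abs_of_pos (by nlinarith)]
        ring_nf
      rw [Finset.sum_congr rfl e1]
      have := Finset.sum_range_reflect (fun j => g (x + (j:ℝ) * d)) (m+1)
      simpa using this
    have hsumq : ∑ a ∈ A, g |y - a|
        = ∑ j ∈ range (m+1), g (x + ((j:ℝ) + 1) * d) := by
      rw [hA, Finset.sum_image hinj]
      have e1 : ∀ k ∈ range (m+1),
          g |y - (k:ℝ) * d| = g (x + (((m - k : ℕ):ℝ) + 1) * d) := by
        intro k hk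
        rw [Finset.mem_range] at hk
        have hk' : k ≤ m := Nat.lt_succ_iff.mp hk
        have hc : ((m - k : ℕ):ℝ) = (m:ℝ) - (k:ℝ) := by
          rw [Nat.cast_sub hk']
        have hkm : (k:ℝ) ≤ (m:ℝ) := Nat.cast_le.mpr hk'
        rw [hc, abs_of_pos (by nlinarith), ← hxy']
        ring_nf
      rw [Finset.sum_congr rfl e1]
      have := Finset.sum_range_reflect (fun j => g (x + ((j:ℝ) + 1) * d)) (m+1)
      simpa using this
    rw [hsump, hsumq] at hkey
    rw [Finset.sum_range_succ' (fun j => g (x + (j:ℝ) * d)) m,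
      Finset.sum_range_succ (fun j => g (x + ((j:ℝ) + 1) * d)) m] at hkey
    have hfin : g (x + ((m:ℝ) + 1) * d) = g y := by rw [hxy']
    have hmatch : ∀ j ∈ range m,
        g (x + ((j:ℝ) + 1) * d) = g (x + ((j + 1 : ℕ):ℝ) * d) := by
      intro j _; push_cast; ring_nf
    rw [Finset.sum_congr rfl fun j hj => (hmatch j hj).symm, hfin] at hkey
    simpa using hkey
  have geq' : ∀ x y : ℝ, 0 < x → 0 < y → g x = g y := by
    intro x y hx hy
    rcases lt_trichotomy x y with h | h | h
    · exact geq x y hx h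
    · rw [h]
    · exact (geq y x hy h).symm
  -- Step 2: compute the value using an explicit n-element set.
  intro x hx
  set Θ := (range n).image (Nat.cast : ℕ → ℝ) with hΘ
  have hΘcard : Θ.card = n := by
    rw [hΘ, Finset.card_image_of_injective _ Nat.cast_injective, card_range]
  have h := hsum Θ hΘcard
  have hconst : ∀ i ∈ Θ, ∀ j ∈ Θ.erase i, g |i - j| = g x := by
    intro i _ j hj
    have hji : j ≠ i := Finset.ne_of_mem_erase hj
    have : 0 < |i - j| := abs_pos.mpr (sub_ne_zero.mpr (Ne.symm hji))
    exact geq' _ _ this hx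
  have h2 : ∑ i ∈ Θ, ∑ j ∈ Θ.erase i, g |i - j|
      = (n:ℝ) * ((n:ℝ) - 1) * g x := by
    rw [Finset.sum_congr rfl fun i hi =>
      Finset.sum_congr rfl fun j hj => hconst i hi j hj]
    rw [Finset.sum_congr rfl fun i (hi : i ∈ Θ) => Finset.sum_const (g x)]
    have hcard : ∀ i ∈ Θ, (Θ.erase i).card = n - 1 := by
      intro i hi; rw [Finset.card_erase_of_mem hi, hΘcard]
    rw [Finset.sum_congr rfl fun i hi => by rw [hcard i hi]]
    rw [Finset.sum_const, hΘcard]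
    have : ((n - 1 : ℕ):ℝ) = (n:ℝ) - 1 := by
      rw [Nat.cast_sub (by omega)]; norm_num
    simp [nsmul_eq_mul, this]; ring
  rw [h2] at h
  have hne : (n:ℝ) * ((n:ℝ) - 1) ≠ 0 := by
    have h2n : (2:ℝ) ≤ (n:ℝ) := by exact_mod_cast hn
    have : (0:ℝ) < (n:ℝ) * ((n:ℝ) - 1) := by nlinarith
    exact ne_of_gt this
  rw [eq_div_iff hne, ← h]; ring
end

section
/- Let n ≥ 1 and set Θ = {0, 1, …, n}. Say that a vector (σ₀, σ₁, …, σ_n) of Borel probability measures on ℝⁿ is derived from an experiment if there exist a measurable space S and mutually absolutely continuous probability measures (μ₀, …, μ_n) on S such that, for every i ∈ Θ, σ_i is the pushforward of μ_i under the map L : S → ℝⁿ given by L(s) = (log(dμ₁/dμ₀)(s), …, log(dμ_n/dμ₀)(s)). Then (σ₀, …, σ_n) is derived from an experiment if and only if the measures σ₀, …, σ_n are mutually absolutely continuous and, for every i ∈ {1, …, n}, the Radon–Nikodym derivative satisfies (dσ_i/dσ₀)(ξ) = e^{ξ_i} for σ₀-almost every ξ ∈ ℝⁿ (equivalently, σ_i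 is σ₀ weighted by the density ξ ↦ e^{ξ_i}). -/
open MeasureTheory
open scoped ENNReal

/-- Pushforward of a measure with a pulled-back density. -/
lemma map_withDensity_comp {α β : Type*} [MeasurableSpace α] [MeasurableSpace β]
    (μ : Measure α) {L : α → β} (hL : Measurable L) {g : β → ℝ≥0∞} (hg : Measurable g) :
    Measure.map L (μ.withDensity (g ∘ L)) = (Measure.map L μ).withDensity g := by
  ext s hs
  rw [Measure.map_apply hL hs, withDensity_apply _ (hL hs), withDensity_apply _ hs,
    MeasureTheory.setLIntegral_map hs hg hL]
  rfl

/-- Characterization of the vectors of measures derived from an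
experiment. A vector `(σ 0, σ 1, …, σ n)` of Borel probability measures on `ℝⁿ` is the
vector of conditional distributions of the log-likelihood-ratio map
`s ↦ (log (dμ₁/dμ₀)(s), …, log (dμ_n/dμ₀)(s))` of some experiment
(a measurable space `S` with mutually absolutely continuous probability measures
`μ 0, …, μ n`) if and only if the `σ i` are mutually absolutely continuous and each
`σ (k+1)` is `σ 0` weighted by the density `ξ ↦ e^{ξ_k}`. -/
theorem stmt13 (n : ℕ) (hn : 1 ≤ n) (σ : Fin (n + 1) → Measure (Fin n → ℝ))
    (hσ : ∀ i, IsProbabilityMeasure (σ i)) :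
    (∃ (S : Type) (_ : MeasurableSpace S) (μ : Fin (n + 1) → Measure S),
        (∀ i, IsProbabilityMeasure (μ i)) ∧ (∀ i j, μ i ≪ μ j) ∧
        (∀ i, σ i = Measure.map
          (fun s => fun k : Fin n => Real.log (((μ k.succ).rnDeriv (μ 0)) s).toReal)
          (μ i)))
    ↔ ((∀ i j, σ i ≪ σ j) ∧
        (∀ k : Fin n, σ k.succ =
          (σ 0).withDensity fun ξ => ENNReal.ofReal (Real.exp (ξ k)))) := by
  constructor
  · rintro ⟨S, mS, μ, hprob, hac, hmap⟩
    have hLmeas : Measurable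
        (fun s => fun k : Fin n => Real.log (((μ k.succ).rnDeriv (μ 0)) s).toReal) := by
      apply measurable_pi_lambda
      intro k
      exact Real.measurable_log.comp ((μ k.succ).measurable_rnDeriv (μ 0)).ennreal_toReal
    constructor
    · intro i j
      rw [hmap i, hmap j]
      exact (hac i j).map hLmeas
    · intro k
      set L := fun s => fun k : Fin n => Real.log (((μ k.succ).rnDeriv (μ 0)) s).toReal
        with hLdef
      set g : (Fin n → ℝ) → ℝ≥0∞ := fun ξ => ENNReal.ofReal (Real.exp (ξ k)) with hgdef
      have hgmeas : Measurable g := by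
        apply ENNReal.measurable_ofReal.comp
        exact Real.measurable_exp.comp (measurable_pi_apply k)
      have hfin : ∀ᵐ s ∂(μ 0), (μ k.succ).rnDeriv (μ 0) s < ∞ :=
        (μ k.succ).rnDeriv_lt_top (μ 0)
      have hpos : ∀ᵐ s ∂(μ 0), 0 < (μ k.succ).rnDeriv (μ 0) s :=
        ((hac 0 k.succ).ae_le) (Measure.rnDeriv_pos (hac k.succ 0))
      -- the density equals g ∘ L a.e.
      have hae : (μ k.succ).rnDeriv (μ 0) =ᵐ[μ 0] g ∘ L := by
        filter_upwards [hfin, hpos] with s h1 h2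
        have htR : 0 < ((μ k.succ).rnDeriv (μ 0) s).toReal :=
          ENNReal.toReal_pos h2.ne' h1.ne
        simp only [hgdef, hLdef, Function.comp]
        rw [Real.exp_log htR, ENNReal.ofReal_toReal h1.ne]
      have hμk : μ k.succ = (μ 0).withDensity (g ∘ L) := by
        rw [← withDensity_congr_ae hae, Measure.withDensity_rnDeriv_eq _ _ (hac k.succ 0)]
      rw [hmap k.succ, hmap 0, hμk, map_withDensity_comp _ hLmeas hgmeas]
  · rintro ⟨hac, hdens⟩
    have hgmeas : ∀ k : Fin n,
        Measurable (fun ξ : Fin n → ℝ => ENNReal.ofReal (Real.exp (ξ k))) := fun k =>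
      ENNReal.measurable_ofReal.comp (Real.measurable_exp.comp (measurable_pi_apply k))
    refine ⟨Fin n → ℝ, inferInstance, σ, hσ, hac, ?_⟩
    intro i
    -- rnDeriv of σ k.succ w.r.t. σ 0 is the exponential density a.e.
    have hkey : ∀ k : Fin n,
        (σ k.succ).rnDeriv (σ 0) =ᵐ[σ 0] fun ξ => ENNReal.ofReal (Real.exp (ξ k)) := by
      intro k
      rw [hdens k]
      exact Measure.rnDeriv_withDensity _ (hgmeas k)
    have hid : (fun s => fun k : Fin n =>
        Real.log (((σ k.succ).rnDeriv (σ 0)) s).toReal) =ᵐ[σ 0] id := by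
      have : ∀ᵐ s ∂(σ 0), ∀ k : Fin n,
          Real.log (((σ k.succ).rnDeriv (σ 0)) s).toReal = s k := by
        rw [MeasureTheory.ae_all_iff]
        intro k
        filter_upwards [hkey k] with s hs
        rw [hs, ENNReal.toReal_ofReal (Real.exp_pos _).le, Real.log_exp]
      filter_upwards [this] with s hs
      funext k
      exact hs k
    have hid' : (fun s => fun k : Fin n =>
        Real.log (((σ k.succ).rnDeriv (σ 0)) s).toReal) =ᵐ[σ i] id := (hac i 0).ae_le hid
    rw [Measure.map_congr hid', Measure.map_id]
end

section
/- Let n ≥ 1, let I and J be disjoint finite index sets, and let φ_k : ℝⁿ → ℝ for k ∈ I ∪ J. Assume that the family {φ_k : k ∈ I ∪ J} together with the constant function 1 on ℝⁿ is linearly independent in the real vector space of functions ℝⁿ → ℝ, and that the all-ones vector (1,…,1) ∈ ℝ^J belongs to the interior of the set {(φ_k(ξ))_{k∈J} : ξ ∈ ℝⁿ} ⊆ ℝ^J. Then the set C = {(∫ φ_k dσ)_{k∈I} : σ a finitely supported probability measure on ℝⁿ with ∫ φ_j dσ = 1 for all j ∈ J} is a convex subset of ℝ^I with nonempty interior. 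-/
open Finset

/-- Let `φ_k : ℝⁿ → ℝ`, for `k` in the disjoint union of two finite
index sets `I` and `J`, be such that the family `{φ_k} ∪ {1}` is linearly independent
and the all-ones vector lies in the interior of `{(φ_j(ξ))_{j∈J} : ξ ∈ ℝⁿ}`. Then the
set `C` of vectors `(∫ φ_i dσ)_{i∈I}`, where `σ` ranges over finitely supported
probability measures on `ℝⁿ` with `∫ φ_j dσ = 1` for all `j ∈ J`, is a convex subset of
`ℝ^I` with nonempty interior. -/
theorem stmt14 (n : ℕ) (hn : 1 ≤ n) {I J : Type*} [Fintype I] [Fintype J]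
    (φ : I ⊕ J → (Fin n → ℝ) → ℝ)
    (hli : LinearIndependent ℝ
      (Sum.elim φ (fun _ : Unit => (fun _ => 1 : (Fin n → ℝ) → ℝ))))
    (hones : (fun _ : J => (1 : ℝ)) ∈
      interior {v : J → ℝ | ∃ ξ : Fin n → ℝ, ∀ j, v j = φ (Sum.inr j) ξ})
    (C : Set (I → ℝ))
    (hC : C = {c : I → ℝ | ∃ (m : ℕ) (w : Fin m → ℝ) (ξ : Fin m → (Fin n → ℝ)),
      (∀ t, 0 ≤ w t) ∧ (∑ t, w t = 1) ∧
      (∀ j : J, ∑ t, w t * φ (Sum.inr j) (ξ t) = 1) ∧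
      (∀ i : I, c i = ∑ t, w t * φ (Sum.inl i) (ξ t))}) :
    Convex ℝ C ∧ (interior C).Nonempty := by
  classical
  set Φ : (Fin n → ℝ) → (I ⊕ J → ℝ) := fun ξ k => φ k ξ with hΦ
  set K : Set (I ⊕ J → ℝ) := convexHull ℝ (Set.range Φ) with hK
  set S : Set (I ⊕ J → ℝ) := {x | ∀ j, x (Sum.inr j) = 1} with hS
  have hKconv : Convex ℝ K := convex_convexHull ℝ _
  have hSconv : Convex ℝ S := by
    intro x hx y hy a b ha hb hab j
    simp only [Pi.add_apply, Pi.smul_apply, smul_eq_mul, hx j, hy j]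
    linarith
  set πI : (I ⊕ J → ℝ) →ₗ[ℝ] (I → ℝ) := LinearMap.funLeft ℝ ℝ Sum.inl with hπI
  set πJ : (I ⊕ J → ℝ) →ₗ[ℝ] (J → ℝ) := LinearMap.funLeft ℝ ℝ Sum.inr with hπJ
  -- C is the image of K ∩ S under πI
  have hCeq : C = πI '' (K ∩ S) := by
    rw [hC]
    ext c
    constructor
    · rintro ⟨m, w, ξ, hw0, hw1, hJ, hI⟩
      refine ⟨∑ t, w t • Φ (ξ t), ⟨?_, ?_⟩, ?_⟩
      · exact mem_convexHull_of_exists_fintype w (fun t => Φ (ξ t)) hw0 hw1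
          (fun t => Set.mem_range_self _) rfl
      · intro j
        simpa [Φ] using hJ j
      · funext i
        simpa [Φ, πI, LinearMap.funLeft] using (hI i).symm
    · rintro ⟨x, ⟨hxK, hxS⟩, rfl⟩
      rw [hK, mem_convexHull_iff_exists_fintype] at hxK
      obtain ⟨ι, _, w, z, hw0, hw1, hz, hx⟩ := hxK
      choose ζ hζ using hz
      set e := (Fintype.equivFin ι).symm with he
      have key : ∀ k : I ⊕ J, ∑ t, (w ∘ e) t * φ k ((ζ ∘ e) t) = x k := by
        intro k
        rw [Fintype.sum_equiv e (fun t => (w ∘ e) t * φ k ((ζ ∘ e) t))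
          (fun i => w i * φ k (ζ i)) (fun t => rfl)]
        have h2 : ∀ i : ι, w i * φ k (ζ i) = (w i • z i) k := by
          intro i; rw [← hζ i]; simp [Φ]
        rw [Finset.sum_congr rfl fun i _ => h2 i,
          (Finset.sum_apply k Finset.univ fun i => w i • z i).symm, hx]
      refine ⟨Fintype.card ι, w ∘ e, ζ ∘ e, fun t => hw0 _, ?_, ?_, ?_⟩
      · rw [Fintype.sum_equiv e (w ∘ e) w (fun t => rfl)]; exact hw1
      · intro j; rw [key (Sum.inr j)]; exact hxS j
      · intro i; rw [key (Sum.inl i)]; rfl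
  -- the affine span of the range of Φ is everything
  have hspan : affineSpan ℝ (Set.range Φ) = ⊤ := by
    have hne : (Set.range Φ).Nonempty := ⟨Φ 0, Set.mem_range_self _⟩
    rw [AffineSubspace.affineSpan_eq_top_iff_vectorSpan_eq_top_of_nonempty ℝ _ _ hne]
    by_contra hv
    obtain ⟨f, hf0, hfbot⟩ :=
      Submodule.exists_dual_map_eq_bot_of_lt_top (lt_top_iff_ne_top.2 hv) inferInstance
    have hker : ∀ v ∈ vectorSpan ℝ (Set.range Φ), f v = 0 := by
      intro v hv
      have him : f v ∈ Submodule.map f (vectorSpan ℝ (Set.range Φ)) :=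
        Submodule.mem_map_of_mem hv
      rw [hfbot] at him
      simpa using him
    -- f is constant on range Φ
    have hconst : ∀ ξ : Fin n → ℝ, f (Φ ξ) = f (Φ 0) := by
      intro ξ
      have : Φ ξ - Φ 0 ∈ vectorSpan ℝ (Set.range Φ) := by
        have := vsub_mem_vectorSpan ℝ (Set.mem_range_self (f := Φ) ξ)
          (Set.mem_range_self (f := Φ) 0)
        simpa using this
      have := hker _ this
      rw [map_sub, sub_eq_zero] at this
      exact this
    -- expand f in coordinates
    have hexp : ∀ x : I ⊕ J → ℝ, f x = ∑ k, x k * f (Pi.single k 1) := by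
      intro x
      conv_lhs => rw [← Finset.univ_sum_single x]
      rw [map_sum]
      refine Finset.sum_congr rfl fun k _ => ?_
      have : (Pi.single k (x k) : I ⊕ J → ℝ) = x k • (Pi.single k (1 : ℝ) : I ⊕ J → ℝ) := by
        rw [← Pi.single_smul, smul_eq_mul, mul_one]
      rw [this, map_smul, smul_eq_mul]
    set g : (I ⊕ J) ⊕ Unit → ℝ :=
      Sum.elim (fun k => f (Pi.single k 1)) (fun _ => -(f (Φ 0))) with hg
    have hgzero : ∀ k, g k = 0 := by
      rw [Fintype.linearIndependent_iff] at hli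
      apply hli
      funext ξ
      have h1 : (∑ k, g k • Sum.elim φ (fun _ : Unit => (fun _ => 1 : (Fin n → ℝ) → ℝ)) k) ξ
          = ∑ k, g k • Sum.elim φ (fun _ : Unit => (fun _ => 1 : (Fin n → ℝ) → ℝ)) k ξ := by
        simp [Finset.sum_apply]
      rw [h1, Fintype.sum_sum_type]
      have h2 : ∑ k : I ⊕ J, g (Sum.inl k) •
          Sum.elim φ (fun _ : Unit => (fun _ => 1 : (Fin n → ℝ) → ℝ)) (Sum.inl k) ξ
          = f (Φ ξ) := by
        rw [hexp (Φ ξ)]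
        refine Finset.sum_congr rfl fun k _ => ?_
        simp [hg, Φ, smul_eq_mul, mul_comm]
      rw [h2]
      simp [hg, hconst ξ]
    have : f = 0 := by
      apply LinearMap.ext
      intro x
      rw [hexp x]
      simp only [LinearMap.zero_apply]
      refine Finset.sum_eq_zero fun k _ => ?_
      have := hgzero (Sum.inl k)
      simp only [hg, Sum.elim_inl] at this
      rw [this, mul_zero]
    exact hf0 this
  -- K has nonempty interior
  have hKint : (interior K).Nonempty := by
    rw [hKconv.interior_nonempty_iff_affineSpan_eq_top, hK, affineSpan_convexHull]
    exact hspan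
  obtain ⟨p, hp⟩ := hKint
  -- all-ones is in the interior of πJ '' K
  have hones' : (fun _ : J => (1 : ℝ)) ∈ interior (πJ '' K) := by
    apply interior_mono _ hones
    rintro v ⟨ξ, hv⟩
    exact ⟨Φ ξ, subset_convexHull ℝ _ (Set.mem_range_self _),
      by funext j; simp [πJ, LinearMap.funLeft, Φ, (hv j).symm]⟩
  set y : J → ℝ := fun _ => 1 with hy
  set x : J → ℝ := πJ p with hx
  -- find ε > 0 with y + ε • (y - x) ∈ πJ '' K
  have hε : ∃ ε : ℝ, 0 < ε ∧ y + ε • (y - x) ∈ πJ '' K := by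
    have hcont : Filter.Tendsto (fun ε : ℝ => y + ε • (y - x)) (nhdsWithin 0 (Set.Ioi 0))
        (nhds y) := by
      have h0 : Filter.Tendsto (fun ε : ℝ => y + ε • (y - x)) (nhds 0)
          (nhds (y + (0:ℝ) • (y - x))) :=
        ((continuous_const.add ((continuous_id.smul continuous_const))).tendsto 0)
      simp only [zero_smul, add_zero] at h0
      exact h0.mono_left nhdsWithin_le_nhds
    have hmem : interior (πJ '' K) ∈ nhds y := isOpen_interior.mem_nhds hones'
    have hev : ∀ᶠ ε : ℝ in nhdsWithin 0 (Set.Ioi 0),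
        y + ε • (y - x) ∈ interior (πJ '' K) := hcont.eventually_mem hmem
    have hpos : ∀ᶠ ε : ℝ in nhdsWithin 0 (Set.Ioi 0), ε ∈ Set.Ioi (0:ℝ) :=
      eventually_mem_nhdsWithin
    obtain ⟨ε, h1, h2⟩ := (hev.and hpos).exists
    exact ⟨ε, h2, interior_subset h1⟩
  obtain ⟨ε, hεpos, hz'⟩ := hε
  obtain ⟨z, hzK, hzπ⟩ := hz'
  have h1ε : (0:ℝ) < 1 + ε := by linarith
  set a : ℝ := ε / (1 + ε) with ha
  set b : ℝ := 1 / (1 + ε) with hb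
  have hab : a + b = 1 := by rw [ha, hb]; field_simp; ring
  have hapos : 0 < a := div_pos hεpos h1ε
  have hbnn : (0:ℝ) ≤ b := by positivity
  set q : I ⊕ J → ℝ := a • p + b • z with hq
  have hqint : q ∈ interior K :=
    hKconv.combo_interior_self_mem_interior hp hzK hapos hbnn hab
  have hqJ : ∀ j, q (Sum.inr j) = 1 := by
    intro j
    have hz2 : z (Sum.inr j) = 1 + ε * (1 - x j) := by
      have := congrFun hzπ j
      simp only [πJ, LinearMap.funLeft_apply, Pi.add_apply, Pi.smul_apply, smul_eq_mul,
        Pi.sub_apply, hy] at this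
      linarith [this]
    have hp2 : p (Sum.inr j) = x j := rfl
    simp only [hq, Pi.add_apply, Pi.smul_apply, smul_eq_mul, hz2, hp2, ha, hb]
    field_simp
    ring
  -- the open set around πI q inside C
  set emb : (I → ℝ) → (I ⊕ J → ℝ) := fun c => Sum.elim c (fun _ => 1) with hemb
  have hembcont : Continuous emb := by
    apply continuous_pi
    rintro (i | j)
    · exact continuous_apply i
    · exact continuous_const
  have hembq : emb (πI q) = q := by
    funext k
    cases k with
    | inl i => rfl
    | inr j => exact (hqJ j).symm
  have hUC : emb ⁻¹' (interior K) ⊆ C := by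
    intro c hc
    rw [hCeq]
    refine ⟨emb c, ⟨interior_subset hc, fun j => rfl⟩, ?_⟩
    funext i; rfl
  have hUopen : IsOpen (emb ⁻¹' (interior K)) := isOpen_interior.preimage hembcont
  have hqin : πI q ∈ emb ⁻¹' (interior K) := by
    simp only [Set.mem_preimage, hembq]; exact hqint
  constructor
  · rw [hCeq]
    exact (hKconv.inter hSconv).linear_image πI
  · exact ⟨πI q, interior_maximal hUC hUopen hqin⟩
end

section
/- Let n ≥ 1, N ≥ 1, and A = {0,…,N}ⁿ \ {(0,…,0)}. Call a vector (σ₀, σ₁, …, σ_n) of Borel probability measures on ℝⁿ admissible with finite A-moments if, for every i ∈ {1,…,n}, σ_i equals σ₀ weighted by the density ξ ↦ e^{ξ_i}, and for every i ∈ {0,…,n} and every α ∈ A the mixed moment ∫ |ξ^α| dσ_i is finite, where ξ^α = ξ₁^{α₁}⋯ξ_n^{α_n}. Then the set M = {(∫ ξ^α dσ_i(ξ))_{i∈{0,…,n}, α∈A} : (σ_i) admissible with finite A-moments} ⊆ ℝ^{(n+1)·|A|} has nonempty interior. -/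
open MeasureTheory
open scoped ENNReal

open Filter Matrix


private noncomputable def expFac {n : ℕ} (i : Fin (n + 1)) (ξ : Fin n → ℝ) : ℝ :=
  Fin.cases 1 (fun j => Real.exp (ξ j)) i

@[simp] private lemma expFac_zero {n : ℕ} (ξ : Fin n → ℝ) : expFac 0 ξ = 1 := rfl
@[simp] private lemma expFac_succ {n : ℕ} (j : Fin n) (ξ : Fin n → ℝ) :
    expFac j.succ ξ = Real.exp (ξ j) := by simp [expFac]

@[simp] private lemma expFac_one {n : ℕ} (ξ : Fin (n + 1) → ℝ) :
    expFac 1 ξ = Real.exp (ξ 0) := by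
  rw [← Fin.succ_zero_eq_one]; exact expFac_succ 0 ξ

private lemma expFac_pos {n : ℕ} (i : Fin (n + 1)) (ξ : Fin n → ℝ) : 0 < expFac i ξ := by
  refine Fin.cases ?_ (fun j => ?_) i
  · rw [expFac_zero]; norm_num
  · rw [expFac_succ]; exact Real.exp_pos _

private noncomputable def Ffam {n N : ℕ} (p : Fin (n + 1) × (Fin n → Fin (N + 1)))
    (ξ : Fin n → ℝ) : ℝ :=
  (∏ t, ξ t ^ (p.2 t : ℕ)) * expFac p.1 ξ

private lemma sum_split {m N : ℕ} (g : (Fin (m + 1) → Fin (N + 1)) → ℝ) :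
    ∑ β, g β = ∑ k : Fin (N + 1), ∑ β' : Fin m → Fin (N + 1), g (Fin.cons k β') := by
  calc ∑ β, g β = ∑ p : Fin (N + 1) × (Fin m → Fin (N + 1)), g (Fin.cons p.1 p.2) :=
        (Fintype.sum_equiv (Fin.consEquiv fun _ => Fin (N + 1)) _ _ fun p => rfl).symm
    _ = _ := by rw [Fintype.sum_prod_type]

private lemma prod_cons_pow {m N : ℕ} (s : ℝ) (ζ : Fin m → ℝ) (k : Fin (N + 1))
    (β' : Fin m → Fin (N + 1)) :
    (∏ t, (Fin.cons s ζ : Fin (m + 1) → ℝ) t ^ ((Fin.cons k β' : Fin (m+1) → Fin (N+1)) t : ℕ))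
      = s ^ (k : ℕ) * ∏ t, ζ t ^ (β' t : ℕ) := by
  rw [Fin.prod_univ_succ]
  simp
private lemma polyZero (Q : Polynomial ℝ) (h : Tendsto (fun s => Q.eval s) atTop (nhds 0)) :
    Q = 0 := by
  by_contra hQ
  rcases lt_or_ge 0 Q.degree with hd | hd
  · exact not_tendsto_nhds_of_tendsto_atTop (Polynomial.abs_tendsto_atTop Q hd) 0 (by simpa using h.abs)
  · obtain ⟨c, rfl⟩ : ∃ c, Q = Polynomial.C c := ⟨Q.coeff 0, (Polynomial.eq_C_of_degree_le_zero hd)⟩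
    have : c = 0 := tendsto_nhds_unique (by simpa using (tendsto_const_nhds : Tendsto (fun _ : ℝ => c) atTop _)) h
    simp [this] at hQ

private lemma oneD {N : ℕ} (a b : Fin (N + 1) → ℝ)
    (h : ∀ s : ℝ, (∑ k, a k * s ^ (k : ℕ)) + (∑ k, b k * s ^ (k : ℕ)) * Real.exp s = 0) :
    (∀ k, a k = 0) ∧ (∀ k, b k = 0) := by
  set P : Polynomial ℝ := ∑ k : Fin (N + 1), Polynomial.C (a k) * Polynomial.X ^ (k : ℕ) with hP
  set Q : Polynomial ℝ := ∑ k : Fin (N + 1), Polynomial.C (b k) * Polynomial.X ^ (k : ℕ) with hQ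
  have hPe : ∀ s, P.eval s = ∑ k, a k * s ^ (k : ℕ) := by
    intro s; simp [hP, Polynomial.eval_finset_sum]
  have hQe : ∀ s, Q.eval s = ∑ k, b k * s ^ (k : ℕ) := by
    intro s; simp [hQ, Polynomial.eval_finset_sum]
  have hQ0 : Q = 0 := by
    apply polyZero
    have key : ∀ s : ℝ, Q.eval s = -(P.eval s * Real.exp (-s)) := by
      intro s
      have hs := h s
      have hexp : Real.exp s ≠ 0 := (Real.exp_pos s).ne'
      rw [hPe, hQe]
      field_simp [Real.exp_neg]
      have he : Real.exp s * Real.exp (-s) = 1 := by rw [← Real.exp_add]; simp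
      linear_combination Real.exp (-s) * hs - (∑ k, b k * s ^ (k : ℕ)) * he
    have : Tendsto (fun s => P.eval s * Real.exp (-s)) atTop (nhds 0) := by
      have : ∀ s : ℝ, P.eval s * Real.exp (-s) = ∑ k : Fin (N + 1), a k * (s ^ (k : ℕ) * Real.exp (-s)) := by
        intro s; rw [hPe, Finset.sum_mul]; congr 1; ext k; ring
      rw [funext this]
      have := fun k : Fin (N + 1) =>
        (Real.tendsto_pow_mul_exp_neg_atTop_nhds_zero (k : ℕ)).const_mul (a k)
      simpa using tendsto_finset_sum Finset.univ fun k _ => this k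
    simpa [funext key] using this.neg
  have hP0 : P = 0 := by
    apply Polynomial.funext
    intro s
    have hs := h s
    have : Q.eval s = 0 := by rw [hQ0]; simp
    rw [hQe] at this
    rw [hPe]; simp only [Polynomial.eval_zero]
    rw [this, zero_mul, add_zero] at hs
    exact hs
  have coeffP : ∀ k : Fin (N + 1), P.coeff (k : ℕ) = a k := by
    intro k
    rw [hP, Polynomial.finset_sum_coeff]
    rw [Finset.sum_eq_single k]
    · simp
    · intro j _ hj
      simp [Polynomial.coeff_C_mul, Polynomial.coeff_X_pow]
      intro hc
      exact absurd (Fin.ext hc.symm) hj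
    · simp
  have coeffQ : ∀ k : Fin (N + 1), Q.coeff (k : ℕ) = b k := by
    intro k
    rw [hQ, Polynomial.finset_sum_coeff]
    rw [Finset.sum_eq_single k]
    · simp
    · intro j _ hj
      simp [Polynomial.coeff_C_mul, Polynomial.coeff_X_pow]
      intro hc
      exact absurd (Fin.ext hc.symm) hj
    · simp
  constructor
  · intro k; rw [← coeffP k, hP0]; simp
  · intro k; rw [← coeffQ k, hQ0]; simp

private lemma indep : ∀ (n : ℕ) {N : ℕ} (c : Fin (n + 1) × (Fin n → Fin (N + 1)) → ℝ),
    (∀ ξ : Fin n → ℝ, ∑ p, c p * Ffam p ξ = 0) → c = 0 := by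
  intro n
  induction n with
  | zero =>
    intro N c h
    funext p
    have h0 := h 0
    have hp : p = (0, Fin.elim0) := by
      obtain ⟨i, β⟩ := p
      congr 1
      · exact Fin.ext (by omega)
      · exact funext fun t => t.elim0
    have : ∑ q : Fin 1 × (Fin 0 → Fin (N + 1)), c q * Ffam q 0 = c (0, Fin.elim0) * 1 := by
      rw [Fintype.sum_eq_single ((0 : Fin 1), (Fin.elim0 : Fin 0 → Fin (N + 1)))]
      · simp [Ffam]
      · intro q hq
        exact absurd (by
          obtain ⟨i, β⟩ := q
          congr 1
          · exact Fin.ext (by omega)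
          · exact funext fun t => t.elim0) hq
    rw [this] at h0
    simpa [hp] using h0
  | succ n IH =>
    intro N c h
    set A : Fin (N + 1) → (Fin n → ℝ) → ℝ := fun k ζ =>
      ∑ β' : Fin n → Fin (N + 1), c (0, Fin.cons k β') * ∏ t, ζ t ^ (β' t : ℕ) with hA
    set B : Fin (N + 1) → (Fin n → ℝ) → ℝ := fun k ζ =>
      ∑ j : Fin n, ∑ β' : Fin n → Fin (N + 1),
        c (j.succ.succ, Fin.cons k β') * (∏ t, ζ t ^ (β' t : ℕ)) * Real.exp (ζ j) with hB
    set b : Fin (N + 1) → (Fin n → ℝ) → ℝ := fun k ζ =>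
      ∑ β' : Fin n → Fin (N + 1), c (1, Fin.cons k β') * ∏ t, ζ t ^ (β' t : ℕ) with hb
    have key : ∀ (ζ : Fin n → ℝ) (k : Fin (N + 1)), (A k ζ + B k ζ = 0) ∧ b k ζ = 0 := by
      intro ζ
      have h1 : ∀ s : ℝ,
          (∑ k, (A k ζ + B k ζ) * s ^ (k : ℕ)) + (∑ k, b k ζ * s ^ (k : ℕ)) * Real.exp s = 0 := by
        intro s
        have h2 := h (Fin.cons s ζ)
        rw [Fintype.sum_prod_type] at h2
        rw [Fin.sum_univ_succ] at h2
        rw [Fin.sum_univ_succ] at h2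
        rw [sum_split (fun β => c (0, β) * Ffam (0, β) (Fin.cons s ζ))] at h2
        rw [sum_split (fun β => c ((0 : Fin (n + 1)).succ, β) *
          Ffam ((0 : Fin (n + 1)).succ, β) (Fin.cons s ζ))] at h2
        conv at h2 => enter [1, 2, 2, 2, j]; rw [sum_split (fun β => c (j.succ.succ, β) *
          Ffam (j.succ.succ, β) (Fin.cons s ζ))]
        have E0 : ∑ k : Fin (N + 1), ∑ β' : Fin n → Fin (N + 1),
            c (0, Fin.cons k β') * Ffam (0, Fin.cons k β') (Fin.cons s ζ)
            = ∑ k, A k ζ * s ^ (k : ℕ) := by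
          rw [hA]; apply Finset.sum_congr rfl; intro k _
          rw [Finset.sum_mul]; apply Finset.sum_congr rfl; intro β' _
          simp only [Ffam, prod_cons_pow, expFac_zero]; ring
        have E1 : ∑ k : Fin (N + 1), ∑ β' : Fin n → Fin (N + 1),
            c ((0 : Fin (n + 1)).succ, Fin.cons k β') *
              Ffam ((0 : Fin (n + 1)).succ, Fin.cons k β') (Fin.cons s ζ)
            = (∑ k, b k ζ * s ^ (k : ℕ)) * Real.exp s := by
          rw [hb, Finset.sum_mul]; apply Finset.sum_congr rfl; intro k _
          rw [Finset.sum_mul, Finset.sum_mul]; apply Finset.sum_congr rfl; intro β' _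
          simp only [Ffam, prod_cons_pow, expFac_succ, expFac_one, Fin.cons_zero, Fin.succ_zero_eq_one]; ring
        have E2 : ∑ j : Fin n, ∑ k : Fin (N + 1), ∑ β' : Fin n → Fin (N + 1),
            c (j.succ.succ, Fin.cons k β') *
              Ffam (j.succ.succ, Fin.cons k β') (Fin.cons s ζ)
            = ∑ k, B k ζ * s ^ (k : ℕ) := by
          rw [hB, Finset.sum_comm]; apply Finset.sum_congr rfl; intro k _
          rw [Finset.sum_mul]; apply Finset.sum_congr rfl; intro j _
          rw [Finset.sum_mul]; apply Finset.sum_congr rfl; intro β' _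
          simp only [Ffam, prod_cons_pow, expFac_succ, Fin.cons_succ]; ring
        rw [E0, E1, E2] at h2
        have expand : ∑ k : Fin (N + 1), (A k ζ + B k ζ) * s ^ (k : ℕ)
            = ∑ k, A k ζ * s ^ (k : ℕ) + ∑ k, B k ζ * s ^ (k : ℕ) := by
          rw [← Finset.sum_add_distrib]; apply Finset.sum_congr rfl; intro k _; ring
        rw [expand]; linarith [h2]
      intro k
      exact ⟨(oneD (fun k => A k ζ + B k ζ) (fun k => b k ζ) h1).1 k,
             (oneD (fun k => A k ζ + B k ζ) (fun k => b k ζ) h1).2 k⟩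
    have hb0 : ∀ (k : Fin (N + 1)) (β' : Fin n → Fin (N + 1)), c (1, Fin.cons k β') = 0 := by
      intro k β'
      have hIH := IH (fun p => if p.1 = 0 then c (1, Fin.cons k p.2) else 0) ?_
      · simpa using congrFun hIH (0, β')
      · intro ζ
        have hbk := (key ζ k).2
        rw [hb] at hbk
        rw [Fintype.sum_prod_type, Fin.sum_univ_succ]
        have : ∀ j : Fin n, ∑ β'' : Fin n → Fin (N + 1),
            (if (j.succ : Fin (n+1)) = 0 then c (1, Fin.cons k β'') else 0) * Ffam (j.succ, β'') ζ = 0 := by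
          intro j
          apply Finset.sum_eq_zero; intro β'' _
          rw [if_neg (Fin.succ_ne_zero j)]; ring
        rw [Finset.sum_eq_zero fun j _ => this j, add_zero]
        calc ∑ β'' : Fin n → Fin (N + 1),
              (if (0 : Fin (n+1)) = 0 then c (1, Fin.cons k β'') else 0) * Ffam (0, β'') ζ
            = ∑ β'' : Fin n → Fin (N + 1), c (1, Fin.cons k β'') * ∏ t, ζ t ^ (β'' t : ℕ) := by
              apply Finset.sum_congr rfl; intro β'' _
              rw [if_pos rfl]; simp only [Ffam, expFac_zero]; ring
          _ = 0 := hbk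
    have ha0 : ∀ (k : Fin (N + 1)) (β' : Fin n → Fin (N + 1)),
        c (0, Fin.cons k β') = 0 ∧ ∀ j : Fin n, c (j.succ.succ, Fin.cons k β') = 0 := by
      intro k β'
      have hIH := IH (fun p => Fin.cases (motive := fun _ => ℝ) (c (0, Fin.cons k p.2))
        (fun j => c (j.succ.succ, Fin.cons k p.2)) p.1) ?_
      · constructor
        · simpa using congrFun hIH (0, β')
        · intro j; simpa using congrFun hIH (j.succ, β')
      · intro ζ
        have hak := (key ζ k).1
        rw [hA, hB] at hak
        rw [Fintype.sum_prod_type, Fin.sum_univ_succ]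
        have e1 : ∑ β'' : Fin n → Fin (N + 1),
            (Fin.cases (motive := fun _ => ℝ) (c (0, Fin.cons k β''))
              (fun j => c (j.succ.succ, Fin.cons k β'')) (0 : Fin (n + 1))) * Ffam (0, β'') ζ
            = ∑ β'' : Fin n → Fin (N + 1), c (0, Fin.cons k β'') * ∏ t, ζ t ^ (β'' t : ℕ) := by
          apply Finset.sum_congr rfl; intro β'' _
          simp only [Fin.cases_zero, Ffam, expFac_zero]; ring
        have e2 : ∀ j : Fin n, ∑ β'' : Fin n → Fin (N + 1),
            (Fin.cases (motive := fun _ => ℝ) (c (0, Fin.cons k β''))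
              (fun j' => c (j'.succ.succ, Fin.cons k β'')) (j.succ : Fin (n + 1))) * Ffam (j.succ, β'') ζ
            = ∑ β'' : Fin n → Fin (N + 1),
              c (j.succ.succ, Fin.cons k β'') * (∏ t, ζ t ^ (β'' t : ℕ)) * Real.exp (ζ j) := by
          intro j
          apply Finset.sum_congr rfl; intro β'' _
          simp only [Fin.cases_succ, Ffam, expFac_succ]; ring
        rw [e1]
        rw [Finset.sum_congr rfl fun j _ => e2 j]
        exact hak
    funext p
    obtain ⟨i, β⟩ := p
    have hβ : β = Fin.cons (β 0) (Fin.tail β) := (Fin.cons_self_tail β).symm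
    rw [Pi.zero_apply]
    refine Fin.cases ?_ (fun i' => ?_) i
    · rw [hβ]; exact (ha0 _ _).1
    · refine Fin.cases ?_ (fun j => ?_) i'
      · rw [Fin.succ_zero_eq_one, hβ]; exact hb0 _ _
      · rw [hβ]; exact (ha0 _ _).2 j


private def Kx {ι X : Type*} [Fintype ι] (g : ι → X → ℝ) {m : ℕ} (x : Fin m → X) :
    Submodule ℝ (ι → ℝ) where
  carrier := {c | ∀ j, ∑ i, c i * g i (x j) = 0}
  add_mem' := by
    intro c d hc hd j
    simp only [Pi.add_apply, add_mul, Finset.sum_add_distrib]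
    rw [hc j, hd j, add_zero]
  zero_mem' := by intro j; simp
  smul_mem' := by
    intro r c hc j
    simp only [Pi.smul_apply, smul_eq_mul, mul_assoc, ← Finset.mul_sum]
    rw [hc j, mul_zero]

private lemma mem_Kx {ι X : Type*} [Fintype ι] (g : ι → X → ℝ) {m : ℕ} {x : Fin m → X}
    {c : ι → ℝ} : c ∈ Kx g x ↔ ∀ j, ∑ i, c i * g i (x j) = 0 := Iff.rfl

private lemma exists_points {ι X : Type*} [Fintype ι] (g : ι → X → ℝ)
    (hg : ∀ c : ι → ℝ, (∀ x : X, ∑ i, c i * g i x = 0) → c = 0) :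
    ∃ (m : ℕ) (x : Fin m → X),
      Function.Surjective (fun (q : Fin m → ℝ) => fun i : ι => ∑ j, q j * g i (x j)) := by
  classical
  -- Step 1: find points giving an injective restriction
  have step1 : ∃ (m : ℕ) (x : Fin m → X), Kx g x = ⊥ := by
    have main : ∀ (d m : ℕ) (x : Fin m → X), Module.finrank ℝ (Kx g x) ≤ d →
        ∃ (m' : ℕ) (x' : Fin m' → X), Kx g x' = ⊥ := by
      intro d
      induction d with
      | zero =>
        intro m x hd
        refine ⟨m, x, ?_⟩
        have : Module.finrank ℝ (Kx g x) = 0 := le_antisymm hd (Nat.zero_le _)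
        exact Submodule.finrank_eq_zero.mp this
      | succ d IH =>
        intro m x hd
        by_cases hbot : Kx g x = ⊥
        · exact ⟨m, x, hbot⟩
        · obtain ⟨c, hc, hc0⟩ := Submodule.exists_mem_ne_zero_of_ne_bot hbot
          have : ¬ ∀ y : X, ∑ i, c i * g i y = 0 := fun hall => hc0 (hg c hall)
          push_neg at this
          obtain ⟨x₀, hx₀⟩ := this
          refine IH (m + 1) (Fin.cons x₀ x) ?_
          have hlt : Kx g (Fin.cons x₀ x) < Kx g x := by
            constructor
            · intro c' hc' j
              have := (mem_Kx g).mp hc' j.succ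
              simpa [Fin.cons_succ] using this
            · intro hle
              have := (mem_Kx g).mp (hle hc) 0
              rw [Fin.cons_zero] at this
              exact hx₀ this
          have := Submodule.finrank_lt_finrank_of_lt hlt
          omega
    exact main (Module.finrank ℝ (Kx g (fun j : Fin 0 => j.elim0))) 0 _ le_rfl
  obtain ⟨m, x, hbot⟩ := step1
  refine ⟨m, x, ?_⟩
  -- Step 2: surjectivity of the transpose
  set Amat : Matrix (Fin m) ι ℝ := Matrix.of fun j i => g i (x j) with hAmat
  have hinj : Function.Injective Amat.mulVecLin := by
    rw [← LinearMap.ker_eq_bot]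
    rw [eq_bot_iff]
    intro c hc
    simp only [LinearMap.mem_ker] at hc
    have : c ∈ Kx g x := by
      intro j
      have := congrFun hc j
      simpa [Matrix.mulVecLin_apply, Matrix.mulVec, dotProduct, hAmat, mul_comm] using this
    rw [hbot] at this
    simpa using this
  have hrank : Amat.rank = Fintype.card ι := by
    have : Amat.rank = Module.finrank ℝ (LinearMap.range Amat.mulVecLin) := rfl
    rw [this, LinearMap.finrank_range_of_inj hinj, Module.finrank_fintype_fun_eq_card]
  have hrankT : Amatᵀ.rank = Fintype.card ι := by rw [Matrix.rank_transpose, hrank]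
  have hrange : LinearMap.range Amatᵀ.mulVecLin = ⊤ := by
    apply Submodule.eq_top_of_finrank_eq
    rw [← Matrix.rank, hrankT, Module.finrank_fintype_fun_eq_card]
  have hsurj : Function.Surjective Amatᵀ.mulVecLin := LinearMap.range_eq_top.mp hrange
  intro v
  obtain ⟨q, hq⟩ := hsurj v
  refine ⟨q, ?_⟩
  funext i
  have := congrFun hq i
  simpa [Matrix.mulVecLin_apply, Matrix.mulVec, Matrix.vecMul, Matrix.transpose_apply,
    dotProduct, hAmat, mul_comm] using this


variable {X : Type*} [MeasurableSpace X] [MeasurableSingletonClass X]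

private lemma withDensity_dirac' (a : X) {f : X → ℝ≥0∞} (hf : Measurable f) :
    (Measure.dirac a).withDensity f = f a • Measure.dirac a := by
  classical
  ext s hs
  rw [withDensity_apply _ hs, setLIntegral_dirac' hf hs, Measure.smul_apply,
    Measure.dirac_apply' _ hs]
  by_cases h : a ∈ s <;> simp [h, Set.indicator]

private lemma withDensity_zero_measure {f : X → ℝ≥0∞} :
    (0 : Measure X).withDensity f = 0 := by
  ext s hs
  rw [withDensity_apply _ hs]
  simp

private lemma atomic_withDensity {J : Type*} [Fintype J] (w : J → ℝ≥0∞) (x : J → X)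
    {f : X → ℝ≥0∞} (hf : Measurable f) :
    (∑ j : J, w j • Measure.dirac (x j)).withDensity f
      = ∑ j : J, (w j * f (x j)) • Measure.dirac (x j) := by
  classical
  induction (Finset.univ : Finset J) using Finset.induction_on with
  | empty => simp [withDensity_zero_measure]
  | insert _ _ hnot ih =>
    rw [Finset.sum_insert hnot, Finset.sum_insert hnot, withDensity_add_measure,
      withDensity_smul_measure, withDensity_dirac' _ hf, ih, smul_smul]

private lemma atomic_univ {J : Type*} [Fintype J] (w : J → ℝ≥0∞) (x : J → X) :
    (∑ j : J, w j • Measure.dirac (x j)) Set.univ = ∑ j : J, w j := by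
  rw [Measure.finset_sum_apply]
  simp

private lemma atomic_integrable {J : Type*} [Fintype J] {w : J → ℝ≥0∞} (x : J → X)
    (hw : ∀ j, w j ≠ ⊤) {f : X → ℝ} (hf : StronglyMeasurable f) :
    Integrable f (∑ j : J, w j • Measure.dirac (x j)) := by
  rw [integrable_finset_sum_measure]
  intro j _
  refine Integrable.smul_measure ?_ (hw j)
  refine ⟨hf.aestronglyMeasurable, ?_⟩
  rw [HasFiniteIntegral]
  rw [lintegral_dirac' _ (hf.measurable.enorm)]
  exact enorm_lt_top

private lemma atomic_integral {J : Type*} [Fintype J] {w : J → ℝ≥0∞} (x : J → X)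
    (hw : ∀ j, w j ≠ ⊤) {f : X → ℝ} (hf : StronglyMeasurable f) :
    ∫ ξ, f ξ ∂(∑ j : J, w j • Measure.dirac (x j)) = ∑ j : J, (w j).toReal * f (x j) := by
  rw [integral_finset_sum_measure (fun j _ => by
    refine Integrable.smul_measure ?_ (hw j)
    refine ⟨hf.aestronglyMeasurable, ?_⟩
    rw [HasFiniteIntegral, lintegral_dirac' _ (hf.measurable.enorm)]
    exact enorm_lt_top)]
  refine Finset.sum_congr rfl fun j _ => ?_
  rw [integral_smul_measure, integral_dirac' _ _ hf, smul_eq_mul]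

/-- Let `A = {0,…,N}ⁿ \ {0}` with `n, N ≥ 1`. The set of vectors of
mixed moments `(∫ ξ^α dσ_i)_{i ∈ {0,…,n}, α ∈ A}` of admissible vectors of probability
measures on `ℝⁿ` (i.e. `σ_i = σ₀` weighted by the density `e^{ξ_i}` for `i ≥ 1`) with
all `A`-moments finite has nonempty interior in `ℝ^{(n+1)·|A|}`. -/
theorem stmt15 (n N : ℕ) (hn : 1 ≤ n) (hN : 1 ≤ N)
    (A : Set (Fin n → ℕ)) (hA : A = {α : Fin n → ℕ | (∀ t, α t ≤ N) ∧ α ≠ 0})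
    (M : Set (Fin (n + 1) × A → ℝ))
    (hM : M = {v : Fin (n + 1) × A → ℝ |
      ∃ σ : Fin (n + 1) → Measure (Fin n → ℝ),
        (∀ i, IsProbabilityMeasure (σ i)) ∧
        (∀ i : Fin n, σ i.succ =
          (σ 0).withDensity fun ξ => ENNReal.ofReal (Real.exp (ξ i))) ∧
        (∀ (i : Fin (n + 1)) (α : A), Integrable (fun ξ => ∏ t, ξ t ^ (α : Fin n → ℕ) t) (σ i)) ∧
        (∀ (i : Fin (n + 1)) (α : A),
          v (i, α) = ∫ ξ, ∏ t, ξ t ^ (α : Fin n → ℕ) t ∂(σ i))}) :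
    (interior M).Nonempty := by
  classical
  subst hM
  -- linear independence gives evaluation points with surjective moment map
  obtain ⟨m, y, hsurj⟩ := exists_points (Ffam (n := n) (N := N)) (fun c hc => indep n c hc)
  set Φ : (Fin m → ℝ) →ₗ[ℝ] ((Fin (n + 1) × (Fin n → Fin (N + 1))) → ℝ) :=
    { toFun := fun q k => ∑ j, q j * Ffam k (y j)
      map_add' := by
        intro q r; funext k
        simp only [Pi.add_apply, add_mul, Finset.sum_add_distrib]
      map_smul' := by
        intro r q; funext k
        simp only [Pi.smul_apply, smul_eq_mul, RingHom.id_apply, Finset.mul_sum, mul_assoc] } with hΦ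
  have hΦsurj : Function.Surjective Φ := hsurj
  obtain ⟨sec, hsec⟩ := Φ.exists_rightInverse_of_surjective (LinearMap.range_eq_top.2 hΦsurj)
  have hΦsec : ∀ v, Φ (sec v) = v := by
    intro v
    have := LinearMap.ext_iff.mp hsec v
    simpa using this
  -- finiteness of A
  have hAfin : Finite ↥A := by
    rw [hA]
    refine Finite.of_injective (fun α : ↥{α : Fin n → ℕ | (∀ t, α t ≤ N) ∧ α ≠ 0} =>
      (fun t => (⟨(α : Fin n → ℕ) t, by have := α.2.1 t; omega⟩ : Fin (N + 1)))) ?_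
    intro α β hEq
    apply Subtype.ext; funext t
    simpa using congrFun hEq t
  -- the encoding of a multi-index in A
  have hAle : ∀ (α : ↥A) (t : Fin n), (α : Fin n → ℕ) t < N + 1 := by
    intro α t
    have h2 := (Set.ext_iff.mp hA _).mp α.2
    have := h2.1 t; omega
  set enc : ↥A → (Fin n → Fin (N + 1)) := fun α t => ⟨(α : Fin n → ℕ) t, hAle α t⟩ with henc
  -- base weights
  set Sval : ℝ := 1 + ∑ j, (1 + ∑ t : Fin n, Real.exp (y j t)) with hSval
  have hSnn : (0:ℝ) ≤ ∑ j, (1 + ∑ t : Fin n, Real.exp (y j t)) :=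
    Finset.sum_nonneg fun j _ => by positivity
  have hSpos : 0 < Sval := by rw [hSval]; linarith
  have hSbound : ∀ i : Fin (n + 1), ∑ j, expFac i (y j) ≤ Sval - 1 := by
    intro i
    have h1 : ∑ j, expFac i (y j) ≤ ∑ j, (1 + ∑ t : Fin n, Real.exp (y j t)) := by
      apply Finset.sum_le_sum
      intro j _
      refine Fin.cases ?_ (fun t => ?_) i
      · rw [expFac_zero]
        have : (0:ℝ) ≤ ∑ t : Fin n, Real.exp (y j t) :=
          Finset.sum_nonneg fun t _ => (Real.exp_pos _).le
        linarith
      · rw [expFac_succ]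
        have : Real.exp (y j t) ≤ ∑ t', Real.exp (y j t') :=
          Finset.single_le_sum (fun t' _ => (Real.exp_pos _).le) (Finset.mem_univ t)
        linarith
    rw [hSval]; linarith
  set ε : ℝ := (2 * Sval)⁻¹ with hε
  have hεpos : 0 < ε := by rw [hε]; positivity
  set a : Fin (n + 1) → ℝ := fun i => 1 - ∑ j, ε * expFac i (y j) with haDef
  have ha2 : ∀ i, 1 / 2 ≤ a i := by
    intro i
    have h0 : 0 ≤ ∑ j, expFac i (y j) := Finset.sum_nonneg fun j _ => (expFac_pos _ _).le
    have h1 := hSbound i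
    have h2 : ε * ∑ j, expFac i (y j) ≤ ε * Sval := by
      apply mul_le_mul_of_nonneg_left _ hεpos.le
      linarith
    have h3 : ε * Sval = 1 / 2 := by
      rw [hε]; field_simp
    have h4 : ∑ j, ε * expFac i (y j) = ε * ∑ j, expFac i (y j) := by
      rw [Finset.mul_sum]
    have h5 : ε * ∑ j, expFac i (y j) ≤ 1 / 2 := by rw [← h3]; exact h2
    rw [haDef]; dsimp only
    rw [h4]; linarith
  have hapos : ∀ i, 0 < a i := fun i => lt_of_lt_of_le (by norm_num) (ha2 i)
  set z : Fin n → ℝ := fun t => Real.log (a t.succ / a 0) with hz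
  have hexpz : ∀ t, Real.exp (z t) = a t.succ / a 0 := fun t =>
    Real.exp_log (div_pos (hapos _) (hapos 0))
  have base : ∀ i : Fin (n + 1), (∑ j, ε * expFac i (y j)) + a 0 * expFac i z = 1 := by
    intro i
    refine Fin.cases ?_ (fun t => ?_) i
    · rw [expFac_zero, mul_one]
      have h : a 0 = 1 - ∑ j, ε * expFac 0 (y j) := rfl
      linarith
    · rw [expFac_succ, hexpz t]
      have h : a t.succ = 1 - ∑ j, ε * expFac t.succ (y j) := rfl
      have h2 : a 0 * (a t.succ / a 0) = a t.succ := by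
        rw [mul_comm, div_mul_cancel₀ _ (hapos 0).ne']
      rw [h2]; linarith
  -- bound constants for the section
  set ind : (Fin (n + 1) × (Fin n → Fin (N + 1))) → ((Fin (n + 1) × (Fin n → Fin (N + 1))) → ℝ) := fun k k' => if k = k' then 1 else 0 with hind
  set C : ℝ := 1 + ∑ j, ∑ k, |sec (ind k) j| with hC
  have hCsum_nonneg : (0:ℝ) ≤ ∑ j, ∑ k, |sec (ind k) j| :=
    Finset.sum_nonneg fun j _ => Finset.sum_nonneg fun k _ => abs_nonneg _
  have hC1 : ∀ j, ∑ k, |sec (ind k) j| ≤ C - 1 := by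
    intro j
    rw [hC]
    have := Finset.single_le_sum
      (f := fun j => ∑ k, |sec (ind k) j|)
      (fun j' _ => Finset.sum_nonneg fun k _ => abs_nonneg _) (Finset.mem_univ j)
    linarith
  have hCpos : 0 < C := by rw [hC]; linarith
  set δ : ℝ := ε / C with hδ
  have hδpos : 0 < δ := div_pos hεpos hCpos
  have hsec_bound : ∀ (v : (Fin (n + 1) × (Fin n → Fin (N + 1))) → ℝ), (∀ k, |v k| ≤ δ) → ∀ j, |sec v j| ≤ ε := by
    intro v hv j
    have hexpand : sec v = ∑ k, v k • sec (ind k) := LinearMap.pi_apply_eq_sum_univ sec v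
    calc |sec v j| = |∑ k, v k * sec (ind k) j| := by
          rw [hexpand]; simp [Finset.sum_apply]
      _ ≤ ∑ k, |v k * sec (ind k) j| := Finset.abs_sum_le_sum_abs _ _
      _ ≤ ∑ k, δ * |sec (ind k) j| := by
          apply Finset.sum_le_sum; intro k _
          rw [abs_mul]
          exact mul_le_mul_of_nonneg_right (hv k) (abs_nonneg _)
      _ = δ * ∑ k, |sec (ind k) j| := by rw [Finset.mul_sum]
      _ ≤ δ * C := by
          apply mul_le_mul_of_nonneg_left _ hδpos.le
          linarith [hC1 j]
      _ = ε := by rw [hδ]; field_simp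
  -- the center of the ball
  set fMom : (Fin n → ℕ) → (Fin n → ℝ) → ℝ := fun α ξ => ∏ t, ξ t ^ α t with hfMom
  set v₀ : Fin (n + 1) × ↥A → ℝ := fun p =>
    (∑ j, ε * expFac p.1 (y j) * fMom (p.2 : Fin n → ℕ) (y j))
      + a 0 * expFac p.1 z * fMom (p.2 : Fin n → ℕ) z with hv₀
  have hsm : ∀ (α : Fin n → ℕ), StronglyMeasurable (fun ξ : Fin n → ℝ => ∏ t, ξ t ^ α t) := by
    intro α
    apply Continuous.stronglyMeasurable
    exact continuous_finset_prod _ fun t _ => (continuous_apply t).pow _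
  -- the open neighborhood
  have hOopen : IsOpen {w : Fin (n + 1) × ↥A → ℝ | ∀ p, |w p - v₀ p| < δ} := by
    have : {w : Fin (n + 1) × ↥A → ℝ | ∀ p, |w p - v₀ p| < δ}
        = ⋂ p, {w : Fin (n + 1) × ↥A → ℝ | |w p - v₀ p| < δ} := by
      ext w; simp [Set.mem_iInter]
    rw [this]
    haveI : Finite ↥A := hAfin
    apply isOpen_iInter_of_finite
    intro p
    have hcont : Continuous fun w : Fin (n + 1) × ↥A → ℝ => |w p - v₀ p| :=
      ((continuous_apply p).sub continuous_const).abs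
    exact isOpen_lt hcont continuous_const
  have hv₀mem : v₀ ∈ {w : Fin (n + 1) × ↥A → ℝ | ∀ p, |w p - v₀ p| < δ} := by
    intro p; simpa using hδpos
  -- main inclusion
  have hOsub : {w : Fin (n + 1) × ↥A → ℝ | ∀ p, |w p - v₀ p| < δ} ⊆
      {v : Fin (n + 1) × ↥A → ℝ |
      ∃ σ : Fin (n + 1) → Measure (Fin n → ℝ),
        (∀ i, IsProbabilityMeasure (σ i)) ∧
        (∀ i : Fin n, σ i.succ =
          (σ 0).withDensity fun ξ => ENNReal.ofReal (Real.exp (ξ i))) ∧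
        (∀ (i : Fin (n + 1)) (α : A), Integrable (fun ξ => ∏ t, ξ t ^ (α : Fin n → ℕ) t) (σ i)) ∧
        (∀ (i : Fin (n + 1)) (α : A),
          v (i, α) = ∫ ξ, ∏ t, ξ t ^ (α : Fin n → ℕ) t ∂(σ i))} := by
    intro w hw
    set u : Fin (n + 1) × ↥A → ℝ := fun p => w p - v₀ p with hu
    set Θu : (Fin (n + 1) × (Fin n → Fin (N + 1))) → ℝ := fun k =>
      if h : (fun t => ((k.2 t : ℕ))) ∈ A then u (k.1, ⟨_, h⟩) else 0 with hΘu
    have hΘu_le : ∀ k, |Θu k| ≤ δ := by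
      intro k
      rw [hΘu]; dsimp only
      split
      · exact (hw _).le
      · simpa using hδpos.le
    set q : Fin m → ℝ := sec Θu with hq
    have hqε : ∀ j, |q j| ≤ ε := fun j => hsec_bound Θu hΘu_le j
    have hΦq : ∀ k, ∑ j, q j * Ffam k (y j) = Θu k := by
      intro k
      exact congrFun (hΦsec Θu) k
    have hzeroA : (fun _ : Fin n => ((0 : Fin (N + 1)) : ℕ)) = (0 : Fin n → ℕ) := by
      funext t; simp
    have hΘu0 : ∀ i : Fin (n + 1), Θu (i, fun _ => 0) = 0 := by
      intro i
      rw [hΘu]; dsimp only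
      rw [dif_neg]
      rw [hzeroA]
      intro hmem
      exact ((Set.ext_iff.mp hA _).mp hmem).2 rfl
    have hcoeenc : ∀ α : ↥A, (fun t => ((enc α t : ℕ))) = (α : Fin n → ℕ) := by
      intro α; funext t; rfl
    have hΘuα : ∀ (i : Fin (n + 1)) (α : ↥A), Θu (i, enc α) = u (i, α) := by
      intro i α
      have hsub : ∀ h, (⟨(fun t => ((enc α t : ℕ))), h⟩ : ↥A) = α := fun h => Subtype.ext (hcoeenc α)
      rw [hΘu]; dsimp only
      rw [dif_pos (show (fun t => ((enc α t : ℕ))) ∈ A by rw [hcoeenc α]; exact α.2), hsub]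
    -- the perturbed atomic measures
    set P : Option (Fin m) → (Fin n → ℝ) := fun o => o.elim z y with hP
    set W : Option (Fin m) → ℝ := fun o => o.elim (a 0) (fun j => ε + q j) with hW
    have hWnn : ∀ o, 0 ≤ W o := by
      intro o
      rw [hW]; cases o with
      | none => exact (hapos 0).le
      | some j =>
        have := abs_le.mp (hqε j)
        dsimp only [Option.elim]
        linarith [this.1]
    set σ : Fin (n + 1) → Measure (Fin n → ℝ) := fun i =>
      ∑ o : Option (Fin m), ENNReal.ofReal (W o * expFac i (P o)) • Measure.dirac (P o) with hσ
    have hTot : ∀ i, ∑ o : Option (Fin m), W o * expFac i (P o) = 1 := by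
      intro i
      rw [Fintype.sum_option]
      have hsplit : ∑ j, W (some j) * expFac i (P (some j))
          = ∑ j, ε * expFac i (y j) + ∑ j, q j * expFac i (y j) := by
        rw [← Finset.sum_add_distrib]
        apply Finset.sum_congr rfl; intro j _
        rw [hW, hP]; dsimp only [Option.elim]; ring
      have hzero : ∑ j, q j * expFac i (y j) = 0 := by
        have h1 := hΦq (i, fun _ => 0)
        rw [hΘu0 i] at h1
        calc ∑ j, q j * expFac i (y j)
            = ∑ j, q j * Ffam (i, fun _ => 0) (y j) := by
              apply Finset.sum_congr rfl; intro j _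
              simp [Ffam]
          _ = 0 := h1
      have hbase := base i
      have hPn : P none = z := rfl
      have hWn : W none = a 0 := rfl
      rw [hPn, hWn, hsplit]
      linarith
    have hprob : ∀ i, IsProbabilityMeasure (σ i) := by
      intro i
      constructor
      rw [hσ]; dsimp only
      rw [atomic_univ]
      rw [← ENNReal.ofReal_sum_of_nonneg
        (fun o _ => mul_nonneg (hWnn o) (expFac_pos i (P o)).le)]
      rw [hTot i, ENNReal.ofReal_one]
    have hwd : ∀ i : Fin n, σ i.succ
        = (σ 0).withDensity fun ξ => ENNReal.ofReal (Real.exp (ξ i)) := by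
      intro i
      rw [hσ]; dsimp only
      rw [atomic_withDensity _ _ ((measurable_pi_apply i).exp.ennreal_ofReal)]
      apply Finset.sum_congr rfl
      intro o _
      have heq : ENNReal.ofReal (W o * expFac i.succ (P o))
          = ENNReal.ofReal (W o * expFac 0 (P o)) * ENNReal.ofReal (Real.exp (P o i)) := by
        rw [expFac_zero, mul_one, ← ENNReal.ofReal_mul (hWnn o), expFac_succ]
      rw [heq]
    have hsm : ∀ (α : Fin n → ℕ), StronglyMeasurable (fun ξ : Fin n → ℝ => ∏ t, ξ t ^ α t) := by
      intro α
      apply Continuous.stronglyMeasurable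
      exact continuous_finset_prod _ fun t _ => (continuous_apply t).pow _
    refine ⟨σ, hprob, hwd, ?_, ?_⟩
    · intro i α
      rw [hσ]
      exact atomic_integrable _ (fun o => ENNReal.ofReal_ne_top) (hsm _)
    · intro i α
      rw [hσ]; dsimp only
      rw [atomic_integral _ (fun o => ENNReal.ofReal_ne_top) (hsm _)]
      have htoReal : ∀ o : Option (Fin m),
          (ENNReal.ofReal (W o * expFac i (P o))).toReal * (∏ t, (P o) t ^ (α : Fin n → ℕ) t)
            = W o * expFac i (P o) * (∏ t, (P o) t ^ (α : Fin n → ℕ) t) := by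
        intro o
        rw [ENNReal.toReal_ofReal (mul_nonneg (hWnn o) (expFac_pos _ _).le)]
      rw [Finset.sum_congr rfl fun o _ => htoReal o]
      rw [Fintype.sum_option]
      have hsplit : ∑ j, W (some j) * expFac i (P (some j)) * (∏ t, (P (some j)) t ^ (α : Fin n → ℕ) t)
          = (∑ j, ε * expFac i (y j) * fMom (α : Fin n → ℕ) (y j))
            + ∑ j, q j * Ffam (i, enc α) (y j) := by
        rw [← Finset.sum_add_distrib]
        apply Finset.sum_congr rfl; intro j _
        rw [hW, hP, hfMom]; dsimp only [Option.elim]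
        rw [Ffam]
        have hprod : (∏ t, (y j) t ^ ((enc α) t : ℕ)) = ∏ t, (y j) t ^ (α : Fin n → ℕ) t := by
          apply Finset.prod_congr rfl; intro t _; rfl
        rw [hprod]; ring
      have hΘα := hΦq (i, enc α)
      rw [hΘuα i α] at hΘα
      have hwv : w (i, α) = v₀ (i, α) + u (i, α) := by rw [hu]; ring
      have hv₀eq : v₀ (i, α)
          = (∑ j, ε * expFac i (y j) * fMom (α : Fin n → ℕ) (y j))
            + a 0 * expFac i z * fMom (α : Fin n → ℕ) z := rfl
      have hPn : P none = z := rfl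
      have hWn : W none = a 0 := rfl
      rw [hPn, hWn, hsplit, hΘα, hwv, hv₀eq]
      have hfz : (∏ t, z t ^ (α : Fin n → ℕ) t) = fMom (α : Fin n → ℕ) z := rfl
      rw [hfz]; ring
  exact ⟨v₀, interior_maximal hOsub hOopen hv₀mem⟩
end

section
/- Let Θ = {0,…,n} with n ≥ 1, and let (S,(μ_i)_{i∈Θ}) and (T,(ν_i)_{i∈Θ}) be two experiments, i.e., families of mutually absolutely continuous probability measures. Let L_μ : S → ℝ^{Θ×Θ} be defined by L_μ(s) = (log(dμ_i/dμ_j)(s))_{i,j∈Θ} and define L_ν : T → ℝ^{Θ×Θ} analogously. Suppose that for every i ∈ Θ the pushforward of μ_i under L_μ equals the pushforward of ν_i under L_ν. Then the two experiments induce the same distribution of posterior beliefs under the uniform prior: writing p^μ : S → ℝ^Θ for the map with coordinates p^μ_i(s) = (dμ_i / d(Σ_{j∈Θ} μ_j))(s) and p^ν analogously, the pushforward of the mixture (1/(n+1))·Σ_{i∈Θ} μ_i under p^μ equals the pushforward of (1/(n+1))·Σ_{i∈Θ} ν_i under p^ν. (Hence the two experiments are Blackwell equivalent.) -/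
open MeasureTheory
open scoped ENNReal

section Stmt16Aux

variable {α : Type*} [MeasurableSpace α]

lemma stmt16_map_finset_sum {β : Type*} [MeasurableSpace β] {ι : Type*} (s : Finset ι)
    (μ : ι → Measure α) {f : α → β} (hf : Measurable f) :
    Measure.map f (∑ i ∈ s, μ i) = ∑ i ∈ s, Measure.map f (μ i) := by
  classical
  induction s using Finset.induction_on with
  | empty => simp
  | insert _ _ h ih =>
    rw [Finset.sum_insert h, Finset.sum_insert h, Measure.map_add _ _ hf, ih]

lemma stmt16_rnDeriv_finset_sum {ι : Type*} (s : Finset ι) (μ : ι → Measure α)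
    (κ : Measure α) [∀ i, IsFiniteMeasure (μ i)] [IsFiniteMeasure κ] :
    (∑ i ∈ s, μ i).rnDeriv κ =ᵐ[κ] fun x => ∑ i ∈ s, (μ i).rnDeriv κ x := by
  classical
  induction s using Finset.induction_on with
  | empty =>
    simp only [Finset.sum_empty]
    exact Measure.rnDeriv_zero κ
  | insert _ _ h ih =>
    rw [Finset.sum_insert h]
    refine (Measure.rnDeriv_add' _ _ _).trans ?_
    filter_upwards [ih] with x hx
    simp [Finset.sum_insert h, hx]

lemma stmt16_posterior_ae {n : ℕ} (μ : Fin (n + 1) → Measure α)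
    [∀ i, IsFiniteMeasure (μ i)] (hμac : ∀ i j, μ i ≪ μ j) :
    (fun s => fun i : Fin (n + 1) => (((μ i).rnDeriv (∑ j, μ j)) s).toReal)
      =ᵐ[∑ j, μ j]
    (fun s => fun i : Fin (n + 1) =>
      Real.exp (Real.log (((μ i).rnDeriv (μ 0)) s).toReal) /
        ∑ j, Real.exp (Real.log (((μ j).rnDeriv (μ 0)) s).toReal)) := by
  set σ : Measure α := ∑ j, μ j with hσdef
  have hσ : ∀ j, σ ≪ μ j := by
    intro j t ht
    rw [hσdef, Measure.finset_sum_apply]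
    exact Finset.sum_eq_zero fun i _ => hμac i j ht
  have h0σ : μ 0 ≪ σ := by
    intro t ht
    rw [hσdef, Measure.finset_sum_apply] at ht
    exact (Finset.sum_eq_zero_iff.mp ht) 0 (Finset.mem_univ 0)
  have F1 : ∀ᵐ x ∂σ, ∀ j, (μ j).rnDeriv σ x = (μ j).rnDeriv (μ 0) x * (μ 0).rnDeriv σ x := by
    rw [ae_all_iff]
    intro j
    filter_upwards [Measure.rnDeriv_mul_rnDeriv (κ := σ) (hμac j 0)] with x hx
    exact hx.symm
  have F2 : ∀ᵐ x ∂σ, ∑ j, (μ j).rnDeriv σ x = 1 := by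
    filter_upwards [stmt16_rnDeriv_finset_sum Finset.univ μ σ, Measure.rnDeriv_self σ]
      with x hx hx'
    rw [← hx, ← hσdef, hx']
  have F3 : ∀ᵐ x ∂σ, ∀ j, 0 < (μ j).rnDeriv (μ 0) x := by
    rw [ae_all_iff]
    intro j
    exact (Measure.rnDeriv_pos (hμac j 0)).filter_mono (hσ j).ae_le
  have F4 : ∀ᵐ x ∂σ, ∀ j, (μ j).rnDeriv (μ 0) x < ∞ := by
    rw [ae_all_iff]
    intro j
    exact (Measure.rnDeriv_lt_top (μ j) (μ 0)).filter_mono (hσ 0).ae_le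
  have F5 : ∀ᵐ x ∂σ, 0 < (μ 0).rnDeriv σ x :=
    (Measure.rnDeriv_pos h0σ).filter_mono (hσ 0).ae_le
  have F6 : ∀ᵐ x ∂σ, (μ 0).rnDeriv σ x < ∞ := Measure.rnDeriv_lt_top (μ 0) σ
  filter_upwards [F1, F2, F3, F4, F5, F6] with x h1 h2 h3 h4 h5 h6
  funext i
  set a : Fin (n + 1) → ℝ≥0∞ := fun j => (μ j).rnDeriv (μ 0) x with ha
  set b : ℝ≥0∞ := (μ 0).rnDeriv σ x with hb
  have hbR : (0 : ℝ) < b.toReal := ENNReal.toReal_pos h5.ne' h6.ne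
  have haR : ∀ j, (0 : ℝ) < (a j).toReal :=
    fun j => ENNReal.toReal_pos (h3 j).ne' (h4 j).ne
  have hlog : ∀ j, Real.exp (Real.log (a j).toReal) = (a j).toReal :=
    fun j => Real.exp_log (haR j)
  have hsum : (∑ j, (a j).toReal) * b.toReal = 1 := by
    have : ∑ j, (a j).toReal * b.toReal = 1 := by
      have h0 : ∑ j, ((a j) * b).toReal = ((1 : ℝ≥0∞)).toReal := by
        rw [← ENNReal.toReal_sum (fun j _ => ENNReal.mul_ne_top (h4 j).ne h6.ne)]
        congr 1
        rw [← h2]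
        exact Finset.sum_congr rfl fun j _ => (h1 j).symm
      simpa [ENNReal.toReal_mul] using h0
    rw [Finset.sum_mul]
    exact this
  have hsum' : (∑ j, (a j).toReal) = (b.toReal)⁻¹ := by
    field_simp at hsum ⊢
    linarith [hsum]
  calc ((μ i).rnDeriv σ x).toReal = (a i * b).toReal := by rw [h1 i]
    _ = (a i).toReal * b.toReal := ENNReal.toReal_mul
    _ = (a i).toReal / (∑ j, (a j).toReal) := by
        rw [hsum', div_eq_mul_inv, inv_inv]
    _ = Real.exp (Real.log (a i).toReal) / ∑ j, Real.exp (Real.log (a j).toReal) := by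
        rw [hlog i]
        congr 1
        exact (Finset.sum_congr rfl fun j _ => hlog j).symm

end Stmt16Aux

/-- If two experiments `(S, (μ i))` and `(T, (ν i))` on the state
space `Θ = {0, …, n}` induce, conditional on every state, the same distribution of the
vector of log-likelihood ratios `(log (dμ_i/dμ_j))_{i,j}`, then they induce the same
distribution of posterior beliefs under the uniform prior (hence they are Blackwell
equivalent): pushing the mixture `(1/(n+1)) Σ_i μ_i` forward under the posterior map
`s ↦ (dμ_i / d(Σ_j μ_j))(s)_{i}` gives the same measure for both experiments. -/
theorem stmt16 (n : ℕ) (hn : 1 ≤ n) {S T : Type*} [MeasurableSpace S] [MeasurableSpace T]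
    (μ : Fin (n + 1) → Measure S) (ν : Fin (n + 1) → Measure T)
    (hμp : ∀ i, IsProbabilityMeasure (μ i)) (hνp : ∀ i, IsProbabilityMeasure (ν i))
    (hμac : ∀ i j, μ i ≪ μ j) (hνac : ∀ i j, ν i ≪ ν j)
    (hL : ∀ i, Measure.map (fun s => fun p : Fin (n + 1) × Fin (n + 1) =>
            Real.log (((μ p.1).rnDeriv (μ p.2)) s).toReal) (μ i)
          = Measure.map (fun t => fun p : Fin (n + 1) × Fin (n + 1) =>
            Real.log (((ν p.1).rnDeriv (ν p.2)) t).toReal) (ν i)) :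
    Measure.map (fun s => fun i : Fin (n + 1) => (((μ i).rnDeriv (∑ j, μ j)) s).toReal)
        ((((n : ℝ≥0∞) + 1))⁻¹ • ∑ i, μ i)
      = Measure.map (fun t => fun i : Fin (n + 1) => (((ν i).rnDeriv (∑ j, ν j)) t).toReal)
        ((((n : ℝ≥0∞) + 1))⁻¹ • ∑ i, ν i) := by
  haveI : ∀ i, IsFiniteMeasure (μ i) := fun i => by haveI := hμp i; infer_instance
  haveI : ∀ i, IsFiniteMeasure (ν i) := fun i => by haveI := hνp i; infer_instance
  set Φ : (Fin (n + 1) × Fin (n + 1) → ℝ) → (Fin (n + 1) → ℝ) :=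
    fun x i => Real.exp (x (i, 0)) / ∑ j, Real.exp (x (j, 0)) with hΦdef
  have hΦ : Measurable Φ := by
    apply measurable_pi_lambda
    intro i
    exact (Real.measurable_exp.comp (measurable_pi_apply _)).div
      (Finset.measurable_sum _ fun j _ => Real.measurable_exp.comp (measurable_pi_apply _))
  set Lμ : S → (Fin (n + 1) × Fin (n + 1) → ℝ) :=
    fun s => fun p : Fin (n + 1) × Fin (n + 1) =>
      Real.log (((μ p.1).rnDeriv (μ p.2)) s).toReal with hLμdef
  set Lν : T → (Fin (n + 1) × Fin (n + 1) → ℝ) :=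
    fun t => fun p : Fin (n + 1) × Fin (n + 1) =>
      Real.log (((ν p.1).rnDeriv (ν p.2)) t).toReal with hLνdef
  have hLμm : Measurable Lμ :=
    measurable_pi_lambda _ fun p =>
      Real.measurable_log.comp (Measure.measurable_rnDeriv _ _).ennreal_toReal
  have hLνm : Measurable Lν :=
    measurable_pi_lambda _ fun p =>
      Real.measurable_log.comp (Measure.measurable_rnDeriv _ _).ennreal_toReal
  rw [Measure.map_smul, Measure.map_smul]
  congr 1
  have hμeq : Measure.map
      (fun s => fun i : Fin (n + 1) => (((μ i).rnDeriv (∑ j, μ j)) s).toReal) (∑ i, μ i)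
      = Measure.map (Φ ∘ Lμ) (∑ i, μ i) :=
    Measure.map_congr (stmt16_posterior_ae μ hμac)
  have hνeq : Measure.map
      (fun t => fun i : Fin (n + 1) => (((ν i).rnDeriv (∑ j, ν j)) t).toReal) (∑ i, ν i)
      = Measure.map (Φ ∘ Lν) (∑ i, ν i) :=
    Measure.map_congr (stmt16_posterior_ae ν hνac)
  rw [hμeq, hνeq, ← Measure.map_map hΦ hLμm, ← Measure.map_map hΦ hLνm,
    stmt16_map_finset_sum _ μ hLμm, stmt16_map_finset_sum _ ν hLνm]
  congr 1
  exact Finset.sum_congr rfl fun i _ => hL i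
end
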